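/- arXiv:2604.16833 — 11 statements merged into one kernel-verified Lean document; each statement's English description precedes it below -/
import Mathlib

section
/- Let a > 0. Then the following holds if and only if a ≤ 1/2: for every z ∈ 𝔻 one has 1 + a·z ≠ 0 and Re((1 + 2a·z)/(1 + a·z)) > 0. (Equivalently, the function g(z) = z + a·z² is starlike with respect to the origin in 𝔻, i.e. φ(z) = 1 + z + a·z² is starlike with respect to φ(0) = 1.) -/
open Complex Metric Set

/-!
With `w = a z` one has `Re ((1 + 2w)/(1 + w)) = (1 + 3 Re w + 2|w|²)/|1 + w|²`, and since
`|w|² ≥ (Re w)²` the numerator is at least `(1 + Re w)(1 + 2 Re w)`, which is positive once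
`|w| < 1/2`. Conversely, for `a > 1/2` the point `z = -1/(2a)` lies in the disk and makes the
quotient vanish.
-/
lemma re_one_add_two_mul_div_one_add (w : ℂ) :
    ((1 + 2 * w) / (1 + w)).re = (1 + 3 * w.re + 2 * normSq w) / normSq (1 + w) := by
  rw [div_re, ← add_div]
  congr 1
  simp only [add_re, add_im, mul_re, mul_im, one_re, one_im, normSq_apply]
  norm_num
  ring

lemma one_add_ne_zero_of_norm_lt_one {R : Type*} [SeminormedRing R] [NormOneClass R] {w : R}
    (hw : ‖w‖ < 1) : 1 + w ≠ 0 := by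
  intro h
  rw [eq_neg_of_add_eq_zero_right h, norm_neg, norm_one] at hw
  exact lt_irrefl _ hw

lemma re_one_add_two_mul_div_one_add_pos {w : ℂ} (hw : ‖w‖ < 1 / 2) :
    0 < ((1 + 2 * w) / (1 + w)).re := by
  have hu : |w.re| < 1 / 2 := (abs_re_le_norm w).trans_lt hw
  obtain ⟨hu₁, hu₂⟩ := abs_lt.mp hu
  have hnum : (1 + w.re) * (1 + 2 * w.re) ≤ 1 + 3 * w.re + 2 * normSq w := by
    nlinarith [normSq_apply w, sq_nonneg w.im]
  rw [re_one_add_two_mul_div_one_add]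
  exact div_pos (by nlinarith)
    (normSq_pos.mpr (one_add_ne_zero_of_norm_lt_one (by linarith)))

theorem phi_starlike_iff (a : ℝ) (ha : 0 < a) :
    (∀ z ∈ ball (0:ℂ) 1,
        1 + (a : ℂ) * z ≠ 0 ∧
          0 < ((1 + 2 * (a : ℂ) * z) / (1 + (a : ℂ) * z)).re) ↔ a ≤ 1/2 := by
  constructor
  · intro h
    by_contra! ha_half
    set z₀ : ℂ := ((-(2 * a)⁻¹ : ℝ) : ℂ)
    have hz₀ : z₀ ∈ ball (0:ℂ) 1 := by
      rw [mem_ball_zero_iff, norm_real, norm_neg, norm_inv, Real.norm_of_nonneg (by positivity)]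
      exact inv_lt_one_of_one_lt₀ (by linarith)
    have hzero : 1 + 2 * (a : ℂ) * z₀ = 0 := by
      have ha₀ : (a : ℂ) ≠ 0 := ofReal_ne_zero.mpr ha.ne'
      simp only [z₀]
      push_cast
      field_simp
      ring
    simpa [hzero] using (h z₀ hz₀).2
  · intro ha_half z hz
    have haz : ‖(a : ℂ) * z‖ < 1 / 2 := by
      rw [norm_mul, norm_real, Real.norm_of_nonneg ha.le]
      calc a * ‖z‖ < a * 1 := mul_lt_mul_of_pos_left (mem_ball_zero_iff.mp hz) ha
        _ ≤ 1 / 2 := by linarith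
    refine ⟨one_add_ne_zero_of_norm_lt_one (by linarith), ?_⟩
    simpa only [mul_assoc] using re_one_add_two_mul_div_one_add_pos haz
end

section
/- Let a > 0 and define φ(z) = 1 + z + a·z². Then Re(φ(z)) > 0 for all z in the open unit disk 𝔻 if and only if a ≤ (2 + √2)/4. -/
/-!
Writing `z = x + iy`, `Re φ(z) = g(x) + a(1 - |z|²)` with `g(x) = 2ax² + x + 1 - a`, which is
`Re φ` on the unit circle above `x`. Hence `Re φ > 0` on `𝔻` iff `g ≥ 0` on `[-1, 1]` (one direction
by continuity up to the circle). Completing the square, `8a·g(x) = (4ax + 1)² + (8a - 8a² - 1)`;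
for `a > 1/4` the vertex `-1/(4a)` lies in `[-1, 1]`, so `g ≥ 0` there iff `8a² - 8a + 1 ≤ 0`,
i.e. `a ≤ (2 + √2)/4`, while for `a ≤ 1/4` the factorisation `g(x) = (x + 1)(2ax + 1 - 2a) + a`
shows `g ≥ 0`.
-/

open Complex Metric Set

lemma re_one_add_add_ofReal_mul_sq (a : ℝ) (z : ℂ) :
    (1 + z + (a : ℂ) * z ^ 2).re = 2 * a * z.re ^ 2 + z.re + 1 - a + a * (1 - ‖z‖ ^ 2) := by
  rw [Complex.sq_norm, Complex.normSq_apply]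
  simp only [add_re, one_re, pow_two, mul_re, ofReal_re, ofReal_im]
  ring

lemma quadratic_nonneg_of_re_pos_on_ball (a : ℝ)
    (h : ∀ z ∈ ball (0 : ℂ) 1, 0 < (1 + z + (a : ℂ) * z ^ 2).re) {x : ℝ} (hx : x ∈ Icc (-1) 1) :
    0 ≤ 2 * a * x ^ 2 + x + 1 - a := by
  have h_closedBall : ∀ z ∈ closedBall (0 : ℂ) 1, 0 ≤ (1 + z + (a : ℂ) * z ^ 2).re := by
    have hclosed : IsClosed {z : ℂ | 0 ≤ (1 + z + (a : ℂ) * z ^ 2).re} :=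
      isClosed_le continuous_const (by fun_prop)
    rw [← closure_ball (0 : ℂ) one_ne_zero]
    exact closure_minimal (fun z hz ↦ (h z hz).le) hclosed
  have hx2 : 0 ≤ 1 - x ^ 2 := by nlinarith [hx.1, hx.2]
  have hz : ‖(⟨x, Real.sqrt (1 - x ^ 2)⟩ : ℂ)‖ = 1 := by
    rw [Complex.norm_def, Complex.normSq_apply, Real.mul_self_sqrt hx2,
      show x * x + (1 - x ^ 2) = 1 by ring, Real.sqrt_one]
  have hboundary := h_closedBall _ (mem_closedBall_zero_iff.mpr hz.le)
  rwa [re_one_add_add_ofReal_mul_sq, hz, one_pow, sub_self, mul_zero, add_zero] at hboundary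

lemma re_pos_on_ball_of_quadratic_nonneg {a : ℝ} (ha : 0 < a)
    (h : ∀ x ∈ Icc (-1 : ℝ) 1, 0 ≤ 2 * a * x ^ 2 + x + 1 - a) :
    ∀ z ∈ ball (0 : ℂ) 1, 0 < (1 + z + (a : ℂ) * z ^ 2).re := by
  intro z hz
  rw [mem_ball_zero_iff] at hz
  have hre : z.re ∈ Icc (-1) 1 := abs_le.mp ((abs_re_le_norm z).trans hz.le)
  have hgap : 0 < a * (1 - ‖z‖ ^ 2) := mul_pos ha (by nlinarith [norm_nonneg z])
  rw [re_one_add_add_ofReal_mul_sq]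
  linarith [h z.re hre]

lemma eight_mul_sub_eight_mul_sq_sub_one (a : ℝ) :
    8 * a - 8 * a ^ 2 - 1 = 8 * ((2 + Real.sqrt 2) / 4 - a) * (a - (2 - Real.sqrt 2) / 4) := by
  linear_combination (-1 / 2 : ℝ) * Real.sq_sqrt (show (0 : ℝ) ≤ 2 by norm_num)

lemma quadratic_nonneg_on_Icc_iff {a : ℝ} (ha : 0 < a) :
    (∀ x ∈ Icc (-1 : ℝ) 1, 0 ≤ 2 * a * x ^ 2 + x + 1 - a) ↔ a ≤ (2 + Real.sqrt 2) / 4 := by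
  have complete_sq : ∀ x : ℝ,
      8 * a * (2 * a * x ^ 2 + x + 1 - a) = (4 * a * x + 1) ^ 2 + (8 * a - 8 * a ^ 2 - 1) := by
    intro x; ring
  have hfactor := eight_mul_sub_eight_mul_sq_sub_one a
  have hsqrt2 : 1 ≤ Real.sqrt 2 := Real.one_le_sqrt.mpr (by norm_num)
  constructor
  · intro h
    by_contra! hlt
    have hvertex : 4 * a * (-1 / (4 * a)) + 1 = 0 := by field_simp; ring
    have hmem : -1 / (4 * a) ∈ Icc (-1 : ℝ) 1 := by
      constructor
      · rw [le_div_iff₀ (by positivity)]; linarith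
      · rw [div_le_iff₀ (by positivity)]; linarith
    have hneg : 8 * a - 8 * a ^ 2 - 1 < 0 := by
      rw [hfactor]
      exact mul_neg_of_neg_of_pos (by linarith) (by linarith)
    have hmin := complete_sq (-1 / (4 * a))
    rw [hvertex] at hmin
    nlinarith [h _ hmem]
  · intro hle x hx
    rcases le_or_gt a (1 / 4) with hsmall | hlarge
    · have hx1 : 0 ≤ x + 1 := by linarith [hx.1]
      have hlin : 0 ≤ 2 * a * x + 1 - 2 * a := by nlinarith [hx.1]
      nlinarith [mul_nonneg hx1 hlin]
    · have hdisc : 0 ≤ 8 * a - 8 * a ^ 2 - 1 := by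
        rw [hfactor]
        exact mul_nonneg (mul_nonneg (by norm_num) (by linarith)) (by linarith)
      rw [← mul_nonneg_iff_of_pos_left (by positivity : (0 : ℝ) < 8 * a), complete_sq]
      positivity

theorem phi_re_pos_iff (a : ℝ) (ha : 0 < a) :
    (∀ z ∈ ball (0:ℂ) 1, 0 < (1 + z + (a : ℂ) * z ^ 2).re) ↔
      a ≤ (2 + Real.sqrt 2) / 4 := by
  rw [← quadratic_nonneg_on_Icc_iff ha]
  exact ⟨fun h x hx ↦ quadratic_nonneg_of_re_pos_on_ball a h hx,
    re_pos_on_ball_of_quadratic_nonneg ha⟩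
end

section
/- Let t ∈ ℝ with 0 ≤ t ≤ 1/4, and let f ∈ C(φ_t). Then the second Hankel determinant satisfies |a₂a₄ − a₃²| ≤ 1/36. -/
open Complex Metric Set

noncomputable def taylorCoeff (f : ℂ → ℂ) (n : ℕ) : ℂ :=
  iteratedDeriv n f 0 / n.factorial

def IsSchwarz (w : ℂ → ℂ) : Prop :=
  AnalyticOnNhd ℂ w (ball (0:ℂ) 1) ∧ w 0 = 0 ∧
    ∀ z ∈ ball (0:ℂ) 1, ‖w z‖ < 1

def MemC (t : ℝ) (f : ℂ → ℂ) : Prop :=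
  AnalyticOnNhd ℂ f (ball (0:ℂ) 1) ∧ f 0 = 0 ∧ deriv f 0 = 1 ∧
    (∀ z ∈ ball (0:ℂ) 1, deriv f z ≠ 0) ∧
    ∃ w : ℂ → ℂ, IsSchwarz w ∧
      ∀ z ∈ ball (0:ℂ) 1,
        1 + z * deriv (deriv f) z / deriv f z
          = 1 + w z + (t : ℂ) * (w z) ^ 2

set_option maxHeartbeats 1000000

namespace SHB

local notation "B" => Metric.ball (0:ℂ) 1

lemma h0B : (0:ℂ) ∈ B := by simp

variable {u v : ℂ → ℂ}

lemma eqOn_deriv_mul (hu : AnalyticOnNhd ℂ u B) (hv : AnalyticOnNhd ℂ v B) :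
    Set.EqOn (deriv (fun z => u z * v z)) (fun z => deriv u z * v z + u z * deriv v z) B :=
  fun z hz => deriv_mul ((hu z hz).differentiableAt) ((hv z hz).differentiableAt)

lemma eqOn_deriv_add (hu : AnalyticOnNhd ℂ u B) (hv : AnalyticOnNhd ℂ v B) :
    Set.EqOn (deriv (fun z => u z + v z)) (fun z => deriv u z + deriv v z) B :=
  fun z hz => deriv_add ((hu z hz).differentiableAt) ((hv z hz).differentiableAt)

lemma ideriv2_eq : iteratedDeriv 2 u 0 = deriv (deriv u) 0 := by
  rw [show (2:ℕ) = 1+1 from rfl, iteratedDeriv_succ', iteratedDeriv_one]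

lemma ideriv3_eq : iteratedDeriv 3 u 0 = iteratedDeriv 2 (deriv u) 0 := by
  rw [show (3:ℕ) = 2+1 from rfl, iteratedDeriv_succ']

lemma ideriv1_mul (hu : AnalyticOnNhd ℂ u B) (hv : AnalyticOnNhd ℂ v B) :
    iteratedDeriv 1 (fun z => u z * v z) 0 = deriv u 0 * v 0 + u 0 * deriv v 0 := by
  rw [iteratedDeriv_one]
  exact deriv_mul ((hu 0 h0B).differentiableAt) ((hv 0 h0B).differentiableAt)

lemma ideriv1_add (hu : AnalyticOnNhd ℂ u B) (hv : AnalyticOnNhd ℂ v B) :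
    iteratedDeriv 1 (fun z => u z + v z) 0 = deriv u 0 + deriv v 0 := by
  rw [iteratedDeriv_one]
  exact deriv_add ((hu 0 h0B).differentiableAt) ((hv 0 h0B).differentiableAt)

lemma ideriv2_mul (hu : AnalyticOnNhd ℂ u B) (hv : AnalyticOnNhd ℂ v B) :
    iteratedDeriv 2 (fun z => u z * v z) 0
      = iteratedDeriv 2 u 0 * v 0 + 2 * deriv u 0 * deriv v 0 + u 0 * iteratedDeriv 2 v 0 := by
  have h1 : iteratedDeriv 2 (fun z => u z * v z) 0
      = iteratedDeriv 1 (fun z => deriv u z * v z + u z * deriv v z) 0 := by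
    rw [show (2:ℕ) = 1+1 from rfl, iteratedDeriv_succ']
    exact (eqOn_deriv_mul hu hv).iteratedDeriv_of_isOpen isOpen_ball 1 h0B
  rw [h1, iteratedDeriv_one]
  have d1 : DifferentiableAt ℂ (fun z => deriv u z * v z) 0 :=
    (((hu.deriv) 0 h0B).differentiableAt).mul ((hv 0 h0B).differentiableAt)
  have d2 : DifferentiableAt ℂ (fun z => u z * deriv v z) 0 :=
    ((hu 0 h0B).differentiableAt).mul (((hv.deriv) 0 h0B).differentiableAt)
  rw [deriv_fun_add d1 d2,
    deriv_fun_mul (((hu.deriv) 0 h0B).differentiableAt) ((hv 0 h0B).differentiableAt),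
    deriv_fun_mul ((hu 0 h0B).differentiableAt) (((hv.deriv) 0 h0B).differentiableAt),
    ← ideriv2_eq, ← ideriv2_eq]
  ring

lemma ideriv2_add (hu : AnalyticOnNhd ℂ u B) (hv : AnalyticOnNhd ℂ v B) :
    iteratedDeriv 2 (fun z => u z + v z) 0 = iteratedDeriv 2 u 0 + iteratedDeriv 2 v 0 := by
  have h1 : iteratedDeriv 2 (fun z => u z + v z) 0
      = iteratedDeriv 1 (fun z => deriv u z + deriv v z) 0 := by
    rw [show (2:ℕ) = 1+1 from rfl, iteratedDeriv_succ']
    exact (eqOn_deriv_add hu hv).iteratedDeriv_of_isOpen isOpen_ball 1 h0B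
  rw [h1, iteratedDeriv_one,
    deriv_fun_add (((hu.deriv) 0 h0B).differentiableAt) (((hv.deriv) 0 h0B).differentiableAt),
    ← ideriv2_eq, ← ideriv2_eq]

lemma ideriv3_mul (hu : AnalyticOnNhd ℂ u B) (hv : AnalyticOnNhd ℂ v B) :
    iteratedDeriv 3 (fun z => u z * v z) 0
      = iteratedDeriv 3 u 0 * v 0 + 3 * iteratedDeriv 2 u 0 * deriv v 0
        + 3 * deriv u 0 * iteratedDeriv 2 v 0 + u 0 * iteratedDeriv 3 v 0 := by
  have h1 : iteratedDeriv 3 (fun z => u z * v z) 0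
      = iteratedDeriv 2 (fun z => deriv u z * v z + u z * deriv v z) 0 := by
    rw [show (3:ℕ) = 2+1 from rfl, iteratedDeriv_succ']
    exact (eqOn_deriv_mul hu hv).iteratedDeriv_of_isOpen isOpen_ball 2 h0B
  rw [h1, ideriv2_add (hu.deriv.mul hv) (hu.mul hv.deriv),
    ideriv2_mul hu.deriv hv, ideriv2_mul hu hv.deriv, ← ideriv3_eq, ← ideriv3_eq, ← ideriv2_eq,
    ← ideriv2_eq]
  ring

lemma deriv_id_fun : deriv (fun z : ℂ => z) = fun _ => (1:ℂ) := by
  funext z; exact deriv_id z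

lemma ideriv2_id : iteratedDeriv 2 (fun z : ℂ => z) 0 = 0 := by
  rw [ideriv2_eq, deriv_id_fun, deriv_const]

lemma ideriv3_id : iteratedDeriv 3 (fun z : ℂ => z) 0 = 0 := by
  rw [ideriv3_eq, deriv_id_fun, ideriv2_eq, deriv_const', deriv_const]

lemma ideriv2_const (c : ℂ) : iteratedDeriv 2 (fun _ : ℂ => c) 0 = 0 := by
  rw [ideriv2_eq, deriv_const', deriv_const]

lemma ideriv3_const (c : ℂ) : iteratedDeriv 3 (fun _ : ℂ => c) 0 = 0 := by
  rw [ideriv3_eq, deriv_const', ideriv2_const]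

lemma normSq_moebius (a ζ : ℂ) :
    Complex.normSq (1 - (starRingEnd ℂ) a * ζ) - Complex.normSq (ζ - a)
      = (1 - Complex.normSq a) * (1 - Complex.normSq ζ) := by
  simp only [Complex.normSq_apply, Complex.sub_re, Complex.sub_im, Complex.mul_re,
    Complex.mul_im, Complex.conj_re, Complex.conj_im, Complex.one_re, Complex.one_im]
  ring

lemma moebius_den_ne {a ζ : ℂ} (ha : ‖a‖ < 1) (hz : ‖ζ‖ ≤ 1) :
    1 - (starRingEnd ℂ) a * ζ ≠ 0 := by
  intro h
  have h1 : ‖(starRingEnd ℂ) a * ζ‖ < 1 := by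
    rw [norm_mul, Complex.norm_conj]
    calc ‖a‖ * ‖ζ‖ ≤ ‖a‖ * 1 :=
          mul_le_mul_of_nonneg_left hz (norm_nonneg a)
      _ < 1 := by simpa using ha
  have : (1:ℂ) = (starRingEnd ℂ) a * ζ := by linear_combination h
  rw [← this] at h1
  simp at h1

lemma moebius_lt {a ζ : ℂ} (ha : ‖a‖ < 1) (hz : ‖ζ‖ < 1) :
    ‖(ζ - a) * (1 - (starRingEnd ℂ) a * ζ)⁻¹‖ < 1 := by
  have hden := moebius_den_ne ha hz.le
  have habs : ‖ζ - a‖ < ‖1 - (starRingEnd ℂ) a * ζ‖ := by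
    have h2 := normSq_moebius a ζ
    have ha2 : Complex.normSq a < 1 := by
      rw [← Complex.sq_norm]; nlinarith [norm_nonneg a]
    have hz2 : Complex.normSq ζ < 1 := by
      rw [← Complex.sq_norm]; nlinarith [norm_nonneg ζ]
    have h1 : Complex.normSq (ζ - a) < Complex.normSq (1 - (starRingEnd ℂ) a * ζ) := by
      nlinarith
    rw [Complex.norm_def, Complex.norm_def]
    exact Real.sqrt_lt_sqrt (Complex.normSq_nonneg _) h1
  rw [norm_mul, norm_inv, mul_inv_lt_iff₀ (norm_pos_iff.mpr hden)]
  simpa using habs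

/-- Schwarz–Pick at the origin, for maps into the closed unit disk. -/
lemma schwarz_pick_zero {k : ℂ → ℂ} (hk : DifferentiableOn ℂ k B)
    (hb : ∀ z ∈ B, ‖k z‖ ≤ 1) :
    ‖deriv k 0‖ ≤ 1 - ‖k 0‖ ^ 2 := by
  by_cases hs : ∀ z ∈ B, ‖k z‖ < 1
  · set x := k 0 with hx
    have hxlt : ‖x‖ < 1 := hs 0 h0B
    set n : ℂ → ℂ := fun z => (k z - x) * (1 - (starRingEnd ℂ) x * k z)⁻¹ with hn
    have hden : ∀ z ∈ B, 1 - (starRingEnd ℂ) x * k z ≠ 0 :=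
      fun z hz => moebius_den_ne hxlt (hb z hz)
    have hnd : DifferentiableOn ℂ n B := by
      apply DifferentiableOn.mul
      · exact hk.sub (differentiableOn_const _)
      · exact ((differentiableOn_const _).sub ((differentiableOn_const _).mul hk)).inv hden
    have hn0 : n 0 = 0 := by simp [hn, ← hx]
    have hmaps : MapsTo n B (ball (n 0) 1) := by
      intro z hz
      rw [hn0, mem_ball_zero_iff]
      exact moebius_lt hxlt (hs z hz)
    have hder := Complex.norm_deriv_le_div_of_mapsTo_ball hnd (hmaps.mono_right ball_subset_closedBall) one_pos
    have hden0 : (1 - (starRingEnd ℂ) x * x) ≠ 0 := moebius_den_ne hxlt (hb 0 h0B)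
    have hdn : deriv n 0 = deriv k 0 * (1 - (starRingEnd ℂ) x * x)⁻¹ := by
      have d1 : DifferentiableAt ℂ (fun z => k z - x) 0 :=
        (hk.differentiableAt (isOpen_ball.mem_nhds h0B)).sub_const x
      have d2 : DifferentiableAt ℂ (fun z => (1 - (starRingEnd ℂ) x * k z)⁻¹) 0 := by
        apply DifferentiableAt.inv
        · exact (differentiableAt_const _).sub ((differentiableAt_const _).mul
            (hk.differentiableAt (isOpen_ball.mem_nhds h0B)))
        · exact hden 0 h0B
      rw [hn, deriv_fun_mul d1 d2, deriv_sub_const, show k 0 - x = 0 by simp [hx], zero_mul,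
        add_zero]
    have hxx : (starRingEnd ℂ) x * x = ((‖x‖ ^ 2 : ℝ) : ℂ) := by
      rw [mul_comm, Complex.mul_conj, Complex.sq_norm]
    have habs1 : ‖1 - (starRingEnd ℂ) x * x‖ = 1 - ‖x‖ ^ 2 := by
      rw [hxx, show (1:ℂ) - ((‖x‖ ^ 2 : ℝ) : ℂ) = ((1 - ‖x‖ ^ 2 : ℝ) : ℂ) by
        push_cast; ring, Complex.norm_real, Real.norm_eq_abs,
        _root_.abs_of_nonneg (by nlinarith [norm_nonneg x])]
    have := hder
    rw [hdn, norm_mul, norm_inv, habs1] at this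
    have hpos : (0:ℝ) < 1 - ‖x‖ ^ 2 := by nlinarith [norm_nonneg x]
    rw [mul_inv_le_iff₀ hpos] at this
    simpa using this
  · push_neg at hs
    obtain ⟨z₀, hz₀, hge⟩ := hs
    have heq : ‖k z₀‖ = 1 := le_antisymm (hb z₀ hz₀) hge
    have hmax : IsMaxOn (norm ∘ k) B z₀ := by
      intro z hz
      simp only [Function.comp_apply, Set.mem_setOf_eq, heq]
      exact hb z hz
    have hconst := Complex.eqOn_of_isPreconnected_of_isMaxOn_norm
      (convex_ball (0:ℂ) 1).isPreconnected isOpen_ball hk hz₀ hmax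
    have h0 : k 0 = k z₀ := hconst h0B
    have hev : k =ᶠ[nhds (0:ℂ)] (fun _ => k z₀) := by
      filter_upwards [isOpen_ball.mem_nhds h0B] with z hz using hconst hz
    rw [hev.deriv_eq, deriv_const, h0, heq]
    simp

lemma abs_sub_le' (a b : ℂ) : ‖a - b‖ ≤ ‖a‖ + ‖b‖ := by
  simpa [sub_eq_add_neg] using norm_add_le a (-b)

lemma final_real {c σ y : ℝ} (hc0 : 0 ≤ c) (hc1 : c ≤ 1) (hσ : σ = 1 - c^2) (hσ0 : 0 < σ)
    (hy0 : 0 ≤ y) (hy : y ≤ σ) :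
    c*(σ^2 - y^2)/(24*σ) + c^2*y^2/(24*σ) + y^2/36 + (1/72)*(c^2*y) + (1/144)*c^4 ≤ 1/36 := by
  subst hσ
  have h24 : (0:ℝ) < 24*(1 - c^2) := by nlinarith
  have key : c*((1-c^2)^2 - y^2) + c^2*y^2
      ≤ (1/36 - (y^2/36 + (1/72)*(c^2*y) + (1/144)*c^4)) * (24*(1-c^2)) := by
    nlinarith [mul_nonneg (mul_nonneg (sub_nonneg.2 hc1) (by linarith : (0:ℝ) ≤ 2-c))
        (mul_nonneg (sub_nonneg.2 hy) (by linarith : (0:ℝ) ≤ (1-c^2)+y)),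
      mul_nonneg (mul_nonneg (mul_self_nonneg c) hσ0.le) (sub_nonneg.2 hy),
      mul_nonneg hσ0.le (pow_nonneg hc0 4)]
  have h2 : (c*((1-c^2)^2 - y^2) + c^2*y^2)/(24*(1-c^2))
      ≤ 1/36 - (y^2/36 + (1/72)*(c^2*y) + (1/144)*c^4) := (div_le_iff₀ h24).mpr key
  have h3 : c*((1-c^2)^2 - y^2)/(24*(1-c^2)) + c^2*y^2/(24*(1-c^2))
      = (c*((1-c^2)^2 - y^2) + c^2*y^2)/(24*(1-c^2)) := by ring
  linarith

end SHB

theorem secondHankel_bound_small_t (t : ℝ) (ht0 : 0 ≤ t) (ht1 : t ≤ 1/4)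
    (f : ℂ → ℂ) (hf : MemC t f) :
    ‖taylorCoeff f 2 * taylorCoeff f 4 - (taylorCoeff f 3) ^ 2‖ ≤ 1/36 := by
  obtain ⟨hfa, hf0, hf1, hfne, w, ⟨hwa, hw0, hwb⟩, hid⟩ := hf
  set tc : ℂ := (t:ℂ) with htc
  set u : ℂ → ℂ := deriv f with hu_def
  have hu : AnalyticOnNhd ℂ u (ball (0:ℂ) 1) := hfa.deriv
  have hv : AnalyticOnNhd ℂ (deriv u) (ball (0:ℂ) 1) := hu.deriv
  set U1 := iteratedDeriv 2 f 0 with hU1_def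
  set U2 := iteratedDeriv 3 f 0 with hU2_def
  set U3 := iteratedDeriv 4 f 0 with hU3_def
  have hu0 : u 0 = 1 := hf1
  have huder : deriv u 0 = U1 := by rw [hU1_def, SHB.ideriv2_eq, hu_def]
  have hu2 : iteratedDeriv 2 u 0 = U2 := by rw [hU2_def, SHB.ideriv3_eq, hu_def]
  have hu3 : iteratedDeriv 3 u 0 = U3 := by
    rw [hU3_def, hu_def]
    conv_rhs => rw [show (4:ℕ) = 3+1 from rfl, iteratedDeriv_succ']
  set d1 := deriv w 0 with hd1_def
  set D2 := iteratedDeriv 2 w 0 with hD2_def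
  set D3 := iteratedDeriv 3 w 0 with hD3_def
  set W : ℂ → ℂ := fun z => w z + tc * (w z * w z) with hW_def
  have hww : AnalyticOnNhd ℂ (fun z => w z * w z) (ball (0:ℂ) 1) := hwa.mul hwa
  have hcw : AnalyticOnNhd ℂ (fun z => tc * (w z * w z)) (ball (0:ℂ) 1) :=
    analyticOnNhd_const.mul hww
  have hWa : AnalyticOnNhd ℂ W (ball (0:ℂ) 1) := hwa.add hcw
  -- main functional equation
  have hE1 : Set.EqOn (fun z => z * deriv u z) (fun z => u z * W z) (ball (0:ℂ) 1) := by
    intro z hz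
    have h := hid z hz
    have hne := hfne z hz
    have h2 : z * deriv u z / u z = w z + tc * w z ^ 2 := by linear_combination h
    simp only
    calc z * deriv u z = (z * deriv u z / u z) * u z := by field_simp
      _ = (w z + tc * w z ^ 2) * u z := by rw [h2]
      _ = u z * W z := by simp only [hW_def]; ring
  have q1 := hE1.iteratedDeriv_of_isOpen isOpen_ball 1 SHB.h0B
  have q2 := hE1.iteratedDeriv_of_isOpen isOpen_ball 2 SHB.h0B
  have q3 := hE1.iteratedDeriv_of_isOpen isOpen_ball 3 SHB.h0B
  -- left-hand sides
  have L1 : iteratedDeriv 1 (fun z => z * deriv u z) 0 = U1 := by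
    have h := SHB.ideriv1_mul (u := fun z : ℂ => z) (v := deriv u) analyticOnNhd_id hv
    rw [h, SHB.deriv_id_fun]
    simp [huder]
  have L2 : iteratedDeriv 2 (fun z => z * deriv u z) 0 = 2 * U2 := by
    have h := SHB.ideriv2_mul (u := fun z : ℂ => z) (v := deriv u) analyticOnNhd_id hv
    rw [h, SHB.deriv_id_fun, SHB.ideriv2_id]
    simp [← SHB.ideriv2_eq, hu2]
  have L3 : iteratedDeriv 3 (fun z => z * deriv u z) 0 = 3 * U3 := by
    have h := SHB.ideriv3_mul (u := fun z : ℂ => z) (v := deriv u) analyticOnNhd_id hv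
    rw [h, SHB.deriv_id_fun, SHB.ideriv2_id, SHB.ideriv3_id]
    simp [← SHB.ideriv2_eq, ← SHB.ideriv3_eq, hu3]
  -- W values
  have hW0 : W 0 = 0 := by simp [hW_def, hw0]
  have hww0 : (fun z => w z * w z) 0 = 0 := by simp [hw0]
  have hwwd1 : deriv (fun z => w z * w z) 0 = 0 := by
    have h := SHB.ideriv1_mul hwa hwa
    rw [iteratedDeriv_one] at h
    rw [h, hw0]; ring
  have hwwd2 : iteratedDeriv 2 (fun z => w z * w z) 0 = 2 * d1 * d1 := by
    have h := SHB.ideriv2_mul hwa hwa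
    rw [h, hw0]; ring
  have hwwd3 : iteratedDeriv 3 (fun z => w z * w z) 0 = 6 * d1 * D2 := by
    have h := SHB.ideriv3_mul hwa hwa
    rw [h, hw0]; ring
  have hcwd1 : deriv (fun z => tc * (w z * w z)) 0 = 0 := by
    have h := SHB.ideriv1_mul (u := fun _ : ℂ => tc) analyticOnNhd_const hww
    rw [iteratedDeriv_one] at h
    rw [h, deriv_const, hwwd1]; simp
  have hcwd2 : iteratedDeriv 2 (fun z => tc * (w z * w z)) 0 = tc * (2 * d1 * d1) := by
    have h := SHB.ideriv2_mul (u := fun _ : ℂ => tc) analyticOnNhd_const hww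
    rw [h, deriv_const, SHB.ideriv2_const, hwwd2]; ring
  have hcwd3 : iteratedDeriv 3 (fun z => tc * (w z * w z)) 0 = tc * (6 * d1 * D2) := by
    have h := SHB.ideriv3_mul (u := fun _ : ℂ => tc) analyticOnNhd_const hww
    rw [h, deriv_const, SHB.ideriv2_const, SHB.ideriv3_const, hwwd2, hwwd3, hwwd1]; ring
  have hWd1 : deriv W 0 = d1 := by
    have h := SHB.ideriv1_add hwa hcw
    rw [iteratedDeriv_one] at h
    rw [hW_def, h, hcwd1]; simp [hd1_def]
  have hWd2 : iteratedDeriv 2 W 0 = D2 + 2 * tc * d1 ^ 2 := by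
    have h := SHB.ideriv2_add hwa hcw
    rw [hW_def, h, hcwd2]; ring
  have hWd3 : iteratedDeriv 3 W 0 = D3 + 6 * tc * d1 * D2 := by
    have h3 : iteratedDeriv 3 (fun z => w z + tc * (w z * w z)) 0
        = iteratedDeriv 3 w 0 + iteratedDeriv 3 (fun z => tc * (w z * w z)) 0 := by
      have h1 : iteratedDeriv 3 (fun z => w z + tc * (w z * w z)) 0
          = iteratedDeriv 2 (fun z => deriv w z + deriv (fun z => tc * (w z * w z)) z) 0 := by
        rw [show (3:ℕ) = 2+1 from rfl, iteratedDeriv_succ']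
        exact (SHB.eqOn_deriv_add hwa hcw).iteratedDeriv_of_isOpen isOpen_ball 2 SHB.h0B
      rw [h1, SHB.ideriv2_add hwa.deriv hcw.deriv, ← SHB.ideriv3_eq, ← SHB.ideriv3_eq]
    rw [hW_def, h3, hcwd3]; ring
  -- right-hand sides
  have R1 : iteratedDeriv 1 (fun z => u z * W z) 0 = d1 := by
    rw [SHB.ideriv1_mul hu hWa, hW0, hWd1, hu0]; ring
  have R2 : iteratedDeriv 2 (fun z => u z * W z) 0
      = 2 * U1 * d1 + D2 + 2 * tc * d1 ^ 2 := by
    have h := SHB.ideriv2_mul hu hWa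
    rw [h, hW0, hWd1, hWd2, hu0, huder]; ring
  have R3 : iteratedDeriv 3 (fun z => u z * W z) 0
      = 3 * U2 * d1 + 3 * U1 * (D2 + 2 * tc * d1 ^ 2) + D3 + 6 * tc * d1 * D2 := by
    have h := SHB.ideriv3_mul hu hWa
    rw [h, hW0, hWd1, hWd2, hWd3, hu0, huder, hu2]; ring
  have eq1 : U1 = d1 := by
    rw [← L1, ← R1]; exact q1
  have eq2 : 2 * U2 = 2 * U1 * d1 + D2 + 2 * tc * d1 ^ 2 := by rw [← L2, ← R2]; exact q2
  have eq3 : 3 * U3 = 3 * U2 * d1 + 3 * U1 * (D2 + 2 * tc * d1 ^ 2) + D3 + 6 * tc * d1 * D2 := by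
    rw [← L3, ← R3]; exact q3
  -- the function g = w(z)/z
  set g : ℂ → ℂ := dslope w 0 with hg_def
  have hgd : DifferentiableOn ℂ g (ball (0:ℂ) 1) :=
    (differentiableOn_dslope (isOpen_ball.mem_nhds SHB.h0B)).mpr hwa.differentiableOn
  have hga : AnalyticOnNhd ℂ g (ball (0:ℂ) 1) :=
    (Complex.analyticOnNhd_iff_differentiableOn isOpen_ball).mpr hgd
  have hwz : w = fun z => z * g z := by
    funext z
    have h := sub_smul_dslope w 0 z
    rw [hw0, sub_zero, sub_zero, smul_eq_mul] at h
    exact h.symm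
  have hg0 : g 0 = d1 := by rw [hg_def, dslope_same, hd1_def]
  set G1 := deriv g 0 with hG1_def
  set G2 := iteratedDeriv 2 g 0 with hG2_def
  have hd2G : D2 = 2 * G1 := by
    rw [hD2_def, hwz]
    have h := SHB.ideriv2_mul (u := fun z : ℂ => z) (v := g) analyticOnNhd_id hga
    rw [h, SHB.deriv_id_fun, SHB.ideriv2_id]
    simp [hG1_def]
  have hd3G : D3 = 3 * G2 := by
    rw [hD3_def, hwz]
    have h := SHB.ideriv3_mul (u := fun z : ℂ => z) (v := g) analyticOnNhd_id hga
    rw [h, SHB.deriv_id_fun, SHB.ideriv2_id, SHB.ideriv3_id]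
    simp
    try ring
  have hgb : ∀ z ∈ ball (0:ℂ) 1, ‖g z‖ ≤ 1 := by
    intro z hz
    have hmaps : MapsTo w (ball (0:ℂ) 1) (ball (w 0) 1) := by
      intro y hy
      rw [hw0, mem_ball_zero_iff]
      exact hwb y hy
    have := Complex.norm_dslope_le_div_of_mapsTo_ball hwa.differentiableOn (hmaps.mono_right ball_subset_closedBall) hz
    simpa using this
  -- Taylor coefficients of f
  have hT2 : taylorCoeff f 2 = U1 / 2 := by
    rw [taylorCoeff, hU1_def]; norm_num [Nat.factorial]
  have hT3 : taylorCoeff f 3 = U2 / 6 := by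
    rw [taylorCoeff, hU2_def]; norm_num [Nat.factorial]
  have hT4 : taylorCoeff f 4 = U3 / 24 := by
    rw [taylorCoeff, hU3_def]; norm_num [Nat.factorial]
  -- solve for U's
  have hU1d : U1 = d1 := eq1
  have hU2d : U2 = (1 + tc) * d1 ^ 2 + G1 := by
    rw [hd2G] at eq2
    linear_combination eq2 / 2 + d1 * eq1
  have hU3d : U3 = (1 + 3*tc) * d1 ^ 3 + (3 + 4*tc) * d1 * G1 + G2 := by
    rw [hd2G, hd3G] at eq3
    linear_combination eq3 / 3 + d1 * hU2d + (2*G1 + 2*tc*d1^2) * hU1d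
  rw [hT2, hT3, hT4]
  have hca0 : 0 ≤ ‖d1‖ := norm_nonneg d1
  set ca := ‖d1‖ with hca_def
  have hconj : (starRingEnd ℂ) d1 * d1 = ((ca:ℝ):ℂ)^2 := by
    rw [mul_comm, Complex.mul_conj, ← Complex.sq_norm, hca_def]
    push_cast
    ring
  by_cases hgs : ∀ z ∈ ball (0:ℂ) 1, ‖g z‖ < 1
  · -- strict case
    have hca : ca < 1 := by rw [hca_def, ← hg0]; exact hgs 0 SHB.h0B
    set σr : ℝ := 1 - ca^2 with hσr_def
    have hσpos : 0 < σr := by nlinarith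
    have hσcne : ((σr:ℝ):ℂ) ≠ 0 := by
      simp only [ne_eq, Complex.ofReal_eq_zero]; exact ne_of_gt hσpos
    set m : ℂ → ℂ := fun z => 1 - (starRingEnd ℂ) d1 * g z with hm_def
    have hma : AnalyticOnNhd ℂ m (ball (0:ℂ) 1) :=
      analyticOnNhd_const.sub (analyticOnNhd_const.mul hga)
    have hd1lt : ‖d1‖ < 1 := hca
    have hmne : ∀ z ∈ ball (0:ℂ) 1, m z ≠ 0 := fun z hz =>
      SHB.moebius_den_ne hd1lt (hgb z hz)
    set h' : ℂ → ℂ := fun z => (g z - d1) * (m z)⁻¹ with hh_def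
    have hha : AnalyticOnNhd ℂ h' (ball (0:ℂ) 1) :=
      (hga.sub analyticOnNhd_const).mul (hma.inv hmne)
    have hh0 : h' 0 = 0 := by simp [hh_def, hg0]
    have hhlt : ∀ z ∈ ball (0:ℂ) 1, ‖h' z‖ < 1 := fun z hz =>
      SHB.moebius_lt hd1lt (hgs z hz)
    set k := dslope h' 0 with hk_def
    have hkd : DifferentiableOn ℂ k (ball (0:ℂ) 1) :=
      (differentiableOn_dslope (isOpen_ball.mem_nhds SHB.h0B)).mpr hha.differentiableOn
    have hka : AnalyticOnNhd ℂ k (ball (0:ℂ) 1) :=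
      (Complex.analyticOnNhd_iff_differentiableOn isOpen_ball).mpr hkd
    have hkb : ∀ z ∈ ball (0:ℂ) 1, ‖k z‖ ≤ 1 := by
      intro z hz
      have hmaps : MapsTo h' (ball (0:ℂ) 1) (ball (h' 0) 1) := by
        intro y hy
        rw [hh0, mem_ball_zero_iff]
        exact hhlt y hy
      have := Complex.norm_dslope_le_div_of_mapsTo_ball hha.differentiableOn (hmaps.mono_right ball_subset_closedBall) hz
      simpa using this
    have hx0 : k 0 = deriv h' 0 := by rw [hk_def]; exact dslope_same _ _
    have hhzk : h' = fun z => z * k z := by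
      funext z
      have h := sub_smul_dslope h' 0 z
      rw [hh0, sub_zero, sub_zero, smul_eq_mul] at h
      exact h.symm
    have SPk := SHB.schwarz_pick_zero hkd hkb
    have hE3 : Set.EqOn (fun z => h' z * m z) (fun z => g z - d1) (ball (0:ℂ) 1) := by
      intro z hz
      simp only [hh_def]
      field_simp [hmne z hz]
    have p1 := hE3.iteratedDeriv_of_isOpen isOpen_ball 1 SHB.h0B
    have p2 := hE3.iteratedDeriv_of_isOpen isOpen_ball 2 SHB.h0B
    have hm0 : m 0 = ((σr:ℝ):ℂ) := by
      rw [hm_def]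
      simp only [hg0, hconj, hσr_def]
      push_cast
      ring
    have hderivm : deriv m 0 = -((starRingEnd ℂ) d1) * G1 := by
      rw [hm_def, deriv_const_sub, deriv_const_mul _ ((hga 0 SHB.h0B).differentiableAt)]
      ring
    have hRHS1 : iteratedDeriv 1 (fun z => g z - d1) 0 = G1 := by
      rw [iteratedDeriv_one, deriv_sub_const]
    have hRHS2 : iteratedDeriv 2 (fun z => g z - d1) 0 = G2 := by
      rw [SHB.ideriv2_eq, show deriv (fun z => g z - d1) = deriv g from
        funext fun z => deriv_sub_const _, ← SHB.ideriv2_eq]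
    have r1 : deriv h' 0 * ((σr:ℝ):ℂ) = G1 := by
      have hL := SHB.ideriv1_mul hha hma
      rw [hL, hh0, hm0] at p1
      rw [hRHS1] at p1
      simpa using p1
    have hk2 : iteratedDeriv 2 h' 0 = 2 * deriv k 0 := by
      rw [hhzk]
      have h := SHB.ideriv2_mul (u := fun z : ℂ => z) (v := k) analyticOnNhd_id hka
      rw [h, SHB.deriv_id_fun, SHB.ideriv2_id]
      simp
    have r2 : 2 * deriv k 0 * ((σr:ℝ):ℂ) + 2 * k 0 * (-((starRingEnd ℂ) d1) * G1) = G2 := by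
      have hL := SHB.ideriv2_mul hha hma
      rw [hL, hh0, hm0, hderivm, hk2, ← hx0] at p2
      rw [hRHS2] at p2
      linear_combination p2
    set X := k 0 with hX_def
    have hXle : ‖X‖ ≤ 1 := hkb 0 SHB.h0B
    have xeq : X * ((σr:ℝ):ℂ) = G1 := by rw [hx0]; exact r1
    set y := ‖G1‖ with hy_def
    have hy0 : 0 ≤ y := norm_nonneg G1
    have hyx : ‖X‖ * σr = y := by
      rw [hy_def, ← xeq, norm_mul, Complex.norm_real, Real.norm_eq_abs, _root_.abs_of_pos hσpos]
    have hyσ : y ≤ σr := by nlinarith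
    set Kc : ℂ := ((σr:ℝ):ℂ) * G2 / 2 + (starRingEnd ℂ) d1 * G1^2 with hKc_def
    have hKeq : Kc = ((σr:ℝ):ℂ)^2 * deriv k 0 := by
      rw [hKc_def]
      linear_combination (-(((σr:ℝ):ℂ)/2)) * r2 - ((starRingEnd ℂ) d1 * G1) * xeq
    have hKb : ‖Kc‖ ≤ σr^2 - y^2 := by
      rw [hKeq, norm_mul, norm_pow, Complex.norm_real, Real.norm_eq_abs, _root_.abs_of_pos hσpos]
      calc σr ^ 2 * ‖deriv k 0‖ ≤ σr^2 * (1 - ‖X‖ ^ 2) := by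
            exact mul_le_mul_of_nonneg_left SPk (by positivity)
        _ ≤ σr^2 - y^2 := by nlinarith
    -- decomposition of the Hankel determinant
    have h24ne : ((24*σr:ℝ):ℂ) ≠ 0 := by
      simp only [ne_eq, Complex.ofReal_eq_zero]
      positivity
    have deq : d1 * Kc = ((24*σr:ℝ):ℂ) * (d1 * G2 / 48) + ((ca:ℝ):ℂ)^2 * G1^2 := by
      rw [hKc_def]
      push_cast
      linear_combination G1^2 * hconj
    have hsplit : d1 * Kc / ((24*σr:ℝ):ℂ) - ((ca:ℝ):ℂ)^2 * G1^2 / ((24*σr:ℝ):ℂ)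
        = d1 * G2 / 48 := by
      rw [deq]
      field_simp
      ring
    have hHdec : U1/2 * (U3/24) - (U2/6)^2
        = d1 * Kc / ((24*σr : ℝ):ℂ) - ((ca:ℝ):ℂ)^2 * G1^2 / ((24*σr:ℝ):ℂ) - G1^2/36
          + (tc/36 + 1/144) * (d1^2*G1) + (tc/16 + 1/48 - (1+tc)^2/36) * d1^4 := by
      rw [hsplit, hU1d, hU2d, hU3d]
      ring
    rw [hHdec]
    have habs24 : ‖((24*σr : ℝ):ℂ)‖ = 24*σr := by
      rw [Complex.norm_real, Real.norm_eq_abs]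
      rw [_root_.abs_of_pos (by positivity)]
    have e1 : ‖d1 * Kc / ((24*σr : ℝ):ℂ)‖ = ca * ‖Kc‖ / (24*σr) := by
      rw [norm_div, norm_mul, habs24, ← hca_def]
    have e2 : ‖((ca:ℝ):ℂ)^2 * G1^2 / ((24*σr:ℝ):ℂ)‖ = ca^2 * y^2 / (24*σr) := by
      rw [norm_div, norm_mul, habs24, norm_pow, norm_pow, Complex.norm_real, Real.norm_eq_abs, ← hy_def,
        _root_.abs_of_nonneg hca0]
    have e3 : ‖G1^2/36‖ = y^2/36 := by
      rw [norm_div, norm_pow, ← hy_def, show ((36:ℂ)) = ((36:ℝ):ℂ) by norm_num,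
        Complex.norm_real, Real.norm_eq_abs]
      norm_num
    have e4 : ‖(tc/36 + 1/144) * (d1^2*G1)‖ = (t/36+1/144) * (ca^2*y) := by
      rw [norm_mul, show tc/36 + 1/144 = ((t/36 + 1/144 : ℝ):ℂ) by rw [htc]; push_cast; ring,
        Complex.norm_real, Real.norm_eq_abs, norm_mul, norm_pow, ← hca_def, ← hy_def,
        _root_.abs_of_nonneg (by linarith : (0:ℝ) ≤ t/36 + 1/144)]
    have e5 : ‖(tc/16 + 1/48 - (1+tc)^2/36) * d1^4‖
        = |t/16 + 1/48 - (1+t)^2/36| * ca^4 := by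
      rw [norm_mul, show tc/16 + 1/48 - (1+tc)^2/36 = ((t/16 + 1/48 - (1+t)^2/36 : ℝ):ℂ) by
        rw [htc]; push_cast; ring, Complex.norm_real, Real.norm_eq_abs, norm_pow, ← hca_def]
    -- triangle inequality
    set A1 : ℂ := d1 * Kc / ((24*σr : ℝ):ℂ) with hA1
    set A2 : ℂ := ((ca:ℝ):ℂ)^2 * G1^2 / ((24*σr:ℝ):ℂ) with hA2
    set A3 : ℂ := G1^2/36 with hA3
    set A4 : ℂ := (tc/36 + 1/144) * (d1^2*G1) with hA4
    set A5 : ℂ := (tc/16 + 1/48 - (1+tc)^2/36) * d1^4 with hA5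
    have tri1 := norm_add_le (A1 - A2 - A3 + A4) A5
    have tri2 := norm_add_le (A1 - A2 - A3) A4
    have tri3 := SHB.abs_sub_le' (A1 - A2) A3
    have tri4 := SHB.abs_sub_le' A1 A2
    -- bounds on each term
    have hb1 : ca * ‖Kc‖ / (24*σr) ≤ ca * (σr^2 - y^2) / (24*σr) := by
      gcongr
    have hb4 : (t/36+1/144) * (ca^2*y) ≤ (1/72) * (ca^2*y) :=
      mul_le_mul_of_nonneg_right (by linarith) (by positivity)
    have hb5 : |t/16 + 1/48 - (1+t)^2/36| * ca^4 ≤ (1/144) * ca^4 := by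
      have h1 : |t/16 + 1/48 - (1+t)^2/36| ≤ 1/144 := by
        rw [abs_le]
        constructor <;>
          nlinarith [mul_nonneg ht0 (by linarith : (0:ℝ) ≤ 1-4*t), sq_nonneg t]
      exact mul_le_mul_of_nonneg_right h1 (by positivity)
    have hfin := SHB.final_real hca0 hca.le hσr_def hσpos hy0 hyσ
    rw [e1] at tri4
    rw [e2] at tri4
    rw [e3] at tri3
    rw [e4] at tri2
    rw [e5] at tri1
    linarith
  · -- constant case
    push_neg at hgs
    obtain ⟨z₀, hz₀, hge⟩ := hgs
    have heq : ‖g z₀‖ = 1 := le_antisymm (hgb z₀ hz₀) hge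
    have hmax : IsMaxOn (norm ∘ g) (ball (0:ℂ) 1) z₀ := by
      intro z hz
      simp only [Function.comp_apply, Set.mem_setOf_eq, heq]
      exact hgb z hz
    have hconstg := Complex.eqOn_of_isPreconnected_of_isMaxOn_norm
      (convex_ball (0:ℂ) 1).isPreconnected isOpen_ball hgd hz₀ hmax
    have hev : g =ᶠ[nhds (0:ℂ)] (fun _ => g z₀) := by
      filter_upwards [isOpen_ball.mem_nhds SHB.h0B] with z hz using hconstg hz
    have hG1z : G1 = 0 := by rw [hG1_def, hev.deriv_eq, deriv_const]
    have hG2z : G2 = 0 := by rw [hG2_def, hev.iteratedDeriv_eq 2, SHB.ideriv2_const]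
    have hca1 : ca ≤ 1 := by rw [hca_def, ← hg0]; exact hgb 0 SHB.h0B
    have hH : U1/2 * (U3/24) - (U2/6)^2 = (((1+3*t)/48 - (1+t)^2/36 : ℝ):ℂ) * d1^4 := by
      rw [hU1d, hU2d, hU3d, hG1z, hG2z, htc]
      push_cast
      ring
    rw [hH, norm_mul, Complex.norm_real, Real.norm_eq_abs, norm_pow, ← hca_def]
    have h1 : |(1+3*t)/48 - (1+t)^2/36| ≤ 1/144 := by
      rw [abs_le]
      constructor <;>
        nlinarith [mul_nonneg ht0 (by linarith : (0:ℝ) ≤ 1-4*t), sq_nonneg t]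
    have h2 : ca^4 ≤ 1 := pow_le_one₀ hca0 hca1
    calc |(1+3*t)/48 - (1+t)^2/36| * ca^4 ≤ (1/144) * 1 :=
          mul_le_mul h1 h2 (pow_nonneg hca0 4) (by norm_num)
      _ ≤ 1/36 := by norm_num
end

section
/- Let t ∈ ℝ with 1/4 ≤ t ≤ 1/2, and let f ∈ C(φ_t). Then the second Hankel determinant satisfies |a₂a₄ − a₃²| ≤ (1/144)·(4 + (4t − 1)²/(8 + 20t − 16t²)). -/
open Complex Metric Set Filter Topology

local notation "B" => ball (0:ℂ) 1

lemma mem0B : (0:ℂ) ∈ B := by simp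

lemma BnhdsZero : B ∈ 𝓝 (0:ℂ) := isOpen_ball.mem_nhds mem0B

lemma eqOn_deriv_mul {p q : ℂ → ℂ} (hp : AnalyticOnNhd ℂ p B) (hq : AnalyticOnNhd ℂ q B) :
    Set.EqOn (deriv (fun z => p z * q z)) (fun z => deriv p z * q z + p z * deriv q z) B :=
  fun z hz => deriv_mul ((hp z hz).differentiableAt) ((hq z hz).differentiableAt)

lemma d1_mul {p q : ℂ → ℂ} (hp : AnalyticOnNhd ℂ p B) (hq : AnalyticOnNhd ℂ q B) :
    deriv (fun z => p z * q z) 0 = deriv p 0 * q 0 + p 0 * deriv q 0 :=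
  eqOn_deriv_mul hp hq mem0B

lemma d2_mul {p q : ℂ → ℂ} (hp : AnalyticOnNhd ℂ p B) (hq : AnalyticOnNhd ℂ q B) :
    iteratedDeriv 2 (fun z => p z * q z) 0 =
      iteratedDeriv 2 p 0 * q 0 + 2 * (deriv p 0 * deriv q 0) + p 0 * iteratedDeriv 2 q 0 := by
  have hev : deriv (fun z => p z * q z) =ᶠ[𝓝 (0:ℂ)]
      (fun z => deriv p z * q z + p z * deriv q z) :=
    (eqOn_deriv_mul hp hq).eventuallyEq_of_mem BnhdsZero
  have h2 : iteratedDeriv 2 (fun z => p z * q z) 0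
      = deriv (fun z => deriv p z * q z + p z * deriv q z) 0 := by
    rw [iteratedDeriv_succ, iteratedDeriv_one]
    exact hev.deriv_eq
  rw [h2]
  rw [deriv_fun_add (f := fun z => deriv p z * q z) (g := fun z => p z * deriv q z) (((hp.deriv 0 mem0B).mul (hq 0 mem0B)).differentiableAt)
      (((hp 0 mem0B).mul (hq.deriv 0 mem0B)).differentiableAt)]
  rw [deriv_fun_mul ((hp.deriv 0 mem0B).differentiableAt) ((hq 0 mem0B).differentiableAt)]
  rw [deriv_fun_mul ((hp 0 mem0B).differentiableAt) ((hq.deriv 0 mem0B).differentiableAt)]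
  simp only [iteratedDeriv_succ, iteratedDeriv_one, iteratedDeriv_zero]
  ring

lemma d2_add {p q : ℂ → ℂ} (hp : AnalyticOnNhd ℂ p B) (hq : AnalyticOnNhd ℂ q B) :
    iteratedDeriv 2 (fun z => p z + q z) 0 = iteratedDeriv 2 p 0 + iteratedDeriv 2 q 0 := by
  have hev : deriv (fun z => p z + q z) =ᶠ[𝓝 (0:ℂ)] (fun z => deriv p z + deriv q z) :=
    Set.EqOn.eventuallyEq_of_mem
      (fun z hz => deriv_fun_add ((hp z hz).differentiableAt) ((hq z hz).differentiableAt)) BnhdsZero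
  have h2 : iteratedDeriv 2 (fun z => p z + q z) 0
      = deriv (fun z => deriv p z + deriv q z) 0 := by
    rw [iteratedDeriv_succ, iteratedDeriv_one]; exact hev.deriv_eq
  rw [h2, deriv_fun_add ((hp.deriv 0 mem0B).differentiableAt) ((hq.deriv 0 mem0B).differentiableAt)]
  simp only [iteratedDeriv_succ, iteratedDeriv_one, iteratedDeriv_zero]

lemma d3_mul {p q : ℂ → ℂ} (hp : AnalyticOnNhd ℂ p B) (hq : AnalyticOnNhd ℂ q B) :
    iteratedDeriv 3 (fun z => p z * q z) 0 =
      iteratedDeriv 3 p 0 * q 0 + 3 * (iteratedDeriv 2 p 0 * deriv q 0)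
        + 3 * (deriv p 0 * iteratedDeriv 2 q 0) + p 0 * iteratedDeriv 3 q 0 := by
  have hev : deriv (fun z => p z * q z) =ᶠ[𝓝 (0:ℂ)]
      (fun z => deriv p z * q z + p z * deriv q z) :=
    (eqOn_deriv_mul hp hq).eventuallyEq_of_mem BnhdsZero
  have h3 : iteratedDeriv 3 (fun z => p z * q z) 0
      = iteratedDeriv 2 (fun z => deriv p z * q z + p z * deriv q z) 0 := by
    rw [show (3:ℕ) = 2 + 1 from rfl, iteratedDeriv_succ']
    exact hev.iteratedDeriv_eq 2
  rw [h3, d2_add (hp.deriv.mul hq) (hp.mul hq.deriv), d2_mul hp.deriv hq, d2_mul hp hq.deriv]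
  have e1 : iteratedDeriv 2 (deriv p) 0 = iteratedDeriv 3 p 0 := by
    rw [← iteratedDeriv_succ']
  have e2 : iteratedDeriv 2 (deriv q) 0 = iteratedDeriv 3 q 0 := by
    rw [← iteratedDeriv_succ']
  have e3 : deriv (deriv p) 0 = iteratedDeriv 2 p 0 := by
    simp [iteratedDeriv_succ, iteratedDeriv_one]
  have e4 : deriv (deriv q) 0 = iteratedDeriv 2 q 0 := by
    simp [iteratedDeriv_succ, iteratedDeriv_one]
  rw [e1, e2, e3, e4]; ring

lemma mem0B' : (0:ℂ) ∈ B := by simp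

lemma max_dichotomy {u : ℂ → ℂ} (hd : DifferentiableOn ℂ u B)
    (hb : ∀ z ∈ B, ‖u z‖ ≤ 1) :
    (∀ z ∈ B, ‖u z‖ < 1) ∨ (Set.EqOn u (fun _ => u 0) B) := by
  by_cases h : ∀ z ∈ B, ‖u z‖ < 1
  · exact Or.inl h
  · right
    push_neg at h
    obtain ⟨z₀, hz₀, hge⟩ := h
    have heq : ‖u z₀‖ = 1 := le_antisymm (hb z₀ hz₀) hge
    have hmax : IsMaxOn (norm ∘ u) B z₀ := by
      intro z hz
      simp only [Function.comp_apply, heq]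
      exact hb z hz
    have := Complex.eqOn_of_isPreconnected_of_isMaxOn_norm
      (convex_ball (0:ℂ) 1).isPreconnected isOpen_ball hd hz₀ hmax
    have h0 : u 0 = u z₀ := this mem0B'
    intro z hz
    have hz' : u z = u z₀ := this hz
    show u z = u 0
    rw [hz', h0]

lemma dslope_bdd {u : ℂ → ℂ} (hd : DifferentiableOn ℂ u B) (h0 : u 0 = 0)
    (hb : ∀ z ∈ B, ‖u z‖ ≤ 1) :
    ∀ z ∈ B, ‖dslope u 0 z‖ ≤ 1 := by
  rcases max_dichotomy hd hb with hs | hc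
  · intro z hz
    have hmaps : MapsTo u B (ball (u 0) 1) := by
      intro x hx
      rw [h0, mem_ball, dist_eq_norm, sub_zero]
      exact hs x hx
    have := Complex.norm_dslope_le_div_of_mapsTo_ball hd (hmaps.mono_right ball_subset_closedBall) hz
    simpa using this
  · intro z hz
    rcases eq_or_ne z 0 with rfl | hne
    · have hude : u =ᶠ[𝓝 (0:ℂ)] (fun _ => u 0) :=
        hc.eventuallyEq_of_mem (isOpen_ball.mem_nhds mem0B')
      rw [dslope_same]
      rw [hude.deriv_eq]
      simp
    · rw [dslope_of_ne _ hne]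
      have : u z = 0 := by rw [hc hz, h0]
      simp [slope, this, h0]

lemma one_sub_conj_mul_self (a : ℂ) :
    1 - (starRingEnd ℂ) a * a = ((1 - ‖a‖ ^ 2 : ℝ) : ℂ) := by
  have h : (starRingEnd ℂ) a * a = (Complex.normSq a : ℂ) := by
    rw [mul_comm, Complex.mul_conj]
  rw [h, ← Complex.sq_norm]
  push_cast
  ring

lemma mobius_normSq (a x : ℂ) :
    Complex.normSq (1 - (starRingEnd ℂ) a * x) - Complex.normSq (x - a)
      = (1 - Complex.normSq a) * (1 - Complex.normSq x) := by
  simp only [Complex.normSq_apply, Complex.sub_re, Complex.sub_im, Complex.mul_re,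
    Complex.mul_im, Complex.one_re, Complex.one_im, Complex.conj_re, Complex.conj_im]
  ring

lemma schurStep {u : ℂ → ℂ} (hd : DifferentiableOn ℂ u B)
    (hb : ∀ z ∈ B, ‖u z‖ ≤ 1) (ha : ‖u 0‖ < 1) :
    ∃ v : ℂ → ℂ, DifferentiableOn ℂ v B ∧ (∀ z ∈ B, ‖v z‖ ≤ 1) ∧ v 0 = 0 ∧
      deriv v 0 * (1 - (starRingEnd ℂ) (u 0) * u 0) = deriv u 0 ∧
      iteratedDeriv 2 v 0 * (1 - (starRingEnd ℂ) (u 0) * u 0) ^ 2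
        = iteratedDeriv 2 u 0 * (1 - (starRingEnd ℂ) (u 0) * u 0)
          + 2 * (starRingEnd ℂ) (u 0) * (deriv u 0) ^ 2 := by
  set a := u 0 with ha0
  set k := (starRingEnd ℂ) a with hk
  have hu_an : AnalyticOnNhd ℂ u B := hd.analyticOnNhd isOpen_ball
  set D : ℂ → ℂ := fun z => 1 - k * u z with hD
  have hDne : ∀ z ∈ B, D z ≠ 0 := by
    intro z hz
    have h1 : ‖k * u z‖ < 1 := by
      rw [norm_mul]
      have hk1 : ‖k‖ = ‖a‖ := Complex.norm_conj a
      calc ‖k‖ * ‖u z‖ ≤ ‖k‖ * 1 :=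
            mul_le_mul_of_nonneg_left (hb z hz) (norm_nonneg _)
        _ = ‖a‖ := by rw [hk1, mul_one]
        _ < 1 := ha
    intro h0
    have : k * u z = 1 := by
      have := sub_eq_zero.mp h0
      linear_combination -this
    rw [this] at h1
    simp at h1
  have hD_an : AnalyticOnNhd ℂ D B :=
    analyticOnNhd_const.sub (analyticOnNhd_const.mul hu_an)
  set q : ℂ → ℂ := fun z => (D z)⁻¹ with hq
  have hq_an : AnalyticOnNhd ℂ q B := hD_an.inv hDne
  set p : ℂ → ℂ := fun z => u z - a with hp
  have hp_an : AnalyticOnNhd ℂ p B := hu_an.sub analyticOnNhd_const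
  refine ⟨fun z => p z * q z, ((hp_an.mul hq_an).differentiableOn), ?_, ?_, ?_, ?_⟩
  · -- bounded by 1
    intro z hz
    have hDz := hDne z hz
    rw [norm_mul, norm_inv, ← div_eq_mul_inv, div_le_one (norm_pos_iff.mpr hDz)]
    have key := mobius_normSq a (u z)
    have h1 : Complex.normSq (u z) ≤ 1 := by
      rw [← Complex.sq_norm]
      nlinarith [hb z hz, norm_nonneg (u z)]
    have h2 : Complex.normSq a ≤ 1 := by
      rw [← Complex.sq_norm]
      nlinarith [norm_nonneg a]
    have h3 : Complex.normSq (u z - a) ≤ Complex.normSq (1 - k * u z) := by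
      nlinarith [key, mul_nonneg (sub_nonneg.mpr h2) (sub_nonneg.mpr h1)]
    have := Real.sqrt_le_sqrt h3
    rwa [← Complex.norm_def, ← Complex.norm_def] at this
  · simp [hp, ha0]
  · -- first derivative identity
    have hD0 : D 0 = 1 - k * a := by simp [hD, ha0]
    have hd1 : deriv (fun z => p z * q z) 0 = deriv p 0 * q 0 + p 0 * deriv q 0 :=
      d1_mul hp_an hq_an
    have hp0 : p 0 = 0 := by simp [hp, ha0]
    have hdp : deriv p 0 = deriv u 0 := deriv_sub_const a
    have hq0 : q 0 = (D 0)⁻¹ := rfl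
    rw [hd1, hp0, hdp, hq0, hD0]
    field_simp [show (1:ℂ) - k * a ≠ 0 by rw [← hD0]; exact hDne 0 mem0B']
    ring
  · -- second derivative identity
    have hD0ne : D 0 ≠ 0 := hDne 0 mem0B'
    have hD0 : D 0 = 1 - k * a := by simp [hD, ha0]
    have hp0 : p 0 = 0 := by simp [hp, ha0]
    have hdp : deriv p 0 = deriv u 0 := deriv_sub_const a
    have hq0 : q 0 = (D 0)⁻¹ := rfl
    -- deriv D on B
    have hDeq : Set.EqOn (deriv D) (fun z => -(k * deriv u z)) B := by
      intro z hz
      rw [hD]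
      rw [deriv_const_sub]
      rw [deriv_const_mul k ((hu_an z hz).differentiableAt)]
    have hdD0 : deriv D 0 = -(k * deriv u 0) := hDeq mem0B'
    have hD2 : iteratedDeriv 2 D 0 = -(k * iteratedDeriv 2 u 0) := by
      have hev : deriv D =ᶠ[𝓝 (0:ℂ)] (fun z => -(k * deriv u z)) :=
        hDeq.eventuallyEq_of_mem BnhdsZero
      rw [iteratedDeriv_succ, iteratedDeriv_one, hev.deriv_eq]
      have hfe : (fun z => -(k * deriv u z)) = fun z => (-k) * deriv u z := by
        funext z; ring
      rw [hfe, deriv_const_mul (-k) ((hu_an.deriv 0 mem0B').differentiableAt)]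
      simp only [iteratedDeriv_succ, iteratedDeriv_one, iteratedDeriv_zero]
      ring
    -- deriv q at 0
    have hdq0 : deriv q 0 = -deriv D 0 / D 0 ^ 2 :=
      deriv_inv'' ((hD_an 0 mem0B').differentiableAt) hD0ne
    -- second deriv of q via q * D = 1
    have hqD : Set.EqOn (fun z => q z * D z) (fun _ => (1:ℂ)) B := by
      intro z hz
      simp only [hq]
      exact inv_mul_cancel₀ (hDne z hz)
    have hqD2 : iteratedDeriv 2 (fun z => q z * D z) 0 = 0 := by
      have hev : (fun z => q z * D z) =ᶠ[𝓝 (0:ℂ)] (fun _ => (1:ℂ)) :=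
        hqD.eventuallyEq_of_mem BnhdsZero
      rw [hev.iteratedDeriv_eq 2]
      simp [iteratedDeriv_succ, iteratedDeriv_one]
    have r2 : iteratedDeriv 2 q 0 * D 0 + 2 * (deriv q 0 * deriv D 0)
        + q 0 * iteratedDeriv 2 D 0 = 0 := by
      rw [← d2_mul hq_an hD_an]; exact hqD2
    -- iteratedDeriv 2 of v
    have hv2 : iteratedDeriv 2 (fun z => p z * q z) 0 =
        iteratedDeriv 2 p 0 * q 0 + 2 * (deriv p 0 * deriv q 0) + p 0 * iteratedDeriv 2 q 0 :=
      d2_mul hp_an hq_an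
    have hp2 : iteratedDeriv 2 p 0 = iteratedDeriv 2 u 0 := by
      have : deriv p = deriv u := funext fun z => deriv_sub_const a
      rw [iteratedDeriv_succ', this, ← iteratedDeriv_succ']
    -- solve for iteratedDeriv 2 q 0 from r2
    have hq2 : iteratedDeriv 2 q 0
        = (-(2 * (deriv q 0 * deriv D 0)) - q 0 * iteratedDeriv 2 D 0) / D 0 := by
      field_simp at r2 ⊢
      linear_combination r2
    rw [hv2, hp0, hp2, hdp, hq2, hdq0, hq0, hD2, hdD0, ← hD0]
    field_simp
    ring

lemma schwarzPick0 {u : ℂ → ℂ} (hd : DifferentiableOn ℂ u B)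
    (hb : ∀ z ∈ B, ‖u z‖ ≤ 1) :
    ‖deriv u 0‖ ≤ 1 - ‖u 0‖ ^ 2 := by
  by_cases ha : ‖u 0‖ < 1
  · obtain ⟨v, hvd, hvb, hv0, hv1, _⟩ := schurStep hd hb ha
    have h1 : ‖dslope v 0 0‖ ≤ 1 := dslope_bdd hvd hv0 hvb 0 mem0B'
    rw [dslope_same] at h1
    have h2 : ‖deriv u 0‖
        = ‖deriv v 0‖ * ‖1 - (starRingEnd ℂ) (u 0) * u 0‖ := by
      rw [← norm_mul, hv1]
    rw [h2, one_sub_conj_mul_self]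
    have h3 : (0:ℝ) ≤ 1 - ‖u 0‖ ^ 2 := by nlinarith [norm_nonneg (u 0)]
    rw [Complex.norm_real, Real.norm_eq_abs, _root_.abs_of_nonneg h3]
    nlinarith [norm_nonneg (deriv v 0)]
  · have heq : ‖u 0‖ = 1 := le_antisymm (hb 0 mem0B') (not_lt.mp ha)
    rcases max_dichotomy hd hb with hs | hc
    · exact absurd (hs 0 mem0B') (by rw [heq]; exact lt_irrefl 1)
    · have hude : u =ᶠ[𝓝 (0:ℂ)] (fun _ => u 0) :=
        hc.eventuallyEq_of_mem BnhdsZero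
      rw [hude.deriv_eq, deriv_const]
      simp [heq]

lemma dslope_derivs {u : ℂ → ℂ} (hd : DifferentiableOn ℂ u B) (h0 : u 0 = 0) :
    (dslope u 0) 0 = deriv u 0 ∧
    2 * deriv (dslope u 0) 0 = iteratedDeriv 2 u 0 ∧
    3 * iteratedDeriv 2 (dslope u 0) 0 = iteratedDeriv 3 u 0 := by
  set g := dslope u 0 with hg
  have hgd : DifferentiableOn ℂ g B :=
    (differentiableOn_dslope BnhdsZero).mpr hd
  have hg_an : AnalyticOnNhd ℂ g B := hgd.analyticOnNhd isOpen_ball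
  have hu_eq : u = fun z => z * g z := by
    funext z
    have := sub_smul_dslope u 0 z
    rw [sub_zero, smul_eq_mul, h0, sub_zero] at this
    rw [← this, hg]
  have hid : AnalyticOnNhd ℂ (fun z : ℂ => z) B := analyticOnNhd_id
  have did : deriv (fun z : ℂ => z) 0 = 1 := deriv_id 0
  have did2 : iteratedDeriv 2 (fun z : ℂ => z) 0 = 0 := by
    simp [iteratedDeriv_succ, iteratedDeriv_one]
  have did3 : iteratedDeriv 3 (fun z : ℂ => z) 0 = 0 := by
    simp [iteratedDeriv_succ, iteratedDeriv_one]
  refine ⟨dslope_same u 0, ?_, ?_⟩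
  · have := d2_mul hid hg_an
    rw [← hu_eq] at this
    rw [this, did2, did]
    ring
  · have := d3_mul hid hg_an
    rw [← hu_eq] at this
    rw [this, did3, did2, did]
    ring

lemma schwarz_coeffs {w : ℂ → ℂ} (han : AnalyticOnNhd ℂ w B) (h0 : w 0 = 0)
    (hb : ∀ z ∈ B, ‖w z‖ < 1) :
    ‖deriv w 0‖ ≤ 1 ∧
    ‖iteratedDeriv 2 w 0‖ ≤ 2 * (1 - ‖deriv w 0‖ ^ 2) ∧
    ‖iteratedDeriv 3 w 0‖ * (1 + ‖deriv w 0‖)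
      + (3/2) * ‖iteratedDeriv 2 w 0‖ ^ 2
      ≤ 6 * (1 - ‖deriv w 0‖ ^ 2) * (1 + ‖deriv w 0‖) := by
  have hd : DifferentiableOn ℂ w B := fun z hz => (han z hz).differentiableAt.differentiableWithinAt
  have hble : ∀ z ∈ B, ‖w z‖ ≤ 1 := fun z hz => (hb z hz).le
  set g := dslope w 0 with hgdef
  have hgd : DifferentiableOn ℂ g B := (differentiableOn_dslope BnhdsZero).mpr hd
  have hgb : ∀ z ∈ B, ‖g z‖ ≤ 1 := dslope_bdd hd h0 hble
  obtain ⟨hg0, hg1, hg2⟩ := dslope_derivs hd h0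
  set x := ‖deriv w 0‖ with hx
  have hxg : ‖g 0‖ = x := by rw [hgdef, hg0]
  have h1 : x ≤ 1 := by rw [← hxg]; exact hgb 0 mem0B'
  have hE2 : ‖iteratedDeriv 2 w 0‖ = 2 * ‖deriv g 0‖ := by
    rw [← hg1, norm_mul]
    simp [hgdef]
  have hSP : ‖deriv g 0‖ ≤ 1 - x ^ 2 := by
    have := schwarzPick0 hgd hgb
    rwa [hxg] at this
  refine ⟨h1, by rw [hE2]; linarith, ?_⟩
  by_cases hxlt : x < 1
  · -- main case
    obtain ⟨v, hvd, hvb, hv0, hv1, hv2⟩ := schurStep hgd hgb (by rwa [hxg])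
    have hkd : DifferentiableOn ℂ (dslope v 0) B := (differentiableOn_dslope BnhdsZero).mpr hvd
    have hkb : ∀ z ∈ B, ‖dslope v 0 z‖ ≤ 1 := dslope_bdd hvd hv0 hvb
    obtain ⟨hk0, hk1, _⟩ := dslope_derivs hvd hv0
    have hSPk : ‖deriv (dslope v 0) 0‖
        ≤ 1 - ‖dslope v 0 0‖ ^ 2 := schwarzPick0 hkd hkb
    set S : ℝ := 1 - x ^ 2 with hS
    have hSpos : 0 < S := by nlinarith [norm_nonneg (deriv w 0)]
    have hden : 1 - (starRingEnd ℂ) (g 0) * g 0 = ((S : ℝ) : ℂ) := by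
      rw [one_sub_conj_mul_self, hxg]
    set X1 := ‖deriv g 0‖ with hX1
    set X2 := ‖iteratedDeriv 2 g 0‖ with hX2
    set V1 := ‖deriv v 0‖ with hV1
    set V2 := ‖iteratedDeriv 2 v 0‖ with hV2
    have f1 : V1 * S = X1 := by
      rw [hV1, hX1, ← hv1, hden, norm_mul, Complex.norm_real, Real.norm_eq_abs, _root_.abs_of_nonneg hSpos.le]
    have f2 : V2 ≤ 2 * (1 - V1 ^ 2) := by
      have e1 : V2 = 2 * ‖deriv (dslope v 0) 0‖ := by
        rw [hV2, ← hk1, norm_mul]; simp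
      have e2 : ‖dslope v 0 0‖ = V1 := by rw [hk0]
      rw [e1]
      rw [e2] at hSPk
      linarith
    have f3 : X2 * S ≤ V2 * S ^ 2 + 2 * x * X1 ^ 2 := by
      have key : iteratedDeriv 2 g 0 * ((S:ℝ):ℂ)
          = iteratedDeriv 2 v 0 * ((S:ℝ):ℂ) ^ 2
            - 2 * (starRingEnd ℂ) (g 0) * (deriv g 0) ^ 2 := by
        rw [← hden]
        linear_combination -hv2
      calc X2 * S = ‖iteratedDeriv 2 g 0 * ((S:ℝ):ℂ)‖ := by
            rw [norm_mul, Complex.norm_real, Real.norm_eq_abs, _root_.abs_of_nonneg hSpos.le]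
        _ ≤ ‖iteratedDeriv 2 v 0 * ((S:ℝ):ℂ) ^ 2‖
            + ‖2 * (starRingEnd ℂ) (g 0) * (deriv g 0) ^ 2‖ := by
            rw [key]; exact (norm_sub_le _ _)
        _ = V2 * S ^ 2 + 2 * x * X1 ^ 2 := by
            rw [norm_mul, norm_mul, norm_mul, norm_pow, norm_pow, Complex.norm_real, Real.norm_eq_abs,
              _root_.abs_of_nonneg hSpos.le, Complex.norm_conj, hxg]
            simp [hV2, hX1]
    -- assemble
    have hE3 : ‖iteratedDeriv 3 w 0‖ = 3 * X2 := by
      rw [hX2, ← hg2, norm_mul]; simp [hgdef]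
    rw [hE3, hE2]
    have hX1nn : 0 ≤ X1 := norm_nonneg _
    have hx0 : 0 ≤ x := norm_nonneg _
    have hV1sq : V1 ^ 2 * S ^ 2 = X1 ^ 2 := by rw [← f1]; ring
    have hX2S : X2 * S ≤ 2 * S ^ 2 - 2 * (1 - x) * X1 ^ 2 := by
      have m0 : V2 * S ^ 2 ≤ 2 * (1 - V1 ^ 2) * S ^ 2 :=
        mul_le_mul_of_nonneg_right f2 (sq_nonneg S)
      have m1 : 2 * (1 - V1 ^ 2) * S ^ 2 = 2 * S ^ 2 - 2 * (V1 ^ 2 * S ^ 2) := by ring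
      rw [m1, hV1sq] at m0
      nlinarith [f3, m0, hX1nn, hx0]
    have hfin : (3 * X2 * (1 + x) + (3/2) * (2 * X1) ^ 2) * S ≤ (6 * S * (1 + x)) * S := by
      have m1 : 3 * (1 + x) * (X2 * S) ≤ 3 * (1 + x) * (2 * S ^ 2 - 2 * (1 - x) * X1 ^ 2) :=
        mul_le_mul_of_nonneg_left hX2S (by linarith)
      have e : S = (1 - x) * (1 + x) := by rw [hS]; ring
      calc (3 * X2 * (1 + x) + (3/2) * (2 * X1) ^ 2) * S
          = 3 * (1 + x) * (X2 * S) + 6 * X1 ^ 2 * S := by ring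
        _ ≤ 3 * (1 + x) * (2 * S ^ 2 - 2 * (1 - x) * X1 ^ 2) + 6 * X1 ^ 2 * S := by linarith
        _ = 6 * S ^ 2 * (1 + x) + 6 * X1 ^ 2 * (S - (1 - x) * (1 + x)) := by ring
        _ = (6 * S * (1 + x)) * S := by rw [← e]; ring
    have hmain := le_of_mul_le_mul_right hfin hSpos
    calc 3 * X2 * (1 + x) + 3 / 2 * (2 * X1) ^ 2 ≤ 6 * S * (1 + x) := hmain
      _ = 6 * (1 - x ^ 2) * (1 + x) := by rw [hS]
  · -- |deriv w 0| = 1 : g is constant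
    have hxeq : x = 1 := le_antisymm h1 (not_lt.mp hxlt)
    have hgc : Set.EqOn g (fun _ => g 0) B := by
      rcases max_dichotomy hgd hgb with hs | hc
      · exact absurd (hs 0 mem0B') (by rw [hxg, hxeq]; exact lt_irrefl 1)
      · exact hc
    have hev : g =ᶠ[𝓝 (0:ℂ)] (fun _ => g 0) := hgc.eventuallyEq_of_mem BnhdsZero
    have hdg : deriv g 0 = 0 := by rw [hev.deriv_eq, deriv_const]
    have hd2g : iteratedDeriv 2 g 0 = 0 := by
      rw [hev.iteratedDeriv_eq 2]
      simp [iteratedDeriv_succ, iteratedDeriv_one]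
    have hE3 : ‖iteratedDeriv 3 w 0‖ = 0 := by
      rw [← hg2, hd2g]
      simp
    have hE2' : ‖iteratedDeriv 2 w 0‖ = 0 := by
      rw [← hg1, hdg]
      simp
    rw [hE3, hE2', hxeq]
    norm_num

lemma final_ineq (t c b d : ℝ) (ht0 : 1/4 ≤ t) (ht1 : t ≤ 1/2)
    (hc0 : 0 ≤ c) (hc1 : c ≤ 1) (hb0 : 0 ≤ b) (hb : b ≤ 1 - c^2) (hd0 : 0 ≤ d)
    (hd : d * (1 + c) + b^2 ≤ (1 - c^2) * (1 + c)) :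
    6*c*d + (1 + 4*t)*c^2*b + 4*b^2 + (4*t^2 - t + 1)*c^4
      ≤ 4 + (4*t - 1)^2 / (8 + 20*t - 16*t^2) := by
  have hD : (0:ℝ) < 8 + 20*t - 16*t^2 := by nlinarith
  have hcp : (0:ℝ) < 1 + c := by linarith
  -- step 1: multiply the d-constraint by 6c
  have h6 : 6*c*(d*(1+c)) ≤ 6*c*((1 - c^2)*(1+c) - b^2) := by
    have := mul_le_mul_of_nonneg_left (by linarith : d*(1+c) ≤ (1 - c^2)*(1+c) - b^2)
      (by linarith : (0:ℝ) ≤ 6*c)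
    linarith
  -- step 2: T*(1+c) ≤ M1*(1+c)
  have hM1 : (6*c*d + (1 + 4*t)*c^2*b + 4*b^2 + (4*t^2 - t + 1)*c^4) * (1+c)
      ≤ (4 + (4*t-1)*c^2 + (4*t^2 - 5*t - 2)*c^4) * (1+c) := by
    have t1 : 0 ≤ (4 - 2*c) * ((1 - c^2) - b) * ((1 - c^2) + b) := by
      apply mul_nonneg (mul_nonneg (by linarith) (by linarith)) (by nlinarith)
    have t2 : 0 ≤ (1 + 4*t) * (1 + c) * c^2 * ((1 - c^2) - b) := by
      apply mul_nonneg (mul_nonneg (mul_nonneg (by linarith) (by linarith)) (sq_nonneg c))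
      linarith
    nlinarith [h6, t1, t2]
  have hT : 6*c*d + (1 + 4*t)*c^2*b + 4*b^2 + (4*t^2 - t + 1)*c^4
      ≤ 4 + (4*t-1)*c^2 + (4*t^2 - 5*t - 2)*c^4 :=
    le_of_mul_le_mul_right (by linarith [hM1]) hcp
  -- step 3: complete the square
  have hM2 : 4 + (4*t-1)*c^2 + (4*t^2 - 5*t - 2)*c^4
      ≤ 4 + (4*t - 1)^2 / (8 + 20*t - 16*t^2) := by
    rw [← sub_nonneg]
    have key : 4 + (4*t - 1)^2 / (8 + 20*t - 16*t^2)
        - (4 + (4*t-1)*c^2 + (4*t^2 - 5*t - 2)*c^4)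
        = ((8 + 20*t - 16*t^2)*c^2/2 - (4*t-1))^2 / (8 + 20*t - 16*t^2) := by
      rw [eq_div_iff hD.ne', sub_mul, add_mul, div_mul_cancel₀ _ hD.ne']
      ring
    rw [key]
    positivity
  linarith

lemma coeff_identities {t : ℝ} {f w : ℂ → ℂ} (hf : AnalyticOnNhd ℂ f B)
    (hd1 : deriv f 0 = 1) (hne : ∀ z ∈ B, deriv f z ≠ 0)
    (hw_an : AnalyticOnNhd ℂ w B) (hw0 : w 0 = 0)
    (heq : ∀ z ∈ B, 1 + z * deriv (deriv f) z / deriv f z = 1 + w z + (t:ℂ) * w z ^ 2) :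
    iteratedDeriv 2 f 0 = deriv w 0 ∧
    2 * iteratedDeriv 3 f 0 = 2 * iteratedDeriv 2 f 0 * deriv w 0 + iteratedDeriv 2 w 0
      + 2 * (t:ℂ) * (deriv w 0) ^ 2 ∧
    3 * iteratedDeriv 4 f 0 = 3 * iteratedDeriv 3 f 0 * deriv w 0
      + 3 * iteratedDeriv 2 f 0 * (iteratedDeriv 2 w 0 + 2 * (t:ℂ) * (deriv w 0) ^ 2)
      + iteratedDeriv 3 w 0 + 6 * (t:ℂ) * deriv w 0 * iteratedDeriv 2 w 0 := by
  set F1 := deriv f with hF1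
  set F2 := deriv (deriv f) with hF2
  have hF1an : AnalyticOnNhd ℂ F1 B := hf.deriv
  have hF2an : AnalyticOnNhd ℂ F2 B := hf.deriv.deriv
  set q : ℂ → ℂ := fun z => 1 + (t:ℂ) * w z with hqdef
  have hq_an : AnalyticOnNhd ℂ q B := analyticOnNhd_const.add (analyticOnNhd_const.mul hw_an)
  set G : ℂ → ℂ := fun z => w z * q z with hGdef
  have hG_an : AnalyticOnNhd ℂ G B := hw_an.mul hq_an
  have hid : AnalyticOnNhd ℂ (fun z : ℂ => z) B := analyticOnNhd_id
  -- the functional equation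
  have hPQ : Set.EqOn (fun z => z * F2 z) (fun z => F1 z * G z) B := by
    intro z hz
    have h := heq z hz
    have h2 : z * F2 z / F1 z = w z + (t:ℂ) * w z ^ 2 := by linear_combination h
    rw [div_eq_iff (hne z hz)] at h2
    show z * F2 z = F1 z * G z
    rw [hGdef]
    simp only [hqdef]
    linear_combination h2
  have hev : (fun z => z * F2 z) =ᶠ[𝓝 (0:ℂ)] (fun z => F1 z * G z) :=
    hPQ.eventuallyEq_of_mem BnhdsZero
  -- q derivatives at 0
  have hq0 : q 0 = 1 := by simp [hqdef, hw0]
  have hqEq : Set.EqOn (deriv q) (fun z => (t:ℂ) * deriv w z) B := by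
    intro z hz
    rw [hqdef]
    rw [deriv_const_add, deriv_const_mul _ ((hw_an z hz).differentiableAt)]
  have hq1 : deriv q 0 = (t:ℂ) * deriv w 0 := hqEq mem0B'
  have hq2 : iteratedDeriv 2 q 0 = (t:ℂ) * iteratedDeriv 2 w 0 := by
    have hev2 : deriv q =ᶠ[𝓝 (0:ℂ)] (fun z => (t:ℂ) * deriv w z) :=
      hqEq.eventuallyEq_of_mem BnhdsZero
    rw [iteratedDeriv_succ, iteratedDeriv_one, hev2.deriv_eq,
      deriv_const_mul _ ((hw_an.deriv 0 mem0B').differentiableAt)]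
    simp [iteratedDeriv_succ, iteratedDeriv_one]
  -- G derivatives at 0
  have hG0 : G 0 = 0 := by simp [hGdef, hw0]
  have hG1 : deriv G 0 = deriv w 0 := by
    rw [hGdef]
    rw [d1_mul hw_an hq_an, hw0, hq0]
    ring
  have hG2 : iteratedDeriv 2 G 0 = iteratedDeriv 2 w 0 + 2 * (t:ℂ) * (deriv w 0) ^ 2 := by
    rw [hGdef, d2_mul hw_an hq_an, hw0, hq0, hq1]
    ring
  have hG3 : iteratedDeriv 3 G 0 = iteratedDeriv 3 w 0
      + 6 * (t:ℂ) * deriv w 0 * iteratedDeriv 2 w 0 := by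
    rw [hGdef, d3_mul hw_an hq_an, hw0, hq0, hq1, hq2]
    ring
  -- identities for id
  have did : deriv (fun z : ℂ => z) 0 = 1 := deriv_id 0
  have did2 : iteratedDeriv 2 (fun z : ℂ => z) 0 = 0 := by
    simp [iteratedDeriv_succ, iteratedDeriv_one]
  have did3 : iteratedDeriv 3 (fun z : ℂ => z) 0 = 0 := by
    simp [iteratedDeriv_succ, iteratedDeriv_one]
  -- conversions
  have cF2_0 : F2 0 = iteratedDeriv 2 f 0 := by
    rw [hF2]; simp [iteratedDeriv_succ, iteratedDeriv_one]
  have cF2_1 : deriv F2 0 = iteratedDeriv 3 f 0 := by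
    have h3 : iteratedDeriv 3 f = deriv (deriv (deriv f)) := by
      rw [show (3:ℕ) = 2 + 1 from rfl, iteratedDeriv_succ', iteratedDeriv_succ',
        iteratedDeriv_one]
    rw [hF2, h3]
  have cF2_2 : iteratedDeriv 2 F2 0 = iteratedDeriv 4 f 0 := by
    have h4 : iteratedDeriv 4 f = iteratedDeriv 2 (deriv (deriv f)) := by
      rw [show (4:ℕ) = 3 + 1 from rfl, iteratedDeriv_succ',
        show (3:ℕ) = 2 + 1 from rfl, iteratedDeriv_succ']
    rw [hF2, h4]
  have cF1_0 : F1 0 = 1 := hd1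
  have cF1_1 : deriv F1 0 = iteratedDeriv 2 f 0 := by
    rw [hF1]; simp [iteratedDeriv_succ, iteratedDeriv_one]
  have cF1_2 : iteratedDeriv 2 F1 0 = iteratedDeriv 3 f 0 := by
    have h3 : iteratedDeriv 3 f = iteratedDeriv 2 (deriv f) := by
      rw [show (3:ℕ) = 2 + 1 from rfl, iteratedDeriv_succ']
    rw [hF1, h3]
  have cF1_3 : iteratedDeriv 3 F1 0 = iteratedDeriv 4 f 0 := by
    have h4 : iteratedDeriv 4 f = iteratedDeriv 3 (deriv f) := by
      rw [show (4:ℕ) = 3 + 1 from rfl, iteratedDeriv_succ']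
    rw [hF1, h4]
  refine ⟨?_, ?_, ?_⟩
  · have e1 : deriv (fun z => z * F2 z) 0 = deriv (fun z => F1 z * G z) 0 := hev.deriv_eq
    rw [d1_mul hid hF2an, d1_mul hF1an hG_an, did, hG0, hG1, cF1_0] at e1
    rw [← cF2_0]
    linear_combination e1
  · have e2 : iteratedDeriv 2 (fun z => z * F2 z) 0
        = iteratedDeriv 2 (fun z => F1 z * G z) 0 := hev.iteratedDeriv_eq 2
    rw [d2_mul hid hF2an, d2_mul hF1an hG_an, did, did2, hG0, hG1, hG2,
      cF1_0, cF1_1, cF2_1] at e2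
    linear_combination e2
  · have e3 : iteratedDeriv 3 (fun z => z * F2 z) 0
        = iteratedDeriv 3 (fun z => F1 z * G z) 0 := hev.iteratedDeriv_eq 3
    rw [d3_mul hid hF2an, d3_mul hF1an hG_an, did, did2, did3, hG0, hG1, hG2, hG3,
      cF1_0, cF1_1, cF1_2, cF2_2] at e3
    linear_combination e3

theorem secondHankel_bound_large_t (t : ℝ) (ht0 : 1/4 ≤ t) (ht1 : t ≤ 1/2)
    (f : ℂ → ℂ) (hf : MemC t f) :
    ‖taylorCoeff f 2 * taylorCoeff f 4 - (taylorCoeff f 3) ^ 2‖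
      ≤ (1/144) * (4 + (4*t - 1)^2 / (8 + 20*t - 16*t^2)) := by
  obtain ⟨hf_an, hf0, hf1, hfne, w, ⟨hw_an, hw0, hwb⟩, heqn⟩ := hf
  obtain ⟨I1, I2, I3⟩ := coeff_identities hf_an hf1 hfne hw_an hw0 heqn
  obtain ⟨S1, S2, S3⟩ := schwarz_coeffs hw_an hw0 hwb
  set E1 := deriv w 0 with hE1
  set E2 := iteratedDeriv 2 w 0 with hE2
  set E3 := iteratedDeriv 3 w 0 with hE3
  have hD3v : iteratedDeriv 3 f 0 = (1 + (t:ℂ)) * E1 ^ 2 + E2 / 2 := by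
    linear_combination I2 / 2 + E1 * I1
  have hD4v : iteratedDeriv 4 f 0
      = (1 + 3*(t:ℂ)) * E1 ^ 3 + (3/2 + 2*(t:ℂ)) * E1 * E2 + E3 / 3 := by
    linear_combination I3 / 3 + E1 * hD3v + (E2 + 2*(t:ℂ)*E1^2) * I1
  have hH : taylorCoeff f 2 * taylorCoeff f 4 - taylorCoeff f 3 ^ 2
      = (E1 * E3 + (((1:ℝ)/2 + 2*t : ℝ):ℂ) * E1^2 * E2 - E2^2
          - (((4*t^2 - t + 1 : ℝ)):ℂ) * E1^4) / 144 := by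
    have h2 : taylorCoeff f 2 = iteratedDeriv 2 f 0 / 2 := by
      simp [taylorCoeff, Nat.factorial]
    have h3 : taylorCoeff f 3 = iteratedDeriv 3 f 0 / 6 := by
      simp [taylorCoeff, Nat.factorial]
    have h4 : taylorCoeff f 4 = iteratedDeriv 4 f 0 / 24 := by
      simp [taylorCoeff, Nat.factorial]
    rw [h2, h3, h4, I1, hD3v, hD4v]
    push_cast
    ring
  set x := ‖E1‖ with hx
  set y2 := ‖E2‖ with hy2
  set y3 := ‖E3‖ with hy3
  have hx0 : 0 ≤ x := norm_nonneg _
  have hy20 : 0 ≤ y2 := norm_nonneg _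
  have hy30 : 0 ≤ y3 := norm_nonneg _
  have hcoef1 : (0:ℝ) ≤ 1/2 + 2*t := by linarith
  have hcoef2 : (0:ℝ) ≤ 4*t^2 - t + 1 := by nlinarith
  have habs : ‖taylorCoeff f 2 * taylorCoeff f 4 - taylorCoeff f 3 ^ 2‖
      ≤ (x*y3 + (1/2 + 2*t)*x^2*y2 + y2^2 + (4*t^2 - t + 1)*x^4) / 144 := by
    rw [hH, norm_div]
    have h144 : ‖(144:ℂ)‖ = 144 := by norm_num
    rw [h144]
    have tri : ‖E1 * E3 + (((1:ℝ)/2 + 2*t : ℝ):ℂ) * E1^2 * E2 - E2^2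
          - (((4*t^2 - t + 1 : ℝ)):ℂ) * E1^4‖
        ≤ x*y3 + (1/2 + 2*t)*x^2*y2 + y2^2 + (4*t^2 - t + 1)*x^4 := by
      have t1 : ‖E1 * E3 + (((1:ℝ)/2 + 2*t : ℝ):ℂ) * E1^2 * E2 - E2^2
            - (((4*t^2 - t + 1 : ℝ)):ℂ) * E1^4‖
          ≤ ‖E1 * E3 + (((1:ℝ)/2 + 2*t : ℝ):ℂ) * E1^2 * E2 - E2^2‖
            + ‖(((4*t^2 - t + 1 : ℝ)):ℂ) * E1^4‖ :=
        norm_sub_le _ _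
      have t2 : ‖E1 * E3 + (((1:ℝ)/2 + 2*t : ℝ):ℂ) * E1^2 * E2 - E2^2‖
          ≤ ‖E1 * E3 + (((1:ℝ)/2 + 2*t : ℝ):ℂ) * E1^2 * E2‖
            + ‖E2^2‖ :=
        norm_sub_le _ _
      have t3 : ‖E1 * E3 + (((1:ℝ)/2 + 2*t : ℝ):ℂ) * E1^2 * E2‖
          ≤ ‖E1 * E3‖ + ‖(((1:ℝ)/2 + 2*t : ℝ):ℂ) * E1^2 * E2‖ :=
        norm_add_le _ _
      have v1 : ‖E1 * E3‖ = x * y3 := by rw [norm_mul]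
      have v2 : ‖(((1:ℝ)/2 + 2*t : ℝ):ℂ) * E1^2 * E2‖
          = (1/2 + 2*t) * x^2 * y2 := by
        rw [norm_mul, norm_mul, norm_pow, Complex.norm_real, Real.norm_eq_abs, _root_.abs_of_nonneg hcoef1]
      have v3 : ‖E2^2‖ = y2^2 := by rw [norm_pow]
      have v4 : ‖(((4*t^2 - t + 1 : ℝ)):ℂ) * E1^4‖ = (4*t^2 - t + 1) * x^4 := by
        rw [norm_mul, norm_pow, Complex.norm_real, Real.norm_eq_abs, _root_.abs_of_nonneg hcoef2]
      rw [v4] at t1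
      rw [v3] at t2
      rw [v1, v2] at t3
      linarith
    gcongr
  have hc1 : x ≤ 1 := S1
  have hb : y2/2 ≤ 1 - x^2 := by linarith [S2]
  have hdc : (y3/6)*(1+x) + (y2/2)^2 ≤ (1 - x^2)*(1+x) := by nlinarith [S3]
  have hfi := final_ineq t x (y2/2) (y3/6) ht0 ht1 hx0 hc1 (by linarith) hb
    (by linarith) hdc
  have heqnum : x*y3 + (1/2 + 2*t)*x^2*y2 + y2^2 + (4*t^2 - t + 1)*x^4
      = 6*x*(y3/6) + (1 + 4*t)*x^2*(y2/2) + 4*(y2/2)^2 + (4*t^2 - t + 1)*x^4 := by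
    ring
  calc ‖taylorCoeff f 2 * taylorCoeff f 4 - taylorCoeff f 3 ^ 2‖
      ≤ (x*y3 + (1/2 + 2*t)*x^2*y2 + y2^2 + (4*t^2 - t + 1)*x^4) / 144 := habs
    _ ≤ (4 + (4*t - 1)^2 / (8 + 20*t - 16*t^2)) / 144 := by
        rw [heqnum]; linarith
    _ = (1/144) * (4 + (4*t - 1)^2 / (8 + 20*t - 16*t^2)) := by ring
end

section
/- Let t ∈ ℝ with 0 ≤ t ≤ 1/4, and define f(z) = ∫₀^z exp(ξ²/2 + t·ξ⁴/4) dξ for z ∈ 𝔻 (integration along the segment from 0 to z). Then f ∈ C(φ_t) (with Schwarz function w(z) = z²), its Taylor coefficients satisfy a₂ = 0, a₃ = 1/6, a₄ = 0, and consequently |a₂a₄ − a₃²| = 1/36. Hence the bound |a₂a₄ − a₃²| ≤ 1/36 on C(φ_t) is sharp for 0 ≤ t ≤ 1/4. -/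
open Complex Metric Set

noncomputable def Efun (t : ℝ) : ℂ → ℂ := fun w => Complex.exp (w^2/2 + (t:ℂ)*w^4/4)

lemma hEderiv (t : ℝ) (z : ℂ) : HasDerivAt (Efun t) ((z + t*z^3) * Efun t z) z := by
  have h : HasDerivAt (fun w : ℂ => w^2/2 + (t:ℂ)*w^4/4) (z + t*z^3) z := by
    have h := ((hasDerivAt_pow 2 z).div_const 2).add
      (((hasDerivAt_pow 4 z).const_mul (t:ℂ)).div_const 4)
    refine h.congr_deriv ?_; push_cast; ring
  have := h.cexp
  refine this.congr_deriv ?_; rw [Efun]; ring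

lemma hEcont (t : ℝ) : Continuous (Efun t) := by unfold Efun; fun_prop

lemma hEbound (t : ℝ) (ht0 : 0 ≤ t) {R : ℝ} {w : ℂ} (hw : ‖w‖ ≤ R) :
    ‖Efun t w‖ ≤ Real.exp (R^2/2 + t*R^4/4) := by
  have hR0 : 0 ≤ R := le_trans (norm_nonneg w) hw
  rw [Efun, Complex.norm_exp]
  apply Real.exp_le_exp.2
  calc (w^2/2 + (t:ℂ)*w^4/4).re ≤ ‖w^2/2 + (t:ℂ)*w^4/4‖ := Complex.re_le_norm _
    _ ≤ ‖w^2/2‖ + ‖(t:ℂ)*w^4/4‖ := norm_add_le _ _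
    _ = ‖w‖^2/2 + t*‖w‖^4/4 := by
        simp [norm_div, norm_mul, norm_pow, Complex.norm_real, _root_.abs_of_nonneg ht0]
    _ ≤ R^2/2 + t*R^4/4 := by gcongr

noncomputable def Ffun (t : ℝ) : ℂ → ℂ := fun z => ∫ s in (0:ℝ)..1, z * Efun t ((s:ℂ)*z)

noncomputable def Fder (t : ℝ) : ℂ → ℝ → ℂ := fun x s =>
  Efun t ((s:ℂ)*x) + x * ((((s:ℂ)*x) + (t:ℂ)*((s:ℂ)*x)^3) * Efun t ((s:ℂ)*x) * (s:ℂ))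

lemma hFderAt (t : ℝ) (s : ℝ) (x : ℂ) :
    HasDerivAt (fun y : ℂ => y * Efun t ((s:ℂ)*y)) (Fder t x s) x := by
  have hin : HasDerivAt (fun y : ℂ => (s:ℂ)*y) (s:ℂ) x := by
    simpa using (hasDerivAt_id x).const_mul (s:ℂ)
  have hcomp : HasDerivAt (fun y : ℂ => Efun t ((s:ℂ)*y))
      ((((s:ℂ)*x) + (t:ℂ)*((s:ℂ)*x)^3) * Efun t ((s:ℂ)*x) * (s:ℂ)) x :=
    HasDerivAt.comp (h₂ := Efun t) (h := fun y : ℂ => (s:ℂ)*y) x (hEderiv t ((s:ℂ)*x)) hin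
  have h := (hasDerivAt_id x).mul hcomp
  simp only [id_eq, one_mul] at h
  exact h

lemma hFcont (t : ℝ) (x : ℂ) : Continuous (fun s : ℝ => x * Efun t ((s:ℂ)*x)) := by
  apply continuous_const.mul
  exact (hEcont t).comp (by fun_prop)

lemma hFdercont (t : ℝ) (x : ℂ) : Continuous (fun s : ℝ => Fder t x s) := by
  unfold Fder Efun; fun_prop

lemma hFderiv (t : ℝ) (ht0 : 0 ≤ t) (z : ℂ) : HasDerivAt (Ffun t) (Efun t z) z := by
  set R : ℝ := ‖z‖ + 1 with hR
  have hR0 : 0 ≤ R := by positivity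
  set M : ℝ := Real.exp (R^2/2 + t*R^4/4) with hM
  have hM0 : 0 ≤ M := Real.exp_nonneg _
  set B : ℝ := M + R * ((R + t*R^3) * M * 1) with hB
  have key := intervalIntegral.hasDerivAt_integral_of_dominated_loc_of_deriv_le
    (μ := MeasureTheory.volume) (a := (0:ℝ)) (b := (1:ℝ)) (F := fun x s => x * Efun t ((s:ℂ)*x))
    (F' := Fder t) (x₀ := z) (bound := fun _ => B) (s := ball z 1) (ball_mem_nhds z one_pos)
    (Filter.Eventually.of_forall fun x => ((hFcont t x).aestronglyMeasurable).restrict)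
    ((hFcont t z).intervalIntegrable _ _)
    ((hFdercont t z).aestronglyMeasurable).restrict
    ?_ (intervalIntegrable_const)
    (Filter.Eventually.of_forall fun s _ x _ => hFderAt t s x)
  · obtain ⟨-, hd⟩ := key
    have hval : (∫ s in (0:ℝ)..1, Fder t z s) = Efun t z := by
      have hψ : ∀ s ∈ uIcc (0:ℝ) 1, HasDerivAt (fun u : ℝ => (u:ℂ) * Efun t ((u:ℂ)*z))
          (Fder t z s) s := by
        intro s _
        have hmul : HasDerivAt (fun u : ℂ => u * z) z (s:ℂ) := by
          simpa using (hasDerivAt_id ((s:ℂ))).mul_const z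
        have hc : HasDerivAt (fun u : ℂ => u * Efun t (u*z)) (1 * Efun t ((s:ℂ)*z) +
            (s:ℂ) * ((((s:ℂ)*z) + (t:ℂ)*((s:ℂ)*z)^3) * Efun t ((s:ℂ)*z) * z)) (s:ℂ) := by
          have hcc : HasDerivAt (fun u : ℂ => Efun t (u*z))
              ((((s:ℂ)*z) + (t:ℂ)*((s:ℂ)*z)^3) * Efun t ((s:ℂ)*z) * z) (s:ℂ) :=
            HasDerivAt.comp (h₂ := Efun t) (h := fun u : ℂ => u*z) (s:ℂ) (hEderiv t ((s:ℂ)*z)) hmul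
          have h := (hasDerivAt_id (s:ℂ)).mul hcc
          exact h
        have h2 := hc.comp_ofReal
        convert h2 using 1
        rw [Fder]; ring
      have hFTC := intervalIntegral.integral_eq_sub_of_hasDerivAt hψ
        ((hFdercont t z).intervalIntegrable _ _)
      rw [hFTC]; push_cast; simp
    rwa [hval] at hd
  · refine Filter.Eventually.of_forall fun s hs x hx => ?_
    have hs' : |s| ≤ 1 := by
      rw [Set.uIoc_of_le (by norm_num : (0:ℝ) ≤ 1)] at hs
      rw [abs_le]; constructor <;> [linarith [hs.1]; exact hs.2]
    have hxn : ‖x‖ ≤ R := by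
      rw [mem_ball] at hx
      have h1 : ‖x - z‖ < 1 := by rwa [Complex.dist_eq] at hx
      have h2 : ‖x‖ ≤ ‖x - z‖ + ‖z‖ := by
        simpa using norm_add_le (x - z) z
      linarith
    have hsn : ‖(s:ℂ)‖ ≤ 1 := by rwa [Complex.norm_real, Real.norm_eq_abs]
    have hsx : ‖(s:ℂ)*x‖ ≤ R := by
      rw [norm_mul]
      calc ‖(s:ℂ)‖ * ‖x‖ ≤ 1 * R := mul_le_mul hsn hxn (norm_nonneg x) zero_le_one
        _ = R := one_mul R
    have hE1 : ‖Efun t ((s:ℂ)*x)‖ ≤ M := hEbound t ht0 hsx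
    have h3 : ‖((s:ℂ)*x) + (t:ℂ)*((s:ℂ)*x)^3‖ ≤ R + t*R^3 := by
      refine (norm_add_le _ _).trans ?_
      have : ‖(t:ℂ)*((s:ℂ)*x)^3‖ = t*‖(s:ℂ)*x‖^3 := by
        rw [norm_mul, norm_pow, Complex.norm_real, Real.norm_eq_abs, _root_.abs_of_nonneg ht0]
      rw [this]
      gcongr
    calc ‖Fder t x s‖ ≤ ‖Efun t ((s:ℂ)*x)‖ +
          ‖x‖ * (‖((s:ℂ)*x) + (t:ℂ)*((s:ℂ)*x)^3‖ * ‖Efun t ((s:ℂ)*x)‖ * ‖(s:ℂ)‖) := by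
          rw [Fder]
          refine (norm_add_le _ _).trans ?_
          rw [norm_mul, norm_mul, norm_mul]
      _ ≤ M + R * ((R + t*R^3) * M * 1) := by gcongr
      _ = B := hB.symm

noncomputable def E1fun (t : ℝ) : ℂ → ℂ := fun z => (z + (t:ℂ)*z^3) * Efun t z
noncomputable def E2fun (t : ℝ) : ℂ → ℂ := fun z =>
  (1 + 3*(t:ℂ)*z^2) * Efun t z + (z + (t:ℂ)*z^3) * ((z + (t:ℂ)*z^3) * Efun t z)

lemma hq (t : ℝ) (z : ℂ) : HasDerivAt (fun z : ℂ => z + (t:ℂ)*z^3) (1 + 3*(t:ℂ)*z^2) z := by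
  have := (hasDerivAt_id z).add ((hasDerivAt_pow 3 z).const_mul (t:ℂ))
  refine this.congr_deriv ?_
  push_cast; ring

lemma hE1deriv (t : ℝ) (z : ℂ) : HasDerivAt (E1fun t) (E2fun t z) z := by
  have := (hq t z).mul (hEderiv t z)
  unfold E1fun E2fun
  exact this

lemma hE2deriv0 (t : ℝ) : deriv (E2fun t) 0 = 0 := by
  have hp : HasDerivAt (fun z : ℂ => 1 + 3*(t:ℂ)*z^2) (6*(t:ℂ)*(0:ℂ)) 0 := by
    have := ((hasDerivAt_pow 2 (0:ℂ)).const_mul (3*(t:ℂ))).const_add 1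
    refine this.congr_deriv ?_
    push_cast; ring
  have h := (hp.mul (hEderiv t 0)).add ((hq t 0).mul ((hq t 0).mul (hEderiv t 0)))
  have h2 : HasDerivAt (E2fun t) (6*(t:ℂ)*0 * Efun t 0 + (1 + 3*(t:ℂ)*0^2) * ((0 + (t:ℂ)*0^3) * Efun t 0)
      + ((1 + 3*(t:ℂ)*0^2) * ((0 + (t:ℂ)*0^3) * Efun t 0) +
        (0 + (t:ℂ)*0^3) * ((1 + 3*(t:ℂ)*0^2) * Efun t 0 + (0 + (t:ℂ)*0^3) * ((0 + (t:ℂ)*0^3) * Efun t 0)))) 0 := h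
  rw [h2.deriv]
  simp

lemma Efun_zero (t : ℝ) : Efun t 0 = 1 := by simp [Efun]

theorem secondHankel_sharp_small_t (t : ℝ) (ht0 : 0 ≤ t) (ht1 : t ≤ 1/4)
    (f : ℂ → ℂ)
    (hfdef : ∀ z ∈ ball (0:ℂ) 1,
      f z = ∫ s in (0:ℝ)..1,
        z * Complex.exp (((s : ℂ) * z) ^ 2 / 2 + (t : ℂ) * ((s : ℂ) * z) ^ 4 / 4)) :
    MemC t f ∧
      IsSchwarz (fun z : ℂ => z ^ 2) ∧
      (∀ z ∈ ball (0:ℂ) 1,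
        1 + z * deriv (deriv f) z / deriv f z = 1 + z ^ 2 + (t : ℂ) * (z ^ 2) ^ 2) ∧
      taylorCoeff f 2 = 0 ∧ taylorCoeff f 3 = 1/6 ∧ taylorCoeff f 4 = 0 ∧
      ‖taylorCoeff f 2 * taylorCoeff f 4 - (taylorCoeff f 3) ^ 2‖ = 1/36 := by
  have hFdiff : Differentiable ℂ (Ffun t) := fun z => (hFderiv t ht0 z).differentiableAt
  have heq : EqOn f (Ffun t) (ball (0:ℂ) 1) := fun z hz => by
    rw [hfdef z hz]; rfl
  have h0mem : (0:ℂ) ∈ ball (0:ℂ) 1 := mem_ball_self one_pos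
  have hfe : ∀ z ∈ ball (0:ℂ) 1, f =ᶠ[nhds z] Ffun t := fun z hz =>
    Filter.eventuallyEq_of_mem (isOpen_ball.mem_nhds hz) heq
  have hd1 : ∀ z ∈ ball (0:ℂ) 1, deriv f z = Efun t z := fun z hz =>
    ((hfe z hz).deriv_eq).trans (hFderiv t ht0 z).deriv
  have hd2 : ∀ z ∈ ball (0:ℂ) 1, deriv (deriv f) z = E1fun t z := fun z hz => by
    have h1 : deriv f =ᶠ[nhds z] Efun t :=
      Filter.eventuallyEq_of_mem (isOpen_ball.mem_nhds hz) hd1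
    rw [h1.deriv_eq, (hEderiv t z).deriv]; rfl
  have hd3 : ∀ z ∈ ball (0:ℂ) 1, deriv (deriv (deriv f)) z = E2fun t z := fun z hz => by
    have h1 : deriv (deriv f) =ᶠ[nhds z] E1fun t :=
      Filter.eventuallyEq_of_mem (isOpen_ball.mem_nhds hz) hd2
    rw [h1.deriv_eq, (hE1deriv t z).deriv]
  have hd4 : deriv (deriv (deriv (deriv f))) 0 = 0 := by
    have h1 : deriv (deriv (deriv f)) =ᶠ[nhds 0] E2fun t :=
      Filter.eventuallyEq_of_mem (isOpen_ball.mem_nhds h0mem) hd3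
    rw [h1.deriv_eq, hE2deriv0]
  have hi2 : iteratedDeriv 2 f 0 = 0 := by
    rw [show (2:ℕ) = 0 + 1 + 1 by rfl, iteratedDeriv_succ, iteratedDeriv_succ, iteratedDeriv_zero]
    rw [hd2 0 h0mem]
    simp [E1fun]
  have hi3 : iteratedDeriv 3 f 0 = 1 := by
    rw [show (3:ℕ) = 0 + 1 + 1 + 1 by rfl, iteratedDeriv_succ, iteratedDeriv_succ,
      iteratedDeriv_succ, iteratedDeriv_zero]
    rw [hd3 0 h0mem]
    simp [E2fun, Efun_zero]
  have hi4 : iteratedDeriv 4 f 0 = 0 := by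
    rw [show (4:ℕ) = 0 + 1 + 1 + 1 + 1 by rfl, iteratedDeriv_succ, iteratedDeriv_succ,
      iteratedDeriv_succ, iteratedDeriv_succ, iteratedDeriv_zero]
    exact hd4
  have hODE : ∀ z ∈ ball (0:ℂ) 1,
      1 + z * deriv (deriv f) z / deriv f z = 1 + z ^ 2 + (t : ℂ) * (z ^ 2) ^ 2 := by
    intro z hz
    have hne : Efun t z ≠ 0 := Complex.exp_ne_zero _
    rw [hd2 z hz, hd1 z hz, E1fun]
    field_simp
    ring
  have hSchwarz : IsSchwarz (fun z : ℂ => z ^ 2) := by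
    refine ⟨fun z hz => analyticAt_id.pow 2, by norm_num, fun z hz => ?_⟩
    rw [mem_ball, dist_zero_right] at hz
    rw [norm_pow]
    exact pow_lt_one₀ (norm_nonneg z) hz two_ne_zero
  have ht2 : taylorCoeff f 2 = 0 := by rw [taylorCoeff, hi2]; simp
  have ht3 : taylorCoeff f 3 = 1/6 := by
    rw [taylorCoeff, hi3]; norm_num [Nat.factorial]
  have ht4 : taylorCoeff f 4 = 0 := by rw [taylorCoeff, hi4]; simp
  refine ⟨⟨fun z hz => ((hFdiff.analyticAt z).congr (hfe z hz).symm), ?_, ?_, ?_,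
      ⟨fun z : ℂ => z ^ 2, hSchwarz, hODE⟩⟩, hSchwarz, hODE, ht2, ht3, ht4, ?_⟩
  · rw [hfdef 0 h0mem]; simp
  · rw [hd1 0 h0mem, Efun_zero]
  · exact fun z hz => by rw [hd1 z hz]; exact Complex.exp_ne_zero _
  · rw [ht2, ht3, ht4]; norm_num
end

section
/- Let t ∈ ℝ with 1/4 ≤ t ≤ 1/2. Then there exists f ∈ C(φ_t) with |a₂a₄ − a₃²| = (1/144)·(4 + (4t − 1)²/(8 + 20t − 16t²)); such an f is obtained from the Schwarz function w_x(z) = z·(x − z)/(1 − x·z), where x = √((4t − 1)/(4 + 10t − 8t²)), and its coefficients satisfy a₂ = x/2, a₃ = ((2 + t)x² − 1)/6, a₄ = x·((6 + 7t)x² − (5 + 4t))/24. -/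
open Complex Metric Set

open Filter FormalMultilinearSeries
open scoped NNReal ENNReal

lemma deriv_eqOn' {B : Set ℂ} (hB : IsOpen B) {u v v' : ℂ → ℂ}
    (huv : ∀ z ∈ B, u z = v z) (hv : ∀ z ∈ B, HasDerivAt v (v' z) z) :
    ∀ z ∈ B, deriv u z = v' z := by
  intro z hz
  have h1 : u =ᶠ[nhds z] v := Filter.eventuallyEq_of_mem (hB.mem_nhds hz) huv
  rw [h1.deriv_eq]
  exact (hv z hz).deriv

lemma exists_primitive (g : ℂ → ℂ) (hg : AnalyticOnNhd ℂ g (ball (0:ℂ) 1)) :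
    ∃ F : ℂ → ℂ, F 0 = 0 ∧ AnalyticOnNhd ℂ F (ball (0:ℂ) 1) ∧
      ∀ z ∈ ball (0:ℂ) 1, HasDerivAt F (g z) z := by
  set p : FormalMultilinearSeries ℂ ℂ ℂ := cauchyPowerSeries g 0 (1/2 : ℝ≥0) with hp_def
  have hp : ∀ r : ℝ≥0, 0 < r → (r : ℝ) < 1 → HasFPowerSeriesOnBall g p 0 r := by
    intro r hr0 hr1
    have hd : DifferentiableOn ℂ g (closedBall (0:ℂ) r) :=
      (hg.mono (closedBall_subset_ball (by exact_mod_cast hr1))).differentiableOn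
    have h1 : HasFPowerSeriesOnBall g (cauchyPowerSeries g 0 r) 0 r :=
      hd.hasFPowerSeriesOnBall hr0
    have hd2 : DifferentiableOn ℂ g (closedBall (0:ℂ) ((1/2 : ℝ≥0) : ℝ)) :=
      (hg.mono (closedBall_subset_ball (by norm_num))).differentiableOn
    have h2 : HasFPowerSeriesOnBall g p 0 (1/2 : ℝ≥0) :=
      hd2.hasFPowerSeriesOnBall (by norm_num)
    rwa [h2.hasFPowerSeriesAt.eq_formalMultilinearSeries h1.hasFPowerSeriesAt]
  have hp_half := hp (1/2) (by norm_num) (by norm_num)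
  set c : ℕ → ℂ := fun n => match n with
    | 0 => 0
    | (m+1) => p.coeff m / (m+1) with hc_def
  set q : FormalMultilinearSeries ℂ ℂ ℂ := ofScalars ℂ c with hq_def
  have hqcoeff : ∀ n, q.coeff n = c n := by
    intro n
    show (ofScalars ℂ c n) (fun _ => (1:ℂ)) = c n
    rw [ofScalars_apply_eq]
    simp
  have hqnorm : ∀ n, ‖q n‖ = ‖c n‖ := fun n => ofScalars_norm ℂ c n
  have hqrad : 1 ≤ q.radius := by
    apply ENNReal.le_of_forall_nnreal_lt
    intro r hr1
    have hr1' : (r : ℝ) < 1 := by exact_mod_cast hr1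
    have hr' : (r : ℝ≥0) < ((r + 1) / 2 : ℝ≥0) := by
      rw [← NNReal.coe_lt_coe]
      push_cast
      linarith
    have hr'1 : (((r + 1) / 2 : ℝ≥0) : ℝ) < 1 := by
      push_cast
      linarith [r.coe_nonneg]
    have hpr : (r : ℝ≥0∞) < p.radius := by
      refine lt_of_lt_of_le ?_ (hp ((r+1)/2) (by positivity) hr'1).r_le
      exact_mod_cast hr'
    have hsum := p.summable_norm_mul_pow hpr
    apply q.le_radius_of_summable
    rw [← summable_nat_add_iff 1]
    apply Summable.of_nonneg_of_le (fun n => by positivity) _ hsum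
    intro n
    have h1 : ‖q (n+1)‖ ≤ ‖p n‖ := by
      rw [hqnorm, p.norm_apply_eq_norm_coef]
      simp only [hc_def]
      rw [norm_div]
      apply div_le_of_le_mul₀ (by positivity) (norm_nonneg _)
      have : (1:ℝ) ≤ ‖((n:ℂ)+1)‖ := by
        rw [show ((n:ℂ)+1) = ((n+1 : ℕ) : ℂ) by push_cast; ring, Complex.norm_natCast]
        exact_mod_cast Nat.one_le_iff_ne_zero.2 (Nat.succ_ne_zero n)
      nlinarith [norm_nonneg (p.coeff n)]
    calc ‖q (n+1)‖ * (r:ℝ) ^ (n+1) ≤ ‖p n‖ * (r:ℝ)^(n+1) := by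
          apply mul_le_mul_of_nonneg_right h1 (by positivity)
      _ ≤ ‖p n‖ * (r:ℝ)^n := by
          apply mul_le_mul_of_nonneg_left _ (norm_nonneg _)
          apply pow_le_pow_of_le_one r.coe_nonneg hr1'.le (by omega)
  have hQ : HasFPowerSeriesOnBall q.sum q 0 1 :=
    (q.hasFPowerSeriesOnBall (lt_of_lt_of_le one_pos hqrad)).mono one_pos hqrad
  refine ⟨q.sum, ?_, ?_, ?_⟩
  · have := hQ.coeff_zero (fun _ => 0)
    rw [← this]
    simp [hq_def, ofScalars_apply_eq, hc_def]
  · have := hQ.analyticOnNhd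
    intro z hz
    apply this
    simp only [EMetric.mem_ball, edist_zero_right]
    rw [mem_ball, dist_zero_right] at hz
    exact_mod_cast (by simpa [enorm_eq_nnnorm] using (by exact_mod_cast hz : (‖z‖₊ : ℝ≥0∞) < ((1:ℝ≥0) : ℝ≥0∞)))
  · intro z hz
    rw [mem_ball, dist_zero_right] at hz
    have hz' : z ∈ Metric.eball (0:ℂ) 1 := by
      simp only [EMetric.mem_ball, edist_zero_right]
      exact_mod_cast (by simpa [enorm_eq_nnnorm] using (by exact_mod_cast hz : (‖z‖₊ : ℝ≥0∞) < ((1:ℝ≥0) : ℝ≥0∞)))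
    have hdiffF : DifferentiableAt ℂ q.sum z := (hQ.analyticOnNhd z hz').differentiableAt
    have hkey : deriv q.sum z = g z := by
      rcases eq_or_ne z 0 with rfl | hz0
      · have hd0 : deriv q.sum 0 = q.coeff 1 := hQ.hasFPowerSeriesAt.deriv
        have hg0 : g 0 = p.coeff 0 := by
          have := hp_half.coeff_zero (fun _ => 1)
          rw [← this]
          rfl
        rw [hd0, hqcoeff, hg0]
        show p.coeff 0 / ((0:ℕ)+1) = p.coeff 0
        simp
      · -- use diagonal sum trick
        have hdF := hQ.fderiv
        have hs1 := hdF.hasSum hz'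
        have hs2 : HasSum (fun n => (q.derivSeries n fun _ => z) z) (fderiv ℂ q.sum (0+z) z) :=
          hs1.mapL (ContinuousLinearMap.apply ℂ ℂ z)
        have hterm : ∀ n, (q.derivSeries n fun _ => z) z = p.coeff n * z^(n+1) := by
          intro n
          rw [derivSeries_apply_diag]
          have hcn : c (n+1) = p.coeff n / ((n:ℂ)+1) := rfl
          rw [hq_def, ofScalars_apply_eq, hcn]
          have hne : ((n:ℂ)+1) ≠ 0 := Nat.cast_add_one_ne_zero n
          simp only [nsmul_eq_mul, smul_eq_mul]; push_cast
          field_simp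
        -- sum of g
        set r : ℝ≥0 := ⟨(‖z‖+1)/2, by positivity⟩ with hr_def
        have hzr : ‖z‖ < (r:ℝ) := by
          show ‖z‖ < (‖z‖+1)/2; linarith
        have hr1 : (r:ℝ) < 1 := by
          show (‖z‖+1)/2 < 1; linarith [norm_nonneg z]
        have hrpos : 0 < r := by
          rw [← NNReal.coe_lt_coe, NNReal.coe_zero]
          show (0:ℝ) < (‖z‖+1)/2; positivity
        have hpr := hp r hrpos hr1
        have hzr' : z ∈ Metric.eball (0:ℂ) r := by
          simp only [EMetric.mem_ball, edist_zero_right]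
          exact_mod_cast (by simpa [enorm_eq_nnnorm] using (by exact_mod_cast hzr : (‖z‖₊ : ℝ≥0∞) < ((r:ℝ≥0) : ℝ≥0∞)))
        have hs3 := (hpr.hasSum hzr').mul_left z
        have hs3' : HasSum (fun n => p.coeff n * z^(n+1)) (z * g (0+z)) := by
          refine hs3.congr_fun ?_
          intro n
          rw [p.apply_eq_pow_smul_coeff]
          simp [smul_eq_mul]
          ring
        have hs2' : HasSum (fun n => p.coeff n * z^(n+1)) (fderiv ℂ q.sum (0+z) z) := by
          refine hs2.congr_fun ?_
          intro n
          exact (hterm n).symm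
        have heq := hs2'.unique hs3'
        have hfd : fderiv ℂ q.sum (0+z) z = z * deriv q.sum z := by
          rw [zero_add]
          rw [show fderiv ℂ q.sum z z = fderiv ℂ q.sum z (z • 1) by simp [smul_eq_mul]]
          rw [(fderiv ℂ q.sum z).map_smul, smul_eq_mul, fderiv_apply_one_eq_deriv]
        rw [hfd, zero_add] at heq
        exact mul_left_cancel₀ hz0 heq
    rw [← hkey]
    exact hdiffF.hasDerivAt

set_option maxHeartbeats 1000000 in
theorem secondHankel_sharp_large_t (t : ℝ) (ht0 : 1/4 ≤ t) (ht1 : t ≤ 1/2) :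
    ∃ f : ℂ → ℂ, MemC t f ∧
      (let x : ℝ := Real.sqrt ((4*t - 1) / (4 + 10*t - 8*t^2))
       (∀ z ∈ ball (0:ℂ) 1,
          1 + z * deriv (deriv f) z / deriv f z
            = 1 + (z * ((x : ℂ) - z) / (1 - (x : ℂ) * z))
              + (t : ℂ) * (z * ((x : ℂ) - z) / (1 - (x : ℂ) * z)) ^ 2) ∧
        taylorCoeff f 2 = (x : ℂ) / 2 ∧
        taylorCoeff f 3 = ((2 + (t : ℂ)) * (x : ℂ) ^ 2 - 1) / 6 ∧
        taylorCoeff f 4 = (x : ℂ) * ((6 + 7 * (t : ℂ)) * (x : ℂ) ^ 2 - (5 + 4 * (t : ℂ))) / 24) ∧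
      ‖taylorCoeff f 2 * taylorCoeff f 4 - (taylorCoeff f 3) ^ 2‖
        = (1/144) * (4 + (4*t - 1)^2 / (8 + 20*t - 16*t^2)) := by
  set x : ℝ := Real.sqrt ((4*t - 1) / (4 + 10*t - 8*t^2)) with hx_def
  have hden : (0:ℝ) < 4 + 10*t - 8*t^2 := by nlinarith
  have hnum : (0:ℝ) ≤ 4*t - 1 := by linarith
  have harg0 : 0 ≤ (4*t-1)/(4+10*t-8*t^2) := div_nonneg hnum hden.le
  have hx0 : 0 ≤ x := Real.sqrt_nonneg _
  have hx2 : x^2 = (4*t-1)/(4+10*t-8*t^2) := Real.sq_sqrt harg0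
  have harg1 : (4*t-1)/(4+10*t-8*t^2) < 1 := by rw [div_lt_one hden]; nlinarith
  have hx1 : x < 1 := by nlinarith
  set X : ℂ := (x:ℂ) with hX_def
  set T : ℂ := (t:ℂ) with hT_def
  set B := ball (0:ℂ) 1 with hB_def
  have h0B : (0:ℂ) ∈ B := mem_ball_self one_pos
  have habsX : ‖X‖ = x := by rw [hX_def, Complex.norm_real, Real.norm_eq_abs, _root_.abs_of_nonneg hx0]
  set h : ℂ → ℂ := fun z => ((X - z) * (1 - X*z) + T*z*(X - z)^2) / (1 - X*z)^2 with hh_def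
  set h₁ : ℂ → ℂ := fun z =>
    ((X^2 - 1) * (1 - X*z) + T*((X - z)*(X - 3*z)*(1 - X*z) + 2*X*z*(X - z)^2)) / (1 - X*z)^3
    with hh1_def
  set h₂ : ℂ → ℂ := fun z =>
    (2*X*(X^2-1)*(1 - X*z) + T*((6*z - 4*X)*(1 - X*z)^2
      + 4*X*(X - z)*(X - 3*z)*(1 - X*z) + 6*X^2*z*(X - z)^2)) / (1 - X*z)^4 with hh2_def
  have hza : ∀ z ∈ B, ‖z‖ < 1 := by
    intro z hz
    rw [hB_def, mem_ball, dist_zero_right] at hz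
    exact hz
  have hD : ∀ z ∈ B, (1 : ℂ) - X*z ≠ 0 := by
    intro z hz hcon
    have h1 : X*z = 1 := by linear_combination -hcon
    have h2 : ‖X*z‖ = 1 := by rw [h1]; simp
    rw [norm_mul, habsX] at h2
    have := hza z hz
    nlinarith [norm_nonneg z]
  have hd_sub : ∀ z : ℂ, HasDerivAt (fun w => X - w) (-1) z := by
    intro z; simpa using (hasDerivAt_id z).const_sub X
  have hd_D : ∀ z : ℂ, HasDerivAt (fun w : ℂ => 1 - X*w) (-X) z := by
    intro z; simpa using ((hasDerivAt_id z).const_mul X).const_sub 1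
  have hd_3 : ∀ z : ℂ, HasDerivAt (fun w : ℂ => X - 3*w) (-3) z := by
    intro z; simpa using ((hasDerivAt_id z).const_mul 3).const_sub X
  have hh₁d : ∀ z ∈ B, HasDerivAt h (h₁ z) z := by
    intro z hz
    have hDne := hD z hz
    have hN : HasDerivAt (fun w => (X - w) * (1 - X*w) + T*w*(X - w)^2)
        (((-1) * (1 - X*z) + (X - z)*(-X))
          + ((T*1) * (X - z)^2 + (T*z)*(2*(X - z)^(2-1)*(-1)))) z :=
      ((hd_sub z).mul (hd_D z)).add
        (((hasDerivAt_id z).const_mul T).mul ((hd_sub z).pow 2))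
    have hD2 : HasDerivAt (fun w : ℂ => (1 - X*w)^2) (2*(1 - X*z)^(2-1)*(-X)) z := (hd_D z).pow 2
    have hdiv := hN.div hD2 (pow_ne_zero 2 hDne)
    rw [hh1_def]
    refine hdiv.congr_deriv ?_
    field_simp
    ring
  have hh₂d : ∀ z ∈ B, HasDerivAt h₁ (h₂ z) z := by
    intro z hz
    have hDne := hD z hz
    have hM : HasDerivAt (fun w =>
        (X^2 - 1) * (1 - X*w) + T*((X - w)*(X - 3*w)*(1 - X*w) + 2*X*w*(X - w)^2))
        ((X^2-1) * (-X)
          + T * ((((-1)*(X - 3*z) + (X - z)*(-3))*(1 - X*z) + ((X - z)*(X - 3*z))*(-X))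
            + ((2*X*1) * (X - z)^2 + (2*X*z)*(2*(X - z)^(2-1)*(-1))))) z := by
      refine HasDerivAt.add ?_ ?_
      · simpa using (hd_D z).const_mul (X^2-1)
      · refine HasDerivAt.const_mul T (HasDerivAt.add ?_ ?_)
        · exact ((hd_sub z).mul (hd_3 z)).mul (hd_D z)
        · exact ((hasDerivAt_id z).const_mul (2*X)).mul ((hd_sub z).pow 2)
    have hD3 : HasDerivAt (fun w : ℂ => (1 - X*w)^3) (3*(1 - X*z)^(3-1)*(-X)) z := (hd_D z).pow 3
    have hdiv := hM.div hD3 (pow_ne_zero 3 hDne)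
    rw [hh2_def]
    refine hdiv.congr_deriv ?_
    field_simp
    ring
  have hhA : AnalyticOnNhd ℂ h B :=
    DifferentiableOn.analyticOnNhd
      (fun z hz => (hh₁d z hz).differentiableAt.differentiableWithinAt) isOpen_ball
  obtain ⟨G, hG0, hGA, hGd⟩ := exists_primitive h hhA
  set E : ℂ → ℂ := fun z => Complex.exp (G z) with hE_def
  have hEd : ∀ z ∈ B, HasDerivAt E (E z * h z) z := fun z hz => (hGd z hz).cexp
  have hEA : AnalyticOnNhd ℂ E B :=
    DifferentiableOn.analyticOnNhd
      (fun z hz => (hEd z hz).differentiableAt.differentiableWithinAt) isOpen_ball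
  obtain ⟨f, hf0, hfA, hfd⟩ := exists_primitive E hEA
  have hderivf : ∀ z ∈ B, deriv f z = E z := fun z hz => (hfd z hz).deriv
  have hE1d : ∀ z ∈ B, HasDerivAt (fun w => E w * h w) (E z * ((h z)^2 + h₁ z)) z := by
    intro z hz
    have := (hEd z hz).mul (hh₁d z hz)
    refine this.congr_deriv ?_
    ring
  have hE2d : ∀ z ∈ B, HasDerivAt (fun w => E w * ((h w)^2 + h₁ w))
      (E z * ((h z)^3 + 3*h z*h₁ z + h₂ z)) z := by
    intro z hz
    have hp2 : HasDerivAt (fun w => (h w)^2 + h₁ w) (2*(h z)^(2-1)*(h₁ z) + h₂ z) z :=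
      ((hh₁d z hz).pow 2).add (hh₂d z hz)
    have := (hEd z hz).mul hp2
    refine this.congr_deriv ?_
    ring
  have hd1 : ∀ z ∈ B, deriv (deriv f) z = E z * h z :=
    deriv_eqOn' isOpen_ball hderivf hEd
  have hd2 : ∀ z ∈ B, deriv (deriv (deriv f)) z = E z * ((h z)^2 + h₁ z) :=
    deriv_eqOn' isOpen_ball hd1 hE1d
  have hd3 : ∀ z ∈ B, deriv (deriv (deriv (deriv f))) z
      = E z * ((h z)^3 + 3*h z*h₁ z + h₂ z) :=
    deriv_eqOn' isOpen_ball hd2 hE2d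
  have hE0 : E 0 = 1 := by rw [hE_def]; simp [hG0]
  have hh0 : h 0 = X := by rw [hh_def]; simp
  have hh10 : h₁ 0 = (1+T)*X^2 - 1 := by rw [hh1_def]; simp; ring
  have hh20 : h₂ 0 = (4*T+2)*X^3 - (4*T+2)*X := by rw [hh2_def]; simp; ring
  have ht2 : taylorCoeff f 2 = X/2 := by
    have e2 : iteratedDeriv 2 f = deriv (deriv f) := by
      rw [iteratedDeriv_succ, iteratedDeriv_succ, iteratedDeriv_zero]
    unfold taylorCoeff
    rw [e2, hd1 0 h0B, hE0, hh0]
    norm_num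
  have ht3 : taylorCoeff f 3 = ((2 + T) * X^2 - 1) / 6 := by
    have e3 : iteratedDeriv 3 f = deriv (deriv (deriv f)) := by
      rw [iteratedDeriv_succ, iteratedDeriv_succ, iteratedDeriv_succ, iteratedDeriv_zero]
    unfold taylorCoeff
    rw [e3, hd2 0 h0B, hE0, hh0, hh10]
    norm_num [Nat.factorial]
    ring
  have ht4 : taylorCoeff f 4 = X * ((6 + 7*T) * X^2 - (5 + 4*T)) / 24 := by
    have e4 : iteratedDeriv 4 f = deriv (deriv (deriv (deriv f))) := by
      rw [iteratedDeriv_succ, iteratedDeriv_succ, iteratedDeriv_succ, iteratedDeriv_succ,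
        iteratedDeriv_zero]
    unfold taylorCoeff
    rw [e4, hd3 0 h0B, hE0, hh0, hh10, hh20]
    norm_num [Nat.factorial]
    ring
  set w : ℂ → ℂ := fun z => z * (X - z) / (1 - X*z) with hw_def
  have hODE : ∀ z ∈ B, 1 + z * deriv (deriv f) z / deriv f z = 1 + w z + T * (w z)^2 := by
    intro z hz
    rw [hderivf z hz, hd1 z hz]
    have hEne : E z ≠ 0 := Complex.exp_ne_zero _
    have hDne := hD z hz
    simp only [hw_def, hh_def]
    have hDne' : 1 - z*X ≠ 0 := by rwa [mul_comm]
    field_simp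
    ring
  have hwA : AnalyticOnNhd ℂ w B := by
    apply DifferentiableOn.analyticOnNhd _ isOpen_ball
    intro z hz
    apply DifferentiableAt.differentiableWithinAt
    rw [hw_def]
    exact (differentiableAt_id.mul ((differentiableAt_const X).sub differentiableAt_id)).div
      ((differentiableAt_const 1).sub ((differentiableAt_const X).mul differentiableAt_id))
      (hD z hz)
  have hw0 : w 0 = 0 := by rw [hw_def]; simp
  have hwlt : ∀ z ∈ B, ‖w z‖ < 1 := by
    intro z hz
    have hzlt := hza z hz
    have key : Complex.normSq (1 - X*z) - Complex.normSq (X - z)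
        = (1 - x^2) * (1 - Complex.normSq z) := by
      rw [hX_def]
      simp only [Complex.normSq_apply, Complex.sub_re, Complex.sub_im, Complex.mul_re,
        Complex.mul_im, Complex.one_re, Complex.one_im, Complex.ofReal_re, Complex.ofReal_im]
      ring
    have hnz : Complex.normSq z < 1 := by
      rw [← Complex.sq_norm]; nlinarith [norm_nonneg z]
    have h2 : Complex.normSq (X - z) < Complex.normSq (1 - X*z) := by
      nlinarith [Complex.normSq_nonneg z]
    have habs : ‖X - z‖ < ‖1 - X*z‖ := by
      have e1 := Complex.sq_norm (X - z)
      have e2 := Complex.sq_norm (1 - X*z)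
      nlinarith [norm_nonneg (X - z), norm_nonneg (1 - X*z)]
    have hpos : 0 < ‖1 - X*z‖ :=
      lt_of_le_of_lt (norm_nonneg (X - z)) habs
    have hwabs : ‖w z‖
        = ‖z‖ * ‖X - z‖ / ‖1 - X*z‖ := by
      rw [hw_def]; simp [norm_div, norm_mul]
    rw [hwabs, div_lt_one hpos]
    nlinarith [norm_nonneg z, norm_nonneg (X - z)]
  have hMem : MemC t f := by
    refine ⟨hfA, hf0, ?_, ?_, w, ⟨hwA, hw0, hwlt⟩, hODE⟩
    · rw [hderivf 0 h0B]; exact hE0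
    · intro z hz; rw [hderivf z hz]; exact Complex.exp_ne_zero _
  -- final value
  set Δ : ℝ := x^2*((6+7*t)*x^2 - (5+4*t))/48 - (((2+t)*x^2-1)/6)^2 with hΔ_def
  have hcast : taylorCoeff f 2 * taylorCoeff f 4 - taylorCoeff f 3 ^ 2 = (Δ:ℂ) := by
    rw [ht2, ht3, ht4, hΔ_def, hX_def, hT_def]
    push_cast
    ring
  have h2dne : (8 + 20*t - 16*t^2) ≠ 0 := by nlinarith
  have hΔval : Δ = -((1/144) * (4 + (4*t - 1)^2 / (8 + 20*t - 16*t^2))) := by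
    rw [hΔ_def, hx2]
    have hn1 : 4 + t*10 - t^2*8 ≠ 0 := by nlinarith
    have hn2 : 8 + t*20 - t^2*16 ≠ 0 := by nlinarith
    field_simp
    ring
  have hrhs0 : 0 ≤ (1/144 : ℝ) * (4 + (4*t - 1)^2 / (8 + 20*t - 16*t^2)) := by
    have hq : 0 ≤ (4*t-1)^2/(8+20*t-16*t^2) := div_nonneg (sq_nonneg _) (by nlinarith)
    linarith
  refine ⟨f, hMem, ⟨hODE, ht2, ht3, ht4⟩, ?_⟩
  rw [hcast, Complex.norm_real, Real.norm_eq_abs, hΔval, abs_neg, _root_.abs_of_nonneg hrhs0]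
end

section
/- Let t ∈ ℝ with 0 ≤ t ≤ 1/2, and define f(z) = ∫₀^z exp(ξ³/3 + t·ξ⁶/6) dξ for z ∈ 𝔻 (integration along the segment from 0 to z). Then f ∈ C(φ_t) (with Schwarz function w(z) = z³), its Taylor coefficients satisfy a₂ = 0, a₃ = 0, a₄ = 1/12, a₅ = 0, and consequently |a₃(a₂a₄ − a₃²) − a₄(a₄ − a₂a₃) + a₅(a₃ − a₂²)| = 1/144. Hence the bound |H₃(1)| ≤ 1/144 on C(φ_t) is sharp. -/
open Complex Metric Set

/-! ### Auxiliary function `Fa c z = exp (z^3/3 + c z^6/6)` -/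

noncomputable def Fa (c z : ℂ) : ℂ := Complex.exp (z ^ 3 / 3 + c * z ^ 6 / 6)

lemma Fa_def (c z : ℂ) : Fa c z = Complex.exp (z ^ 3 / 3 + c * z ^ 6 / 6) := rfl

lemma Fa_zero (c : ℂ) : Fa c 0 = 1 := by
  rw [Fa_def]
  norm_num [Complex.exp_zero]

lemma Fa_ne_zero (c z : ℂ) : Fa c z ≠ 0 := Complex.exp_ne_zero _

lemma hasDerivAt_Fa (c z : ℂ) :
    HasDerivAt (Fa c) ((z ^ 2 + c * z ^ 5) * Fa c z) z := by
  have hu : HasDerivAt (fun z : ℂ => z ^ 3 / 3 + c * z ^ 6 / 6) (z ^ 2 + c * z ^ 5) z := by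
    have h := ((hasDerivAt_pow 3 z).div_const 3).add
      (((hasDerivAt_pow 6 z).const_mul c).div_const 6)
    refine h.congr_deriv ?_
    push_cast
    ring
  have h := hu.cexp
  have heq : (fun z : ℂ => Complex.exp (z ^ 3 / 3 + c * z ^ 6 / 6)) = Fa c := rfl
  rw [heq] at h
  refine h.congr_deriv ?_
  rw [Fa_def]
  ring

lemma hasDerivAt_mul_Fa (c : ℂ) {Q Q' : ℂ → ℂ} (hQ : ∀ z, HasDerivAt Q (Q' z) z) (z : ℂ) :
    HasDerivAt (fun z => Q z * Fa c z) ((Q' z + Q z * (z ^ 2 + c * z ^ 5)) * Fa c z) z := by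
  have h := (hQ z).mul (hasDerivAt_Fa c z)
  refine h.congr_deriv ?_
  ring

lemma hmono (a : ℂ) (n : ℕ) (z : ℂ) :
    HasDerivAt (fun z : ℂ => a * z ^ n) (a * (n * z ^ (n - 1))) z :=
  (hasDerivAt_pow n z).const_mul a

/-! ### The derivative of `z ↦ ∫ s in 0..1, z * Fa c (s z)` is `Fa c z` -/

lemma hasDerivAt_inner (c : ℂ) (s : ℝ) (z : ℂ) :
    HasDerivAt (fun z : ℂ => z * Fa c ((s : ℂ) * z))
      (Fa c ((s : ℂ) * z)
        + z * (((((s : ℂ) * z) ^ 2 + c * ((s : ℂ) * z) ^ 5) * Fa c ((s : ℂ) * z)) * (s : ℂ))) z := by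
  have h1 : HasDerivAt (fun z : ℂ => (s : ℂ) * z) (s : ℂ) z := by
    simpa using (hasDerivAt_id' (x := z)).const_mul (s : ℂ)
  have hinner : HasDerivAt (fun z : ℂ => Fa c ((s : ℂ) * z))
      (((((s : ℂ) * z) ^ 2 + c * ((s : ℂ) * z) ^ 5) * Fa c ((s : ℂ) * z)) * (s : ℂ)) z :=
    (hasDerivAt_Fa c ((s : ℂ) * z)).comp z h1
  have h := (hasDerivAt_id' (x := z)).mul hinner
  refine h.congr_deriv ?_
  ring

lemma continuous_inner' (c : ℂ) :
    Continuous (fun p : ℝ × ℂ =>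
      Fa c ((p.1 : ℂ) * p.2)
        + p.2 * (((((p.1 : ℂ) * p.2) ^ 2 + c * ((p.1 : ℂ) * p.2) ^ 5) * Fa c ((p.1 : ℂ) * p.2))
            * (p.1 : ℂ))) := by
  simp only [Fa_def]
  fun_prop

lemma hasDerivAt_g (c x₀ : ℂ) :
    HasDerivAt (fun z : ℂ => ∫ s in (0:ℝ)..1, z * Fa c ((s : ℂ) * z)) (Fa c x₀) x₀ := by
  set G' : ℂ → ℝ → ℂ := fun z s =>
    Fa c ((s : ℂ) * z)
      + z * (((((s : ℂ) * z) ^ 2 + c * ((s : ℂ) * z) ^ 5) * Fa c ((s : ℂ) * z)) * (s : ℂ)) with hG'def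
  obtain ⟨C, hC⟩ := (isCompact_uIcc.prod (isCompact_closedBall x₀ 1)).exists_bound_of_continuousOn
    (s := uIcc (0:ℝ) 1 ×ˢ closedBall x₀ 1)
    (f := fun p : ℝ × ℂ => G' p.2 p.1) (continuous_inner' c).continuousOn
  have hcontG : ∀ x : ℂ, Continuous fun s : ℝ => x * Fa c ((s : ℂ) * x) := by
    intro x; simp only [Fa_def]; fun_prop
  have hcontG' : Continuous fun s : ℝ => G' x₀ s := by
    simp only [hG'def, Fa_def]; fun_prop
  have main := intervalIntegral.hasDerivAt_integral_of_dominated_loc_of_deriv_le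
    (F := fun z s => z * Fa c ((s : ℂ) * z)) (F' := G') (x₀ := x₀)
    (a := 0) (b := 1) (bound := fun _ => C) (ball_mem_nhds x₀ one_pos)
    (Filter.Eventually.of_forall fun x => ((hcontG x).aestronglyMeasurable).restrict)
    ((hcontG x₀).intervalIntegrable (μ := MeasureTheory.volume) 0 1)
    (hcontG'.aestronglyMeasurable).restrict
    (Filter.Eventually.of_forall fun s hs x hx =>
      hC (s, x) ⟨Set.uIoc_subset_uIcc hs, ball_subset_closedBall hx⟩)
    (intervalIntegrable_const)
    (Filter.Eventually.of_forall fun s _ x _ => hasDerivAt_inner c s x)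
  have key : (∫ s in (0:ℝ)..1, G' x₀ s) = Fa c x₀ := by
    have hψ : ∀ s ∈ uIcc (0:ℝ) 1,
        HasDerivAt (fun s : ℝ => (s : ℂ) * Fa c ((s : ℂ) * x₀)) (G' x₀ s) s := by
      intro s _
      have hmc : HasDerivAt (fun w : ℂ => w * x₀) x₀ (s : ℂ) := hasDerivAt_mul_const x₀
      have hin : HasDerivAt (fun w : ℂ => Fa c (w * x₀))
          (((((s : ℂ) * x₀) ^ 2 + c * ((s : ℂ) * x₀) ^ 5) * Fa c ((s : ℂ) * x₀)) * x₀) (s : ℂ) :=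
        (hasDerivAt_Fa c ((s : ℂ) * x₀)).comp (h₂ := Fa c) (s : ℂ) hmc
      have hc2 : HasDerivAt (fun w : ℂ => w * Fa c (w * x₀))
          (1 * Fa c ((s : ℂ) * x₀)
            + (s : ℂ) * (((((s : ℂ) * x₀) ^ 2 + c * ((s : ℂ) * x₀) ^ 5) * Fa c ((s : ℂ) * x₀)) * x₀))
          (s : ℂ) := (hasDerivAt_id' (x := (s : ℂ))).mul hin
      have h := hc2.comp_ofReal
      convert h using 1
      simp only [hG'def]
      ring
    have hint : IntervalIntegrable (fun s : ℝ => G' x₀ s) MeasureTheory.volume 0 1 :=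
      hcontG'.intervalIntegrable 0 1
    have h := intervalIntegral.integral_eq_sub_of_hasDerivAt hψ hint
    rw [h]
    norm_num
  rw [key] at main
  exact main.2

/-! ### Iterated derivatives of `Fa` at `0` -/

lemma iteratedDeriv_Fa (c : ℂ) :
    deriv (Fa c) 0 = 0 ∧ iteratedDeriv 2 (Fa c) 0 = 0 ∧ iteratedDeriv 3 (Fa c) 0 = 2 ∧
      iteratedDeriv 4 (Fa c) 0 = 0 := by
  set q1 : ℂ → ℂ := fun z => z ^ 2 + c * z ^ 5 with hq1def
  set q2 : ℂ → ℂ := fun z => 2 * z + (1 + 5*c) * z ^ 4 + (2*c) * z ^ 7 + c^2 * z ^ 10 with hq2def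
  set q3 : ℂ → ℂ := fun z => 2 + (6 + 20*c) * z ^ 3 + (1 + 21*c) * z ^ 6
      + (3*c + 15*c^2) * z ^ 9 + (3*c^2) * z ^ 12 + c^3 * z ^ 15 with hq3def
  set q4 : ℂ → ℂ := fun z => (20 + 60*c) * z ^ 2 + (12 + 148*c) * z ^ 5
      + (1 + 54*c + 155*c^2) * z ^ 8 + (4*c + 72*c^2) * z ^ 11 + (6*c^2 + 30*c^3) * z ^ 14
      + (4*c^3) * z ^ 17 + c^4 * z ^ 20 with hq4def
  have hq1 : ∀ z, HasDerivAt q1 (2 * z + 5 * c * z ^ 4) z := by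
    intro z
    have h := (hasDerivAt_pow 2 z).add ((hasDerivAt_pow 5 z).const_mul c)
    refine h.congr_deriv ?_
    push_cast; ring
  have hq2 : ∀ z, HasDerivAt q2 (2 + 4*(1 + 5*c) * z ^ 3 + 14*c * z ^ 6 + 10*c^2 * z ^ 9) z := by
    intro z
    have h := ((((hasDerivAt_id' (x := z)).const_mul 2).add (hmono (1 + 5*c) 4 z)).add
      (hmono (2*c) 7 z)).add (hmono (c^2) 10 z)
    refine h.congr_deriv ?_
    push_cast; ring
  have hq3 : ∀ z, HasDerivAt q3 (3*(6 + 20*c) * z ^ 2 + 6*(1 + 21*c) * z ^ 5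
      + 9*(3*c + 15*c^2) * z ^ 8 + 36*c^2 * z ^ 11 + 15*c^3 * z ^ 14) z := by
    intro z
    have h := (((((hasDerivAt_const z (2:ℂ)).add (hmono (6 + 20*c) 3 z)).add
      (hmono (1 + 21*c) 6 z)).add (hmono (3*c + 15*c^2) 9 z)).add
      (hmono (3*c^2) 12 z)).add (hmono (c^3) 15 z)
    refine h.congr_deriv ?_
    push_cast; ring
  have e1 : deriv (Fa c) = fun z => q1 z * Fa c z :=
    funext fun z => (hasDerivAt_Fa c z).deriv
  have e2 : deriv (fun z => q1 z * Fa c z) = fun z => q2 z * Fa c z := by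
    funext z
    rw [(hasDerivAt_mul_Fa c hq1 z).deriv]
    simp only [hq1def, hq2def]
    ring
  have e3 : deriv (fun z => q2 z * Fa c z) = fun z => q3 z * Fa c z := by
    funext z
    rw [(hasDerivAt_mul_Fa c hq2 z).deriv]
    simp only [hq1def, hq2def, hq3def]
    ring
  have e4 : deriv (fun z => q3 z * Fa c z) = fun z => q4 z * Fa c z := by
    funext z
    rw [(hasDerivAt_mul_Fa c hq3 z).deriv]
    simp only [hq1def, hq3def, hq4def]
    ring
  refine ⟨?_, ?_, ?_, ?_⟩
  · rw [e1]; simp [hq1def, Fa_zero]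
  · rw [show (2:ℕ) = 1 + 1 from rfl, iteratedDeriv_succ', e1, iteratedDeriv_one, e2]
    simp [hq2def, Fa_zero]
  · rw [show (3:ℕ) = 2 + 1 from rfl, iteratedDeriv_succ', e1,
      show (2:ℕ) = 1 + 1 from rfl, iteratedDeriv_succ', e2, iteratedDeriv_one, e3]
    simp [hq3def, Fa_zero]
  · rw [show (4:ℕ) = 3 + 1 from rfl, iteratedDeriv_succ', e1,
      show (3:ℕ) = 2 + 1 from rfl, iteratedDeriv_succ', e2,
      show (2:ℕ) = 1 + 1 from rfl, iteratedDeriv_succ', e3, iteratedDeriv_one, e4]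
    simp [hq4def, Fa_zero]

theorem thirdHankel_sharp (t : ℝ) (ht0 : 0 ≤ t) (ht1 : t ≤ 1/2)
    (f : ℂ → ℂ)
    (hfdef : ∀ z ∈ ball (0:ℂ) 1,
      f z = ∫ s in (0:ℝ)..1,
        z * Complex.exp (((s : ℂ) * z) ^ 3 / 3 + (t : ℂ) * ((s : ℂ) * z) ^ 6 / 6)) :
    MemC t f ∧
      IsSchwarz (fun z : ℂ => z ^ 3) ∧
      (∀ z ∈ ball (0:ℂ) 1,
        1 + z * deriv (deriv f) z / deriv f z = 1 + z ^ 3 + (t : ℂ) * (z ^ 3) ^ 2) ∧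
      taylorCoeff f 2 = 0 ∧ taylorCoeff f 3 = 0 ∧ taylorCoeff f 4 = 1/12 ∧
      taylorCoeff f 5 = 0 ∧
      ‖taylorCoeff f 3 * (taylorCoeff f 2 * taylorCoeff f 4 - (taylorCoeff f 3) ^ 2)
        - taylorCoeff f 4 * (taylorCoeff f 4 - taylorCoeff f 2 * taylorCoeff f 3)
        + taylorCoeff f 5 * (taylorCoeff f 3 - (taylorCoeff f 2) ^ 2)‖ = 1/144 := by
  set c : ℂ := (t : ℂ) with hcdef
  set g : ℂ → ℂ := fun z => ∫ s in (0:ℝ)..1, z * Fa c ((s : ℂ) * z) with hgdef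
  have hfg : ∀ z ∈ ball (0:ℂ) 1, f z = g z := fun z hz => hfdef z hz
  have hEq : ∀ z ∈ ball (0:ℂ) 1, f =ᶠ[nhds z] g := fun z hz =>
    Filter.eventuallyEq_of_mem (isOpen_ball.mem_nhds hz) hfg
  have h0 : (0:ℂ) ∈ ball (0:ℂ) 1 := by simp
  have hgderiv : ∀ z, HasDerivAt g (Fa c z) z := fun z => hasDerivAt_g c z
  have hderivf : ∀ z ∈ ball (0:ℂ) 1, deriv f z = Fa c z := fun z hz =>
    ((hEq z hz).deriv_eq).trans (hgderiv z).deriv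
  have hderiv2 : ∀ z ∈ ball (0:ℂ) 1, deriv (deriv f) z = (z ^ 2 + c * z ^ 5) * Fa c z := by
    intro z hz
    have h : deriv f =ᶠ[nhds z] Fa c :=
      Filter.eventuallyEq_of_mem (isOpen_ball.mem_nhds hz) hderivf
    exact (h.deriv_eq).trans (hasDerivAt_Fa c z).deriv
  have hode : ∀ z ∈ ball (0:ℂ) 1,
      1 + z * deriv (deriv f) z / deriv f z = 1 + z ^ 3 + c * (z ^ 3) ^ 2 := by
    intro z hz
    rw [hderiv2 z hz, hderivf z hz]
    have h := Fa_ne_zero c z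
    field_simp
    ring
  have hschwarz : IsSchwarz (fun z : ℂ => z ^ 3) := by
    refine ⟨fun z _ => ?_, by simp, fun z hz => ?_⟩
    · exact (analyticAt_id (𝕜 := ℂ)).pow 3
    · rw [mem_ball_zero_iff] at hz
      rw [norm_pow]
      calc ‖z‖ ^ 3 < 1 ^ 3 := by
            apply pow_lt_pow_left₀ hz (norm_nonneg z)
            norm_num
        _ = 1 := one_pow 3
  -- Taylor coefficients
  have hiter : ∀ n, iteratedDeriv n f 0 = iteratedDeriv n g 0 := fun n =>
    (hEq 0 h0).iteratedDeriv_eq n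
  have hgd : deriv g = Fa c := funext fun z => (hgderiv z).deriv
  obtain ⟨i1, i2, i3, i4⟩ := iteratedDeriv_Fa c
  have key : ∀ n : ℕ, iteratedDeriv (n + 1) f 0 = iteratedDeriv n (Fa c) 0 := by
    intro n
    rw [hiter, iteratedDeriv_succ', hgd]
  have a2 : taylorCoeff f 2 = 0 := by
    have := key 1
    rw [iteratedDeriv_one] at this
    simp [taylorCoeff, this, i1]
  have a3 : taylorCoeff f 3 = 0 := by
    simp [taylorCoeff, key 2, i2]
  have a4 : taylorCoeff f 4 = 1/12 := by
    simp only [taylorCoeff, key 3, i3]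
    norm_num [Nat.factorial]
  have a5 : taylorCoeff f 5 = 0 := by
    simp [taylorCoeff, key 4, i4]
  refine ⟨?_, hschwarz, fun z hz => hode z hz, a2, a3, a4, a5, ?_⟩
  · refine ⟨?_, ?_, ?_, ?_, ⟨fun z => z ^ 3, hschwarz, fun z hz => hode z hz⟩⟩
    · intro z hz
      have hgdiff : Differentiable ℂ g := fun w => (hgderiv w).differentiableAt
      exact (hgdiff.analyticAt z).congr (hEq z hz).symm
    · rw [hfg 0 h0, hgdef]
      simp
    · rw [hderivf 0 h0, Fa_zero]
    · intro z hz
      rw [hderivf z hz]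
      exact Fa_ne_zero c z
  · rw [a2, a3, a4, a5]
    have : (0:ℂ) * ((0:ℂ) * (1/12) - 0 ^ 2) - 1/12 * (1/12 - 0 * 0) + 0 * (0 - 0 ^ 2)
        = -(1/144 : ℂ) := by norm_num
    rw [this, norm_neg]
    rw [show ((1:ℂ)/144) = ((1/144 : ℝ) : ℂ) by norm_num, Complex.norm_real]
    norm_num
end

section
/- Let t ∈ ℝ, let f be analytic on 𝔻 with f(0) = 0, f'(0) = 1 and f'(z) ≠ 0 on 𝔻, and let w be a Schwarz function such that 1 + z·f''(z)/f'(z) = 1 + w(z) + t·w(z)² for all z ∈ 𝔻. If aₙ = f⁽ⁿ⁾(0)/n! and cₙ = w⁽ⁿ⁾(0)/n!, then a₂ = c₁/2, a₃ = ((1 + t)c₁² + c₂)/6, and a₄ = ((1 + 3t)c₁³ + (3 + 4t)c₁c₂ + 2c₃)/24. -/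
open Complex Metric Set Topology Filter

theorem coeff_formulas_a2_a3_a4 (t : ℝ) (f w : ℂ → ℂ)
    (hf : AnalyticOnNhd ℂ f (ball (0:ℂ) 1)) (hf0 : f 0 = 0) (hf1 : deriv f 0 = 1)
    (hfd : ∀ z ∈ ball (0:ℂ) 1, deriv f z ≠ 0)
    (hw : IsSchwarz w)
    (heq : ∀ z ∈ ball (0:ℂ) 1,
      1 + z * deriv (deriv f) z / deriv f z = 1 + w z + (t : ℂ) * (w z) ^ 2) :
    taylorCoeff f 2 = taylorCoeff w 1 / 2 ∧
    taylorCoeff f 3 = ((1 + (t : ℂ)) * (taylorCoeff w 1) ^ 2 + taylorCoeff w 2) / 6 ∧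
    taylorCoeff f 4 = ((1 + 3 * (t : ℂ)) * (taylorCoeff w 1) ^ 3
      + (3 + 4 * (t : ℂ)) * taylorCoeff w 1 * taylorCoeff w 2
      + 2 * taylorCoeff w 3) / 24 := by
  obtain ⟨hwa, hw0, -⟩ := hw
  have h01 : (0:ℂ) ∈ ball (0:ℂ) 1 := mem_ball_self one_pos
  have hmem : ball (0:ℂ) 1 ∈ 𝓝 (0:ℂ) := isOpen_ball.mem_nhds h01
  have aG : AnalyticOnNhd ℂ (deriv f) (ball (0:ℂ) 1) := hf.deriv
  have aH : AnalyticOnNhd ℂ (deriv (deriv f)) (ball (0:ℂ) 1) := aG.deriv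
  have aH1 : AnalyticOnNhd ℂ (deriv (deriv (deriv f))) (ball (0:ℂ) 1) := aH.deriv
  have aH2 : AnalyticOnNhd ℂ (deriv (deriv (deriv (deriv f)))) (ball (0:ℂ) 1) := aH1.deriv
  have aW1 : AnalyticOnNhd ℂ (deriv w) (ball (0:ℂ) 1) := hwa.deriv
  have aW2 : AnalyticOnNhd ℂ (deriv (deriv w)) (ball (0:ℂ) 1) := aW1.deriv
  have aW3 : AnalyticOnNhd ℂ (deriv (deriv (deriv w))) (ball (0:ℂ) 1) := aW2.deriv
  have Hg : ∀ z ∈ ball (0:ℂ) 1, HasDerivAt (deriv f) (deriv (deriv f) z) z :=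
    fun z hz => ((aG z hz).differentiableAt).hasDerivAt
  have Hh : ∀ z ∈ ball (0:ℂ) 1, HasDerivAt (deriv (deriv f)) (deriv (deriv (deriv f)) z) z :=
    fun z hz => ((aH z hz).differentiableAt).hasDerivAt
  have Hh1 : ∀ z ∈ ball (0:ℂ) 1,
      HasDerivAt (deriv (deriv (deriv f))) (deriv (deriv (deriv (deriv f))) z) z :=
    fun z hz => ((aH1 z hz).differentiableAt).hasDerivAt
  have Hh2 : ∀ z ∈ ball (0:ℂ) 1,
      HasDerivAt (deriv (deriv (deriv (deriv f)))) (deriv (deriv (deriv (deriv (deriv f)))) z) z :=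
    fun z hz => ((aH2 z hz).differentiableAt).hasDerivAt
  have Hw : ∀ z ∈ ball (0:ℂ) 1, HasDerivAt w (deriv w z) z :=
    fun z hz => ((hwa z hz).differentiableAt).hasDerivAt
  have Hw1 : ∀ z ∈ ball (0:ℂ) 1, HasDerivAt (deriv w) (deriv (deriv w) z) z :=
    fun z hz => ((aW1 z hz).differentiableAt).hasDerivAt
  have Hw2 : ∀ z ∈ ball (0:ℂ) 1, HasDerivAt (deriv (deriv w)) (deriv (deriv (deriv w)) z) z :=
    fun z hz => ((aW2 z hz).differentiableAt).hasDerivAt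
  have Hw3 : ∀ z ∈ ball (0:ℂ) 1,
      HasDerivAt (deriv (deriv (deriv w))) (deriv (deriv (deriv (deriv w))) z) z :=
    fun z hz => ((aW3 z hz).differentiableAt).hasDerivAt
  -- the key functional equation, denominator-free
  have key : Set.EqOn (fun z => z * deriv (deriv f) z)
      (fun z => (w z + (t:ℂ) * (w z * w z)) * deriv f z) (ball (0:ℂ) 1) := by
    intro z hz
    have h₁ := heq z hz
    have h₂ := hfd z hz
    field_simp at h₁
    simp only []
    linear_combination h₁
  have keyE : (fun z => z * deriv (deriv f) z)
      =ᶠ[𝓝 (0:ℂ)] (fun z => (w z + (t:ℂ) * (w z * w z)) * deriv f z) :=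
    Filter.eventuallyEq_of_mem hmem key
  -- LHS derivative chain
  have hu1 : Set.EqOn (deriv (fun z => z * deriv (deriv f) z))
      (fun z => deriv (deriv f) z + z * deriv (deriv (deriv f)) z) (ball (0:ℂ) 1) := by
    intro z hz
    have := ((hasDerivAt_id z).mul (Hh z hz)).deriv
    show deriv (id * deriv (deriv f)) z = _
    simpa using this
  have hu2 : Set.EqOn (deriv (fun z => deriv (deriv f) z + z * deriv (deriv (deriv f)) z))
      (fun z => 2 * deriv (deriv (deriv f)) z + z * deriv (deriv (deriv (deriv f))) z)
      (ball (0:ℂ) 1) := by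
    intro z hz
    have := ((Hh z hz).add ((hasDerivAt_id z).mul (Hh1 z hz))).deriv
    simp only [id_eq] at this
    erw [this]; ring
  have hu3 : deriv (fun z => 2 * deriv (deriv (deriv f)) z
      + z * deriv (deriv (deriv (deriv f))) z) 0
      = 3 * deriv (deriv (deriv (deriv f))) 0 := by
    have := (((Hh1 0 h01).const_mul (2:ℂ)).add
      ((hasDerivAt_id (0:ℂ)).mul (Hh2 0 h01))).deriv
    simp only [id_eq] at this
    erw [this]; ring
  -- RHS derivative chain
  have HP : ∀ z ∈ ball (0:ℂ) 1, HasDerivAt (fun z => w z + (t:ℂ) * (w z * w z))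
      (deriv w z + (t:ℂ) * (deriv w z * w z + w z * deriv w z)) z :=
    fun z hz => (Hw z hz).add (((Hw z hz).mul (Hw z hz)).const_mul (t:ℂ))
  have HP1 : ∀ z ∈ ball (0:ℂ) 1,
      HasDerivAt (fun z => deriv w z + (t:ℂ) * (deriv w z * w z + w z * deriv w z))
      (deriv (deriv w) z + (t:ℂ) * ((deriv (deriv w) z * w z + deriv w z * deriv w z)
        + (deriv w z * deriv w z + w z * deriv (deriv w) z))) z :=
    fun z hz => (Hw1 z hz).add ((((Hw1 z hz).mul (Hw z hz)).add
      ((Hw z hz).mul (Hw1 z hz))).const_mul (t:ℂ))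
  have HP2 : HasDerivAt (fun z => deriv (deriv w) z
      + (t:ℂ) * ((deriv (deriv w) z * w z + deriv w z * deriv w z)
        + (deriv w z * deriv w z + w z * deriv (deriv w) z)))
      (deriv (deriv (deriv w)) 0 + (t:ℂ) *
        (((deriv (deriv (deriv w)) 0 * w 0 + deriv (deriv w) 0 * deriv w 0)
          + (deriv (deriv w) 0 * deriv w 0 + deriv w 0 * deriv (deriv w) 0))
        + ((deriv (deriv w) 0 * deriv w 0 + deriv w 0 * deriv (deriv w) 0)
          + (deriv w 0 * deriv (deriv w) 0 + w 0 * deriv (deriv (deriv w)) 0)))) 0 :=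
    (Hw2 0 h01).add (((((Hw2 0 h01).mul (Hw 0 h01)).add ((Hw1 0 h01).mul (Hw1 0 h01))).add
      (((Hw1 0 h01).mul (Hw1 0 h01)).add ((Hw 0 h01).mul (Hw2 0 h01)))).const_mul (t:ℂ))
  have hv1 : Set.EqOn (deriv (fun z => (w z + (t:ℂ) * (w z * w z)) * deriv f z))
      (fun z => (deriv w z + (t:ℂ) * (deriv w z * w z + w z * deriv w z)) * deriv f z
        + (w z + (t:ℂ) * (w z * w z)) * deriv (deriv f) z) (ball (0:ℂ) 1) :=
    fun z hz => ((HP z hz).mul (Hg z hz)).deriv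
  have hv2 : Set.EqOn (deriv (fun z =>
        (deriv w z + (t:ℂ) * (deriv w z * w z + w z * deriv w z)) * deriv f z
        + (w z + (t:ℂ) * (w z * w z)) * deriv (deriv f) z))
      (fun z => ((deriv (deriv w) z + (t:ℂ) * ((deriv (deriv w) z * w z + deriv w z * deriv w z)
          + (deriv w z * deriv w z + w z * deriv (deriv w) z))) * deriv f z
        + (deriv w z + (t:ℂ) * (deriv w z * w z + w z * deriv w z)) * deriv (deriv f) z)
        + ((deriv w z + (t:ℂ) * (deriv w z * w z + w z * deriv w z)) * deriv (deriv f) z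
        + (w z + (t:ℂ) * (w z * w z)) * deriv (deriv (deriv f)) z)) (ball (0:ℂ) 1) :=
    fun z hz => (((HP1 z hz).mul (Hg z hz)).add ((HP z hz).mul (Hh z hz))).deriv
  have hv3 := ((((HP2.mul (Hg 0 h01)).add ((HP1 0 h01).mul (Hh 0 h01))).add
      (((HP1 0 h01).mul (Hh 0 h01)).add ((HP 0 h01).mul (Hh1 0 h01))))).deriv
  -- first identity
  have e1 : deriv (deriv f) 0 = deriv w 0 := by
    have h₁ := keyE.deriv_eq
    rw [hu1 h01, hv1 h01] at h₁
    simp [hw0, hf1] at h₁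
    exact h₁
  -- second identity
  have e2 : 2 * deriv (deriv (deriv f)) 0
      = (deriv (deriv w) 0 + (t:ℂ) * (2 * deriv w 0 * deriv w 0))
        + 2 * deriv w 0 * deriv (deriv f) 0 := by
    have h₁ := (keyE.deriv).deriv_eq
    rw [(Filter.eventuallyEq_of_mem hmem hu1).deriv_eq,
        (Filter.eventuallyEq_of_mem hmem hv1).deriv_eq] at h₁
    rw [hu2 h01, hv2 h01] at h₁
    simp only [hw0, hf1] at h₁
    linear_combination h₁
  -- third identity
  have e3 : 3 * deriv (deriv (deriv (deriv f))) 0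
      = (deriv (deriv (deriv w)) 0 + (t:ℂ) * (6 * deriv w 0 * deriv (deriv w) 0))
        + 3 * (deriv (deriv w) 0 + (t:ℂ) * (2 * deriv w 0 * deriv w 0)) * deriv (deriv f) 0
        + 3 * deriv w 0 * deriv (deriv (deriv f)) 0 := by
    have h₁ := ((keyE.deriv).deriv).deriv_eq
    have hL : deriv (deriv (fun z => z * deriv (deriv f) z))
        =ᶠ[𝓝 (0:ℂ)] (fun z => 2 * deriv (deriv (deriv f)) z
          + z * deriv (deriv (deriv (deriv f))) z) :=
      ((Filter.eventuallyEq_of_mem hmem hu1).deriv).trans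
        (Filter.eventuallyEq_of_mem hmem hu2)
    have hR : deriv (deriv (fun z => (w z + (t:ℂ) * (w z * w z)) * deriv f z))
        =ᶠ[𝓝 (0:ℂ)] _ :=
      ((Filter.eventuallyEq_of_mem hmem hv1).deriv).trans
        (Filter.eventuallyEq_of_mem hmem hv2)
    rw [hL.deriv_eq, hR.deriv_eq, hu3] at h₁
    erw [hv3] at h₁
    simp only [hw0, hf1] at h₁
    linear_combination h₁
  refine ⟨?_, ?_, ?_⟩ <;>
    simp only [taylorCoeff, iteratedDeriv_succ, iteratedDeriv_one, iteratedDeriv_zero,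
      Nat.factorial, Nat.cast_ofNat, Nat.cast_one] <;>
    field_simp
  · linear_combination 2 * e1
  · linear_combination 6 * e2 + 12 * deriv w 0 * e1
  · linear_combination 96 * e3 + 144 * deriv w 0 * e2
      + (288 * deriv (deriv w) 0 + 576 * (t:ℂ) * (deriv w 0)^2
        + 288 * (deriv w 0)^2) * e1
end

section
/- Let t ∈ ℝ, let f be analytic on 𝔻 with f(0) = 0, f'(0) = 1 and f'(z) ≠ 0 on 𝔻, and let w be a Schwarz function such that 1 + z·f''(z)/f'(z) = 1 + w(z) + t·w(z)² for all z ∈ 𝔻. If aₙ = f⁽ⁿ⁾(0)/n! and cₙ = w⁽ⁿ⁾(0)/n!, then a₅ = (1/120)·((1 + 6t + 3t²)c₁⁴ + 2(3 + 11t)c₁²c₂ + (3 + 6t)c₂² + 4(2 + 3t)c₁c₃ + 6c₄). -/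
open Complex Metric Set

open Finset

lemma an_iter {s : Set ℂ} {f : ℂ → ℂ} (hf : AnalyticOnNhd ℂ f s) (n : ℕ) :
    AnalyticOnNhd ℂ (iteratedDeriv n f) s := by
  rw [iteratedDeriv_eq_iterate]; exact hf.iterated_deriv n

lemma eqOn_deriv {s : Set ℂ} (hs : IsOpen s) {f g : ℂ → ℂ} (h : Set.EqOn f g s) :
    Set.EqOn (deriv f) (deriv g) s := fun x hx =>
  Filter.EventuallyEq.deriv_eq (Filter.eventuallyEq_of_mem (hs.mem_nhds hx) h)

lemma iter_zero (n : ℕ) : iteratedDeriv n (fun _ : ℂ => (0:ℂ)) = fun _ => 0 := by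
  induction n with
  | zero => simp
  | succ n ih => rw [iteratedDeriv_succ, ih]; simp

lemma iter_one (n : ℕ) : iteratedDeriv (n+1) (fun _ : ℂ => (1:ℂ)) = fun _ => 0 := by
  rw [iteratedDeriv_succ']
  simp only [deriv_const']
  exact iter_zero n

lemma iter_id_two (n : ℕ) : iteratedDeriv (n+2) (fun z : ℂ => z) = fun _ => 0 := by
  rw [iteratedDeriv_succ']
  simp only [deriv_id'']
  exact iter_one n

lemma iter_id_one : iteratedDeriv 1 (fun z : ℂ => z) = fun _ => 1 := by
  rw [iteratedDeriv_one]; ext x; simp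

lemma iter_add {s : Set ℂ} (hs : IsOpen s) {f g : ℂ → ℂ}
    (hf : AnalyticOnNhd ℂ f s) (hg : AnalyticOnNhd ℂ g s) (n : ℕ) :
    Set.EqOn (iteratedDeriv n (fun z => f z + g z))
      (fun z => iteratedDeriv n f z + iteratedDeriv n g z) s := by
  induction n with
  | zero => intro x hx; simp
  | succ n ih =>
    intro x hx
    rw [iteratedDeriv_succ, eqOn_deriv hs ih hx]
    have h1 := ((an_iter hf n) x hx).differentiableAt
    have h2 := ((an_iter hg n) x hx).differentiableAt
    rw [deriv_fun_add h1 h2, iteratedDeriv_succ, iteratedDeriv_succ]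

lemma iter_sub {s : Set ℂ} (hs : IsOpen s) {f g : ℂ → ℂ}
    (hf : AnalyticOnNhd ℂ f s) (hg : AnalyticOnNhd ℂ g s) (n : ℕ) :
    Set.EqOn (iteratedDeriv n (fun z => f z - g z))
      (fun z => iteratedDeriv n f z - iteratedDeriv n g z) s := by
  induction n with
  | zero => intro x hx; simp
  | succ n ih =>
    intro x hx
    rw [iteratedDeriv_succ, eqOn_deriv hs ih hx]
    have h1 := ((an_iter hf n) x hx).differentiableAt
    have h2 := ((an_iter hg n) x hx).differentiableAt
    rw [deriv_fun_sub h1 h2, iteratedDeriv_succ, iteratedDeriv_succ]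

lemma iter_cmul {s : Set ℂ} (hs : IsOpen s) {f : ℂ → ℂ} (c : ℂ)
    (hf : AnalyticOnNhd ℂ f s) (n : ℕ) :
    Set.EqOn (iteratedDeriv n (fun z => c * f z))
      (fun z => c * iteratedDeriv n f z) s := by
  induction n with
  | zero => intro x hx; simp
  | succ n ih =>
    intro x hx
    rw [iteratedDeriv_succ, eqOn_deriv hs ih hx]
    have h1 := ((an_iter hf n) x hx).differentiableAt
    rw [deriv_const_mul c h1, iteratedDeriv_succ]

lemma leibniz_key (n : ℕ) (F G : ℕ → ℂ) :
    ∑ k ∈ range (n+1), (n.choose k : ℂ) * (F (k+1) * G (n-k) + F k * G (n-k+1))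
      = ∑ k ∈ range (n+2), ((n+1).choose k : ℂ) * (F k * G (n+1-k)) := by
  rw [Finset.sum_range_succ' _ (n+1)]
  simp only [Nat.succ_sub_succ_eq_sub, Nat.choose_succ_succ, Nat.choose_zero_right,
    Nat.cast_add, Nat.cast_one, Nat.sub_zero]
  have lhs_split : ∑ k ∈ range (n+1), (n.choose k : ℂ) * (F (k+1) * G (n-k) + F k * G (n-k+1))
      = (∑ k ∈ range (n+1), (n.choose k : ℂ) * (F (k+1) * G (n-k)))
        + ∑ k ∈ range (n+1), (n.choose k : ℂ) * (F k * G (n-k+1)) := by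
    rw [← Finset.sum_add_distrib]
    exact Finset.sum_congr rfl fun k _ => by ring
  rw [lhs_split]
  have h2 : ∑ k ∈ range (n+1), (n.choose k : ℂ) * (F k * G (n-k+1))
      = (∑ k ∈ range (n+1), (n.choose (k+1) : ℂ) * (F (k+1) * G (n-k))) + F 0 * G (n+1) := by
    rw [Finset.sum_range_succ' _ n]
    congr 1
    · rw [Finset.sum_range_succ]
      simp only [Nat.choose_succ_self, Nat.cast_zero, zero_mul, add_zero]
      refine Finset.sum_congr rfl fun k hk => ?_
      have hk' : k < n := Finset.mem_range.1 hk
      have : n - (k+1) + 1 = n - k := by omega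
      rw [this]
    · simp
  rw [h2, ← add_assoc, ← Finset.sum_add_distrib, one_mul]
  congr 1
  exact Finset.sum_congr rfl fun k _ => by
    rw [Nat.succ_eq_add_one]; ring

lemma iter_mul {s : Set ℂ} (hs : IsOpen s) {f g : ℂ → ℂ}
    (hf : AnalyticOnNhd ℂ f s) (hg : AnalyticOnNhd ℂ g s) (n : ℕ) :
    Set.EqOn (iteratedDeriv n (fun z => f z * g z))
      (fun x => ∑ k ∈ range (n+1),
        (n.choose k : ℂ) * (iteratedDeriv k f x * iteratedDeriv (n - k) g x)) s := by
  induction n with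
  | zero => intro x hx; simp
  | succ n ih =>
    intro x hx
    rw [iteratedDeriv_succ, eqOn_deriv hs ih hx]
    rw [deriv_fun_sum (A := fun k y => (n.choose k : ℂ) * (iteratedDeriv k f y * iteratedDeriv (n-k) g y)) (fun k _ => (((an_iter hf k) x hx).differentiableAt.mul
          ((an_iter hg (n-k)) x hx).differentiableAt).const_mul _)]
    have hterm : ∀ k ∈ range (n+1),
        deriv (fun y => (n.choose k : ℂ) * (iteratedDeriv k f y * iteratedDeriv (n-k) g y)) x
        = (n.choose k : ℂ) * (iteratedDeriv (k+1) f x * iteratedDeriv (n-k) g x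
            + iteratedDeriv k f x * iteratedDeriv (n-k+1) g x) := by
      intro k _
      rw [deriv_const_mul (d := fun y => iteratedDeriv k f y * iteratedDeriv (n-k) g y) _ (((an_iter hf k) x hx).differentiableAt.mul
            ((an_iter hg (n-k)) x hx).differentiableAt),
          deriv_fun_mul ((an_iter hf k) x hx).differentiableAt
            ((an_iter hg (n-k)) x hx).differentiableAt,
          ← iteratedDeriv_succ, ← iteratedDeriv_succ]
    rw [Finset.sum_congr rfl hterm]
    exact leibniz_key n (fun k => iteratedDeriv k f x) (fun k => iteratedDeriv k g x)

theorem coeff_formula_a5 (t : ℝ) (f w : ℂ → ℂ)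
    (hf : AnalyticOnNhd ℂ f (ball (0:ℂ) 1)) (hf0 : f 0 = 0) (hf1 : deriv f 0 = 1)
    (hfd : ∀ z ∈ ball (0:ℂ) 1, deriv f z ≠ 0)
    (hw : IsSchwarz w)
    (heq : ∀ z ∈ ball (0:ℂ) 1,
      1 + z * deriv (deriv f) z / deriv f z = 1 + w z + (t : ℂ) * (w z) ^ 2) :
    taylorCoeff f 5 = (1/120) * ((1 + 6 * (t : ℂ) + 3 * (t : ℂ) ^ 2) * (taylorCoeff w 1) ^ 4
      + 2 * (3 + 11 * (t : ℂ)) * (taylorCoeff w 1) ^ 2 * taylorCoeff w 2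
      + (3 + 6 * (t : ℂ)) * (taylorCoeff w 2) ^ 2
      + 4 * (2 + 3 * (t : ℂ)) * taylorCoeff w 1 * taylorCoeff w 3
      + 6 * taylorCoeff w 4) := by
  obtain ⟨hwan, hw0, -⟩ := hw
  have hD : IsOpen (ball (0:ℂ) 1) := isOpen_ball
  have h0 : (0:ℂ) ∈ ball (0:ℂ) 1 := by simp
  have hPan : AnalyticOnNhd ℂ (fun z => deriv f z * w z) (ball (0:ℂ) 1) := hf.deriv.mul hwan
  have hQan : AnalyticOnNhd ℂ (fun z => deriv f z * w z * w z) (ball (0:ℂ) 1) := hPan.mul hwan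
  have hAan : AnalyticOnNhd ℂ (fun z => z * deriv (deriv f) z) (ball (0:ℂ) 1) :=
    analyticOnNhd_id.mul hf.deriv.deriv
  have hRan : AnalyticOnNhd ℂ (fun z => deriv f z * w z + (t:ℂ) * (deriv f z * w z * w z))
      (ball (0:ℂ) 1) := hPan.add (analyticOnNhd_const.mul hQan)
  -- the basic identity on the ball
  have hG : Set.EqOn (fun z => z * deriv (deriv f) z
      - (deriv f z * w z + (t:ℂ) * (deriv f z * w z * w z))) (fun _ => (0:ℂ)) (ball (0:ℂ) 1) := by
    intro z hz
    have h := heq z hz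
    have hne := hfd z hz
    field_simp at h
    show z * deriv (deriv f) z - (deriv f z * w z + (t:ℂ) * (deriv f z * w z * w z)) = 0
    linear_combination h
  have key : ∀ n, iteratedDeriv n (fun z => z * deriv (deriv f) z) 0
      = iteratedDeriv n (fun z => deriv f z * w z) 0
        + (t:ℂ) * iteratedDeriv n (fun z => deriv f z * w z * w z) 0 := by
    intro n
    have h1 : iteratedDeriv n (fun z => z * deriv (deriv f) z
        - (deriv f z * w z + (t:ℂ) * (deriv f z * w z * w z))) 0 = 0 := by
      rw [(hG.iteratedDeriv_of_isOpen hD n) h0, iter_zero]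
    have h2 : iteratedDeriv n (fun z => z * deriv (deriv f) z
        - (deriv f z * w z + (t:ℂ) * (deriv f z * w z * w z))) 0
        = iteratedDeriv n (fun z => z * deriv (deriv f) z) 0
          - iteratedDeriv n (fun z => deriv f z * w z + (t:ℂ) * (deriv f z * w z * w z)) 0 :=
      iter_sub hD hAan hRan n h0
    have h3 : iteratedDeriv n (fun z => deriv f z * w z + (t:ℂ) * (deriv f z * w z * w z)) 0
        = iteratedDeriv n (fun z => deriv f z * w z) 0
          + iteratedDeriv n (fun z => (t:ℂ) * (deriv f z * w z * w z)) 0 :=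
      iter_add hD hPan (analyticOnNhd_const.mul hQan) n h0
    have h4 : iteratedDeriv n (fun z => (t:ℂ) * (deriv f z * w z * w z)) 0
        = (t:ℂ) * iteratedDeriv n (fun z => deriv f z * w z * w z) 0 :=
      iter_cmul hD _ hQan n h0
    rw [h2, h3, h4] at h1
    linear_combination h1
  -- general Leibniz expansions at 0
  have EPgen : ∀ n, iteratedDeriv n (fun z => deriv f z * w z) 0
      = ∑ k ∈ range (n+1), (n.choose k : ℂ)
          * (iteratedDeriv (k+1) f 0 * iteratedDeriv (n-k) w 0) := by
    intro n
    have h : iteratedDeriv n (fun z => deriv f z * w z) 0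
        = ∑ k ∈ range (n+1), (n.choose k : ℂ)
            * (iteratedDeriv k (deriv f) 0 * iteratedDeriv (n-k) w 0) :=
      iter_mul hD hf.deriv hwan n h0
    rw [h]
    exact Finset.sum_congr rfl fun k _ => by rw [iteratedDeriv_succ']
  have EQgen : ∀ n, iteratedDeriv n (fun z => deriv f z * w z * w z) 0
      = ∑ k ∈ range (n+1), (n.choose k : ℂ)
          * (iteratedDeriv k (fun z => deriv f z * w z) 0 * iteratedDeriv (n-k) w 0) :=
    fun n => iter_mul hD hPan hwan n h0
  have EAgen : ∀ n, iteratedDeriv n (fun z => z * deriv (deriv f) z) 0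
      = ∑ k ∈ range (n+1), (n.choose k : ℂ)
          * (iteratedDeriv k (fun z : ℂ => z) 0 * iteratedDeriv (n-k+2) f 0) := by
    intro n
    have h : iteratedDeriv n (fun z => z * deriv (deriv f) z) 0
        = ∑ k ∈ range (n+1), (n.choose k : ℂ)
            * (iteratedDeriv k (fun z : ℂ => z) 0 * iteratedDeriv (n-k) (deriv (deriv f)) 0) :=
      iter_mul hD analyticOnNhd_id hf.deriv.deriv n h0
    rw [h]
    refine Finset.sum_congr rfl fun k _ => ?_
    rw [show n-k+2 = (n-k)+1+1 from rfl, iteratedDeriv_succ', iteratedDeriv_succ']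
  -- basic values
  have hA1 : iteratedDeriv 1 f 0 = 1 := by rw [iteratedDeriv_one]; exact hf1
  have hC0 : iteratedDeriv 0 w 0 = 0 := by rw [iteratedDeriv_zero]; exact hw0
  have hid0 : iteratedDeriv 0 (fun z : ℂ => z) 0 = 0 := by simp
  have hid1 : iteratedDeriv 1 (fun z : ℂ => z) 0 = 1 := by rw [iter_id_one]
  have hid2 : iteratedDeriv 2 (fun z : ℂ => z) 0 = 0 := by
    rw [show (2:ℕ) = 0+2 from rfl, iter_id_two]
  have hid3 : iteratedDeriv 3 (fun z : ℂ => z) 0 = 0 := by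
    rw [show (3:ℕ) = 1+2 from rfl, iter_id_two]
  have hid4 : iteratedDeriv 4 (fun z : ℂ => z) 0 = 0 := by
    rw [show (4:ℕ) = 2+2 from rfl, iter_id_two]
  have hc32 : Nat.choose 3 2 = 3 := by decide
  have hc42 : Nat.choose 4 2 = 6 := by decide
  have hc43 : Nat.choose 4 3 = 4 := by decide
  -- P values
  have hp0 : iteratedDeriv 0 (fun z => deriv f z * w z) 0 = 0 := by
    rw [iteratedDeriv_zero]; simp [hw0]
  have hp1 : iteratedDeriv 1 (fun z => deriv f z * w z) 0 = iteratedDeriv 1 w 0 := by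
    rw [EPgen 1]
    simp [Finset.sum_range_succ, hC0, hA1]
  have hp2 : iteratedDeriv 2 (fun z => deriv f z * w z) 0
      = iteratedDeriv 2 w 0 + 2 * iteratedDeriv 2 f 0 * iteratedDeriv 1 w 0 := by
    rw [EPgen 2]
    simp [Finset.sum_range_succ, hC0, hA1]
    ring
  have hp3 : iteratedDeriv 3 (fun z => deriv f z * w z) 0
      = iteratedDeriv 3 w 0 + 3 * iteratedDeriv 2 f 0 * iteratedDeriv 2 w 0
        + 3 * iteratedDeriv 3 f 0 * iteratedDeriv 1 w 0 := by
    rw [EPgen 3]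
    simp [Finset.sum_range_succ, hC0, hA1, hc32]
    ring
  have hp4 : iteratedDeriv 4 (fun z => deriv f z * w z) 0
      = iteratedDeriv 4 w 0 + 4 * iteratedDeriv 2 f 0 * iteratedDeriv 3 w 0
        + 6 * iteratedDeriv 3 f 0 * iteratedDeriv 2 w 0
        + 4 * iteratedDeriv 4 f 0 * iteratedDeriv 1 w 0 := by
    rw [EPgen 4]
    simp [Finset.sum_range_succ, hC0, hA1, hc42, hc43]
    ring
  -- Q values
  have hq1 : iteratedDeriv 1 (fun z => deriv f z * w z * w z) 0 = 0 := by
    rw [EQgen 1]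
    simp [Finset.sum_range_succ, hC0, hp0]
  have hq2 : iteratedDeriv 2 (fun z => deriv f z * w z * w z) 0
      = 2 * iteratedDeriv 1 w 0 * iteratedDeriv 1 w 0 := by
    rw [EQgen 2]
    simp [Finset.sum_range_succ, hC0, hp0, hp1]
    ring
  have hq3 : iteratedDeriv 3 (fun z => deriv f z * w z * w z) 0
      = 3 * iteratedDeriv 1 w 0 * iteratedDeriv 2 w 0
        + 3 * (iteratedDeriv 2 w 0 + 2 * iteratedDeriv 2 f 0 * iteratedDeriv 1 w 0)
            * iteratedDeriv 1 w 0 := by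
    rw [EQgen 3]
    simp [Finset.sum_range_succ, hC0, hp0, hp1, hp2, hc32]
    ring
  have hq4 : iteratedDeriv 4 (fun z => deriv f z * w z * w z) 0
      = 4 * iteratedDeriv 1 w 0 * iteratedDeriv 3 w 0
        + 6 * (iteratedDeriv 2 w 0 + 2 * iteratedDeriv 2 f 0 * iteratedDeriv 1 w 0)
            * iteratedDeriv 2 w 0
        + 4 * (iteratedDeriv 3 w 0 + 3 * iteratedDeriv 2 f 0 * iteratedDeriv 2 w 0
            + 3 * iteratedDeriv 3 f 0 * iteratedDeriv 1 w 0) * iteratedDeriv 1 w 0 := by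
    rw [EQgen 4]
    simp [Finset.sum_range_succ, hC0, hp0, hp1, hp2, hp3, hc42, hc43]
    ring
  -- A values
  have ha1 : iteratedDeriv 1 (fun z => z * deriv (deriv f) z) 0 = iteratedDeriv 2 f 0 := by
    rw [EAgen 1]
    simp [Finset.sum_range_succ, hid0, hid1]
  have ha2 : iteratedDeriv 2 (fun z => z * deriv (deriv f) z) 0 = 2 * iteratedDeriv 3 f 0 := by
    rw [EAgen 2]
    simp [Finset.sum_range_succ, hid0, hid1, hid2]
  have ha3 : iteratedDeriv 3 (fun z => z * deriv (deriv f) z) 0 = 3 * iteratedDeriv 4 f 0 := by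
    rw [EAgen 3]
    simp [Finset.sum_range_succ, hid0, hid1, hid2, hid3, hc32]
  have ha4 : iteratedDeriv 4 (fun z => z * deriv (deriv f) z) 0 = 4 * iteratedDeriv 5 f 0 := by
    rw [EAgen 4]
    simp [Finset.sum_range_succ, hid0, hid1, hid2, hid3, hid4, hc42, hc43]
  -- the four relations
  have r1 := key 1; rw [ha1, hp1, hq1] at r1
  have e2 : iteratedDeriv 2 f 0 = iteratedDeriv 1 w 0 := by linear_combination r1
  have r2 := key 2; rw [ha2, hp2, hq2, e2] at r2
  have e3 : iteratedDeriv 3 f 0 = iteratedDeriv 2 w 0 / 2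
      + (1 + (t:ℂ)) * iteratedDeriv 1 w 0 ^ 2 := by linear_combination r2 / 2
  have r3 := key 3; rw [ha3, hp3, hq3, e2, e3] at r3
  have e4 : iteratedDeriv 4 f 0 = iteratedDeriv 3 w 0 / 3
      + (3/2) * iteratedDeriv 1 w 0 * iteratedDeriv 2 w 0 + iteratedDeriv 1 w 0 ^ 3
      + 2 * (t:ℂ) * iteratedDeriv 1 w 0 * iteratedDeriv 2 w 0
      + 3 * (t:ℂ) * iteratedDeriv 1 w 0 ^ 3 := by linear_combination r3 / 3
  have r4 := key 4; rw [ha4, hp4, hq4, e2, e3, e4] at r4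
  have e5 : iteratedDeriv 5 f 0 = iteratedDeriv 4 w 0 / 4
      + (3/4) * iteratedDeriv 2 w 0 ^ 2 + (4/3) * iteratedDeriv 1 w 0 * iteratedDeriv 3 w 0
      + 3 * iteratedDeriv 1 w 0 ^ 2 * iteratedDeriv 2 w 0 + iteratedDeriv 1 w 0 ^ 4
      + (3/2) * (t:ℂ) * iteratedDeriv 2 w 0 ^ 2
      + 2 * (t:ℂ) * iteratedDeriv 1 w 0 * iteratedDeriv 3 w 0
      + 11 * (t:ℂ) * iteratedDeriv 1 w 0 ^ 2 * iteratedDeriv 2 w 0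
      + 6 * (t:ℂ) * iteratedDeriv 1 w 0 ^ 4
      + 3 * (t:ℂ) ^ 2 * iteratedDeriv 1 w 0 ^ 4 := by linear_combination r4 / 4
  simp only [taylorCoeff, Nat.factorial]
  rw [e5]
  push_cast
  ring
end

section
/- Let t ∈ ℝ, let f be analytic on 𝔻 with f(0) = 0, f'(0) = 1 and f'(z) ≠ 0 on 𝔻, and let w be a Schwarz function such that 1 + z·f''(z)/f'(z) = 1 + w(z) + t·w(z)² for all z ∈ 𝔻. With aₙ = f⁽ⁿ⁾(0)/n! and cₙ = w⁽ⁿ⁾(0)/n!, the second Hankel determinant satisfies the identity 144·(a₂a₄ − a₃²) = (4t + 1)c₁²c₂ + 6c₁c₃ − 4c₂² − (4t² − t + 1)c₁⁴. -/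
open Complex Metric Set

private lemma deriv_step {e d : ℂ → ℂ}
    (he : ∀ z ∈ ball (0:ℂ) 1, e z = 0)
    (hd : ∀ z ∈ ball (0:ℂ) 1, HasDerivAt e (d z) z) :
    ∀ z ∈ ball (0:ℂ) 1, d z = 0 := by
  intro z hz
  have h0 : e =ᶠ[nhds z] fun _ => (0:ℂ) :=
    Filter.eventuallyEq_of_mem (isOpen_ball.mem_nhds hz) he
  have h1 : deriv e z = 0 := by rw [h0.deriv_eq]; simp
  rw [← (hd z hz).deriv]; exact h1

theorem secondHankel_identity (t : ℝ) (f w : ℂ → ℂ)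
    (hf : AnalyticOnNhd ℂ f (ball (0:ℂ) 1)) (hf0 : f 0 = 0) (hf1 : deriv f 0 = 1)
    (hfd : ∀ z ∈ ball (0:ℂ) 1, deriv f z ≠ 0)
    (hw : IsSchwarz w)
    (heq : ∀ z ∈ ball (0:ℂ) 1,
      1 + z * deriv (deriv f) z / deriv f z = 1 + w z + (t : ℂ) * (w z) ^ 2) :
    144 * (taylorCoeff f 2 * taylorCoeff f 4 - (taylorCoeff f 3) ^ 2)
      = (4 * (t : ℂ) + 1) * (taylorCoeff w 1) ^ 2 * taylorCoeff w 2
        + 6 * taylorCoeff w 1 * taylorCoeff w 3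
        - 4 * (taylorCoeff w 2) ^ 2
        - (4 * (t : ℂ) ^ 2 - (t : ℂ) + 1) * (taylorCoeff w 1) ^ 4 := by
  obtain ⟨hwA, hw0, -⟩ := hw
  set F : ℂ → ℂ := deriv f with hFdef
  set F1 : ℂ → ℂ := deriv F with hF1def
  set F2 : ℂ → ℂ := deriv F1 with hF2def
  set F3 : ℂ → ℂ := deriv F2 with hF3def
  set W1 : ℂ → ℂ := deriv w with hW1def
  set W2 : ℂ → ℂ := deriv W1 with hW2def
  set W3 : ℂ → ℂ := deriv W2 with hW3def
  have hFA : AnalyticOnNhd ℂ F (ball (0:ℂ) 1) := hf.deriv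
  have hF1A : AnalyticOnNhd ℂ F1 (ball (0:ℂ) 1) := hFA.deriv
  have hF2A : AnalyticOnNhd ℂ F2 (ball (0:ℂ) 1) := hF1A.deriv
  have hW1A : AnalyticOnNhd ℂ W1 (ball (0:ℂ) 1) := hwA.deriv
  have hW2A : AnalyticOnNhd ℂ W2 (ball (0:ℂ) 1) := hW1A.deriv
  -- HasDerivAt facts
  have dF : ∀ z ∈ ball (0:ℂ) 1, HasDerivAt F (F1 z) z := fun z hz =>
    (hFA z hz).differentiableAt.hasDerivAt
  have dF1 : ∀ z ∈ ball (0:ℂ) 1, HasDerivAt F1 (F2 z) z := fun z hz =>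
    (hF1A z hz).differentiableAt.hasDerivAt
  have dF2 : ∀ z ∈ ball (0:ℂ) 1, HasDerivAt F2 (F3 z) z := fun z hz =>
    (hF2A z hz).differentiableAt.hasDerivAt
  have dw : ∀ z ∈ ball (0:ℂ) 1, HasDerivAt w (W1 z) z := fun z hz =>
    (hwA z hz).differentiableAt.hasDerivAt
  have dW1 : ∀ z ∈ ball (0:ℂ) 1, HasDerivAt W1 (W2 z) z := fun z hz =>
    (hW1A z hz).differentiableAt.hasDerivAt
  have dW2 : ∀ z ∈ ball (0:ℂ) 1, HasDerivAt W2 (W3 z) z := fun z hz =>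
    (hW2A z hz).differentiableAt.hasDerivAt
  have h0mem : (0:ℂ) ∈ ball (0:ℂ) 1 := by simp
  -- level 0 equation
  have E0 : ∀ z ∈ ball (0:ℂ) 1,
      (fun y => y * F1 y - F y * (w y + (t:ℂ) * w y ^ 2)) z = 0 := by
    intro z hz
    have h := heq z hz
    have hne := hfd z hz
    field_simp at h
    simp only []
    linear_combination h
  -- level 1
  have E1 : ∀ z ∈ ball (0:ℂ) 1,
      (fun y => F1 y + y * F2 y
        - (F1 y * (w y + (t:ℂ) * w y ^ 2)
           + F y * (W1 y + (t:ℂ) * (2 * w y * W1 y)))) z = 0 := by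
    refine deriv_step E0 ?_
    intro z hz
    have h := (((hasDerivAt_id z).mul (dF1 z hz)).sub
      ((dF z hz).mul ((dw z hz).add (((dw z hz).pow 2).const_mul (t:ℂ)))))
    refine h.congr_deriv ?_
    simp only [id_eq, Pi.add_apply, Pi.mul_apply, Pi.pow_apply, Nat.cast_ofNat]
    ring
  -- level 2
  have E2 : ∀ z ∈ ball (0:ℂ) 1,
      (fun y => 2 * F2 y + y * F3 y
        - (F2 y * (w y + (t:ℂ) * w y ^ 2)
           + 2 * (F1 y * (W1 y + (t:ℂ) * (2 * w y * W1 y)))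
           + F y * (W2 y + (t:ℂ) * (2 * W1 y * W1 y + 2 * w y * W2 y)))) z = 0 := by
    refine deriv_step E1 ?_
    intro z hz
    have h := ((dF1 z hz).add ((hasDerivAt_id z).mul (dF2 z hz))).sub
      (((dF1 z hz).mul ((dw z hz).add (((dw z hz).pow 2).const_mul (t:ℂ)))).add
       ((dF z hz).mul ((dW1 z hz).add
         ((((dw z hz).const_mul (2:ℂ)).mul (dW1 z hz)).const_mul (t:ℂ)))))
    refine h.congr_deriv ?_
    simp only [id_eq, Pi.add_apply, Pi.mul_apply, Pi.pow_apply, Nat.cast_ofNat]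
    ring
  -- level 3
  have E3 : ∀ z ∈ ball (0:ℂ) 1,
      (fun y => 3 * F3 y + y * deriv F3 y
        - (F3 y * (w y + (t:ℂ) * w y ^ 2)
           + 3 * (F2 y * (W1 y + (t:ℂ) * (2 * w y * W1 y)))
           + 3 * (F1 y * (W2 y + (t:ℂ) * (2 * W1 y * W1 y + 2 * w y * W2 y)))
           + F y * (W3 y + (t:ℂ) * (6 * W1 y * W2 y + 2 * w y * W3 y)))) z = 0 := by
    refine deriv_step E2 ?_
    intro z hz
    have dF3z : HasDerivAt F3 (deriv F3 z) z :=
      ((hF2A.deriv) z hz).differentiableAt.hasDerivAt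
    have hQ : HasDerivAt (fun y => w y + (t:ℂ) * w y ^ 2)
        (W1 z + (t:ℂ) * (2 * w z ^ (2-1) * W1 z)) z :=
      (dw z hz).add (((dw z hz).pow 2).const_mul (t:ℂ))
    have hQ1 : HasDerivAt (fun y => W1 y + (t:ℂ) * (2 * w y * W1 y))
        (W2 z + (t:ℂ) * (2 * W1 z * W1 z + 2 * w z * W2 z)) z :=
      (dW1 z hz).add ((((dw z hz).const_mul (2:ℂ)).mul (dW1 z hz)).const_mul (t:ℂ))
    have hQ2 : HasDerivAt (fun y => W2 y + (t:ℂ) * (2 * W1 y * W1 y + 2 * w y * W2 y))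
        (W3 z + (t:ℂ) * ((2 * W2 z * W1 z + 2 * W1 z * W2 z) + (2 * W1 z * W2 z + 2 * w z * W3 z))) z :=
      (dW2 z hz).add (((((dW1 z hz).const_mul (2:ℂ)).mul (dW1 z hz)).add
        (((dw z hz).const_mul (2:ℂ)).mul (dW2 z hz))).const_mul (t:ℂ))
    have hA := ((dF2 z hz).const_mul (2:ℂ)).add ((hasDerivAt_id z).mul dF3z)
    have hB := (((dF2 z hz).mul hQ).add
        (((dF1 z hz).mul hQ1).const_mul (2:ℂ))).add
      ((dF z hz).mul hQ2)
    have h := hA.sub hB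
    refine h.congr_deriv ?_
    simp only [id_eq, Pi.add_apply, Pi.mul_apply, Pi.pow_apply, Nat.cast_ofNat]
    ring
  -- evaluate at 0
  have hF00 : F 0 = 1 := hf1
  have e1 := E1 0 h0mem
  have e2 := E2 0 h0mem
  have e3 := E3 0 h0mem
  simp only [hw0, hF00, mul_zero, zero_mul, zero_pow, ne_eq, OfNat.ofNat_ne_zero,
    not_false_eq_true, add_zero, zero_add, mul_one, one_mul] at e1 e2 e3
  -- clean equations
  have h1 : F1 0 = W1 0 := by linear_combination e1
  have h2 : F2 0 = (1 + (t:ℂ)) * W1 0 ^ 2 + W2 0 / 2 := by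
    linear_combination e2 / 2 + (W1 0) * h1
  have h3 : F3 0 = (1 + 3 * (t:ℂ)) * W1 0 ^ 3
      + (3 / 2 + 2 * (t:ℂ)) * W1 0 * W2 0 + W3 0 / 3 := by
    linear_combination e3 / 3 + (W1 0) * h2 + (W2 0 + 2 * (t:ℂ) * W1 0 ^ 2) * h1
  -- unfold Taylor coefficients
  have ta2 : taylorCoeff f 2 = F1 0 / 2 := by
    simp [taylorCoeff, iteratedDeriv_succ, iteratedDeriv_zero, hFdef, hF1def]
  have ta3 : taylorCoeff f 3 = F2 0 / 6 := by
    simp [taylorCoeff, iteratedDeriv_succ, iteratedDeriv_zero, hFdef, hF1def, hF2def]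
    norm_num [Nat.factorial]
  have ta4 : taylorCoeff f 4 = F3 0 / 24 := by
    simp [taylorCoeff, iteratedDeriv_succ, iteratedDeriv_zero, hFdef, hF1def, hF2def, hF3def]
    norm_num [Nat.factorial]
  have tc1 : taylorCoeff w 1 = W1 0 := by
    simp [taylorCoeff, iteratedDeriv_succ, iteratedDeriv_zero, hW1def]
  have tc2 : taylorCoeff w 2 = W2 0 / 2 := by
    simp [taylorCoeff, iteratedDeriv_succ, iteratedDeriv_zero, hW1def, hW2def]
  have tc3 : taylorCoeff w 3 = W3 0 / 6 := by
    simp [taylorCoeff, iteratedDeriv_succ, iteratedDeriv_zero, hW1def, hW2def, hW3def]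
    norm_num [Nat.factorial]
  rw [ta2, ta3, ta4, tc1, tc2, tc3, h1, h2, h3]
  ring
end

section
/- Let t ∈ ℝ, let f be analytic on 𝔻 with f(0) = 0, f'(0) = 1 and f'(z) ≠ 0 on 𝔻, and let w be a Schwarz function such that 1 + z·f''(z)/f'(z) = 1 + w(z) + t·w(z)² for all z ∈ 𝔻. With aₙ = f⁽ⁿ⁾(0)/n! and cₙ = w⁽ⁿ⁾(0)/n!, the third Hankel determinant satisfies the identity 8640·(a₃(a₂a₄ − a₃²) − a₄(a₄ − a₂a₃) + a₅(a₃ − a₂²)) = −(1 − 6t + 21t² + 4t³)c₁⁶ + 6(1 − 3t + 10t²)c₁⁴c₂ + (−4 + 72t)c₂³ + 12(1 − 3t + 12t²)c₁³c₃ + 12(3 − 8t)c₁c₂c₃ − 60c₃² + 72c₂c₄ − 3c₁²((7 − 8t + 56t²)c₂² + 12(1 − 2t)c₄). -/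
open Complex Metric Set

lemma eqOn_deriv_aux {u v u' v' : ℂ → ℂ} {s : Set ℂ} (hs : IsOpen s)
    (huv : Set.EqOn u v s)
    (hu : ∀ z ∈ s, HasDerivAt u (u' z) z) (hv : ∀ z ∈ s, HasDerivAt v (v' z) z) :
    Set.EqOn u' v' s := fun z hz => by
  have h1 : deriv u z = deriv v z :=
    Filter.EventuallyEq.deriv_eq (Filter.eventuallyEq_of_mem (hs.mem_nhds hz) huv)
  rw [(hu z hz).deriv, (hv z hz).deriv] at h1
  exact h1

theorem thirdHankel_identity (t : ℝ) (f w : ℂ → ℂ)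
    (hf : AnalyticOnNhd ℂ f (ball (0:ℂ) 1)) (hf0 : f 0 = 0) (hf1 : deriv f 0 = 1)
    (hfd : ∀ z ∈ ball (0:ℂ) 1, deriv f z ≠ 0)
    (hw : IsSchwarz w)
    (heq : ∀ z ∈ ball (0:ℂ) 1,
      1 + z * deriv (deriv f) z / deriv f z = 1 + w z + (t : ℂ) * (w z) ^ 2) :
    8640 * (taylorCoeff f 3 * (taylorCoeff f 2 * taylorCoeff f 4 - (taylorCoeff f 3) ^ 2)
        - taylorCoeff f 4 * (taylorCoeff f 4 - taylorCoeff f 2 * taylorCoeff f 3)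
        + taylorCoeff f 5 * (taylorCoeff f 3 - (taylorCoeff f 2) ^ 2))
      = -(1 - 6 * (t : ℂ) + 21 * (t : ℂ) ^ 2 + 4 * (t : ℂ) ^ 3) * (taylorCoeff w 1) ^ 6
        + 6 * (1 - 3 * (t : ℂ) + 10 * (t : ℂ) ^ 2) * (taylorCoeff w 1) ^ 4 * taylorCoeff w 2
        + (-4 + 72 * (t : ℂ)) * (taylorCoeff w 2) ^ 3
        + 12 * (1 - 3 * (t : ℂ) + 12 * (t : ℂ) ^ 2) * (taylorCoeff w 1) ^ 3 * taylorCoeff w 3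
        + 12 * (3 - 8 * (t : ℂ)) * taylorCoeff w 1 * taylorCoeff w 2 * taylorCoeff w 3
        - 60 * (taylorCoeff w 3) ^ 2
        + 72 * taylorCoeff w 2 * taylorCoeff w 4
        - 3 * (taylorCoeff w 1) ^ 2 * ((7 - 8 * (t : ℂ) + 56 * (t : ℂ) ^ 2) * (taylorCoeff w 2) ^ 2
            + 12 * (1 - 2 * (t : ℂ)) * taylorCoeff w 4) := by
  obtain ⟨hwA, hw0, -⟩ := hw
  have hB : IsOpen (ball (0:ℂ) 1) := isOpen_ball
  have h0B : (0:ℂ) ∈ ball (0:ℂ) 1 := by simp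
  set f1 := deriv f with hf1d
  set f2 := deriv f1 with hf2d
  set f3 := deriv f2 with hf3d
  set f4 := deriv f3 with hf4d
  set f5 := deriv f4 with hf5d
  set f6 := deriv f5 with hf6d
  set w1 := deriv w with hw1d
  set w2 := deriv w1 with hw2d
  set w3 := deriv w2 with hw3d
  set w4 := deriv w3 with hw4d
  have Af1 : AnalyticOnNhd ℂ f1 (ball (0:ℂ) 1) := hf.deriv
  have Af2 : AnalyticOnNhd ℂ f2 (ball (0:ℂ) 1) := Af1.deriv
  have Af3 : AnalyticOnNhd ℂ f3 (ball (0:ℂ) 1) := Af2.deriv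
  have Af4 : AnalyticOnNhd ℂ f4 (ball (0:ℂ) 1) := Af3.deriv
  have Af5 : AnalyticOnNhd ℂ f5 (ball (0:ℂ) 1) := Af4.deriv
  have Aw1 : AnalyticOnNhd ℂ w1 (ball (0:ℂ) 1) := hwA.deriv
  have Aw2 : AnalyticOnNhd ℂ w2 (ball (0:ℂ) 1) := Aw1.deriv
  have Aw3 : AnalyticOnNhd ℂ w3 (ball (0:ℂ) 1) := Aw2.deriv
  have Hf1 : ∀ z ∈ ball (0:ℂ) 1, HasDerivAt f1 (f2 z) z :=
    fun z hz => (Af1 z hz).differentiableAt.hasDerivAt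
  have Hf2 : ∀ z ∈ ball (0:ℂ) 1, HasDerivAt f2 (f3 z) z :=
    fun z hz => (Af2 z hz).differentiableAt.hasDerivAt
  have Hf3 : ∀ z ∈ ball (0:ℂ) 1, HasDerivAt f3 (f4 z) z :=
    fun z hz => (Af3 z hz).differentiableAt.hasDerivAt
  have Hf4 : ∀ z ∈ ball (0:ℂ) 1, HasDerivAt f4 (f5 z) z :=
    fun z hz => (Af4 z hz).differentiableAt.hasDerivAt
  have Hf5 : ∀ z ∈ ball (0:ℂ) 1, HasDerivAt f5 (f6 z) z :=
    fun z hz => (Af5 z hz).differentiableAt.hasDerivAt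
  have Hw : ∀ z ∈ ball (0:ℂ) 1, HasDerivAt w (w1 z) z :=
    fun z hz => (hwA z hz).differentiableAt.hasDerivAt
  have Hw1 : ∀ z ∈ ball (0:ℂ) 1, HasDerivAt w1 (w2 z) z :=
    fun z hz => (Aw1 z hz).differentiableAt.hasDerivAt
  have Hw2 : ∀ z ∈ ball (0:ℂ) 1, HasDerivAt w2 (w3 z) z :=
    fun z hz => (Aw2 z hz).differentiableAt.hasDerivAt
  have Hw3 : ∀ z ∈ ball (0:ℂ) 1, HasDerivAt w3 (w4 z) z :=
    fun z hz => (Aw3 z hz).differentiableAt.hasDerivAt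
  set g : ℂ → ℂ := fun z => w z + (t:ℂ) * (w z) ^ 2 with hgd
  set g1 : ℂ → ℂ := fun z => w1 z + (t:ℂ) * (2 * w z * w1 z) with hg1d
  set g2 : ℂ → ℂ := fun z => w2 z + (t:ℂ) * (2 * (w1 z) ^ 2 + 2 * w z * w2 z) with hg2d
  set g3 : ℂ → ℂ := fun z => w3 z + (t:ℂ) * (6 * w1 z * w2 z + 2 * w z * w3 z) with hg3d
  set g4 : ℂ → ℂ :=
    fun z => w4 z + (t:ℂ) * (6 * (w2 z) ^ 2 + 8 * w1 z * w3 z + 2 * w z * w4 z) with hg4d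
  have Hg : ∀ z ∈ ball (0:ℂ) 1, HasDerivAt g (g1 z) z := by
    intro z hz
    have h := (Hw z hz).add (((Hw z hz).pow 2).const_mul (t:ℂ))
    rw [hgd]
    refine h.congr_deriv ?_
    simp only [hg1d]
    ring
  have Hg1 : ∀ z ∈ ball (0:ℂ) 1, HasDerivAt g1 (g2 z) z := by
    intro z hz
    have h := (Hw1 z hz).add
      ((((Hw z hz).const_mul (2:ℂ)).mul (Hw1 z hz)).const_mul (t:ℂ))
    rw [hg1d]
    refine h.congr_deriv ?_
    simp only [hg2d]
    ring
  have Hg2 : ∀ z ∈ ball (0:ℂ) 1, HasDerivAt g2 (g3 z) z := by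
    intro z hz
    have h := (Hw2 z hz).add
      (((((Hw1 z hz).pow 2).const_mul (2:ℂ)).add
        (((Hw z hz).const_mul (2:ℂ)).mul (Hw2 z hz))).const_mul (t:ℂ))
    rw [hg2d]
    refine h.congr_deriv ?_
    simp only [hg3d]
    ring
  have Hg3 : ∀ z ∈ ball (0:ℂ) 1, HasDerivAt g3 (g4 z) z := by
    intro z hz
    have h := (Hw3 z hz).add
      ((((((Hw1 z hz).const_mul (6:ℂ)).mul (Hw2 z hz))).add
        (((Hw z hz).const_mul (2:ℂ)).mul (Hw3 z hz))).const_mul (t:ℂ))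
    rw [hg3d]
    refine h.congr_deriv ?_
    simp only [hg4d]
    ring
  -- the basic functional equation
  have E0 : Set.EqOn (fun z => z * f2 z) (fun z => g z * f1 z) (ball (0:ℂ) 1) := by
    intro z hz
    have h := heq z hz
    have h2 : z * f2 z / f1 z = w z + (t:ℂ) * w z ^ 2 := by linear_combination h
    rw [div_eq_iff (hfd z hz)] at h2
    show z * f2 z = g z * f1 z
    rw [hgd]
    linear_combination h2
  have HL0 : ∀ z ∈ ball (0:ℂ) 1, HasDerivAt (fun z => z * f2 z) (f2 z + z * f3 z) z := by
    intro z hz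
    have h := (hasDerivAt_id z).mul (Hf2 z hz)
    refine h.congr_deriv ?_
    simp only [id_eq]
    ring
  have HR0 : ∀ z ∈ ball (0:ℂ) 1,
      HasDerivAt (fun z => g z * f1 z) (g1 z * f1 z + g z * f2 z) z :=
    fun z hz => (Hg z hz).mul (Hf1 z hz)
  have E1 : Set.EqOn (fun z => f2 z + z * f3 z) (fun z => g1 z * f1 z + g z * f2 z)
      (ball (0:ℂ) 1) :=
    eqOn_deriv_aux (u' := fun z => f2 z + z * f3 z)
      (v' := fun z => g1 z * f1 z + g z * f2 z) hB E0 HL0 HR0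
  have HL1 : ∀ z ∈ ball (0:ℂ) 1,
      HasDerivAt (fun z => f2 z + z * f3 z) (2 * f3 z + z * f4 z) z := by
    intro z hz
    have h := (Hf2 z hz).add ((hasDerivAt_id z).mul (Hf3 z hz))
    refine h.congr_deriv ?_
    simp only [id_eq]
    ring
  have HR1 : ∀ z ∈ ball (0:ℂ) 1,
      HasDerivAt (fun z => g1 z * f1 z + g z * f2 z)
        (g2 z * f1 z + 2 * (g1 z * f2 z) + g z * f3 z) z := by
    intro z hz
    have h := ((Hg1 z hz).mul (Hf1 z hz)).add ((Hg z hz).mul (Hf2 z hz))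
    refine h.congr_deriv ?_
    ring
  have E2 : Set.EqOn (fun z => 2 * f3 z + z * f4 z)
      (fun z => g2 z * f1 z + 2 * (g1 z * f2 z) + g z * f3 z) (ball (0:ℂ) 1) :=
    eqOn_deriv_aux (u' := fun z => 2 * f3 z + z * f4 z)
      (v' := fun z => g2 z * f1 z + 2 * (g1 z * f2 z) + g z * f3 z) hB E1 HL1 HR1
  have HL2 : ∀ z ∈ ball (0:ℂ) 1,
      HasDerivAt (fun z => 2 * f3 z + z * f4 z) (3 * f4 z + z * f5 z) z := by
    intro z hz
    have h := ((Hf3 z hz).const_mul (2:ℂ)).add ((hasDerivAt_id z).mul (Hf4 z hz))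
    refine h.congr_deriv ?_
    simp only [id_eq]
    ring
  have HR2 : ∀ z ∈ ball (0:ℂ) 1,
      HasDerivAt (fun z => g2 z * f1 z + 2 * (g1 z * f2 z) + g z * f3 z)
        (g3 z * f1 z + 3 * (g2 z * f2 z) + 3 * (g1 z * f3 z) + g z * f4 z) z := by
    intro z hz
    have h := (((Hg2 z hz).mul (Hf1 z hz)).add
        (((Hg1 z hz).mul (Hf2 z hz)).const_mul (2:ℂ))).add ((Hg z hz).mul (Hf3 z hz))
    refine h.congr_deriv ?_
    ring
  have E3 : Set.EqOn (fun z => 3 * f4 z + z * f5 z)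
      (fun z => g3 z * f1 z + 3 * (g2 z * f2 z) + 3 * (g1 z * f3 z) + g z * f4 z)
      (ball (0:ℂ) 1) :=
    eqOn_deriv_aux (u' := fun z => 3 * f4 z + z * f5 z)
      (v' := fun z => g3 z * f1 z + 3 * (g2 z * f2 z) + 3 * (g1 z * f3 z) + g z * f4 z)
      hB E2 HL2 HR2
  have HL3 : ∀ z ∈ ball (0:ℂ) 1,
      HasDerivAt (fun z => 3 * f4 z + z * f5 z) (4 * f5 z + z * f6 z) z := by
    intro z hz
    have h := ((Hf4 z hz).const_mul (3:ℂ)).add ((hasDerivAt_id z).mul (Hf5 z hz))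
    refine h.congr_deriv ?_
    simp only [id_eq]
    ring
  have HR3 : ∀ z ∈ ball (0:ℂ) 1,
      HasDerivAt (fun z => g3 z * f1 z + 3 * (g2 z * f2 z) + 3 * (g1 z * f3 z) + g z * f4 z)
        (g4 z * f1 z + 4 * (g3 z * f2 z) + 6 * (g2 z * f3 z) + 4 * (g1 z * f4 z) + g z * f5 z)
        z := by
    intro z hz
    have h := ((((Hg3 z hz).mul (Hf1 z hz)).add
        (((Hg2 z hz).mul (Hf2 z hz)).const_mul (3:ℂ))).add
        (((Hg1 z hz).mul (Hf3 z hz)).const_mul (3:ℂ))).add ((Hg z hz).mul (Hf4 z hz))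
    refine h.congr_deriv ?_
    ring
  have E4 : Set.EqOn (fun z => 4 * f5 z + z * f6 z)
      (fun z => g4 z * f1 z + 4 * (g3 z * f2 z) + 6 * (g2 z * f3 z) + 4 * (g1 z * f4 z)
        + g z * f5 z) (ball (0:ℂ) 1) :=
    eqOn_deriv_aux (u' := fun z => 4 * f5 z + z * f6 z)
      (v' := fun z => g4 z * f1 z + 4 * (g3 z * f2 z) + 6 * (g2 z * f3 z) + 4 * (g1 z * f4 z)
        + g z * f5 z) hB E3 HL3 HR3
  have q1 := E1 h0B
  have q2 := E2 h0B
  have q3 := E3 h0B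
  have q4 := E4 h0B
  simp only [hgd, hg1d, hg2d, hg3d, hg4d] at q1 q2 q3 q4
  rw [hw0, hf1] at q1 q2 q3 q4
  have hF2 : f2 0 = w1 0 := by linear_combination q1
  have hF3 : f3 0 = w2 0 / 2 + ((t:ℂ) + 1) * (w1 0) ^ 2 := by
    linear_combination q2 / 2 + (w1 0) * hF2
  have hF4 : f4 0 = w3 0 / 3 + (2 * (t:ℂ) + 3/2) * w1 0 * w2 0 + (3 * (t:ℂ) + 1) * (w1 0) ^ 3 := by
    linear_combination q3 / 3 + (w2 0 + 2 * (t:ℂ) * (w1 0) ^ 2) * hF2 + (w1 0) * hF3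
  have hF5 : f5 0 = w4 0 / 4 + (3 * (t:ℂ) / 2 + 3/4) * (w2 0) ^ 2
      + (2 * (t:ℂ) + 4/3) * w1 0 * w3 0 + (11 * (t:ℂ) + 3) * (w1 0) ^ 2 * w2 0
      + (3 * (t:ℂ) ^ 2 + 6 * (t:ℂ) + 1) * (w1 0) ^ 4 := by
    linear_combination q4 / 4 + (w3 0 + 6 * (t:ℂ) * w1 0 * w2 0) * hF2
      + (3/2 : ℂ) * (w2 0 + 2 * (t:ℂ) * (w1 0) ^ 2) * hF3 + (w1 0) * hF4
  have tf2 : taylorCoeff f 2 = f2 0 / 2 := by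
    simp only [taylorCoeff, hf2d, hf1d, iteratedDeriv_succ, iteratedDeriv_zero]
    norm_num [Nat.factorial]
  have tf3 : taylorCoeff f 3 = f3 0 / 6 := by
    simp only [taylorCoeff, hf3d, hf2d, hf1d, iteratedDeriv_succ, iteratedDeriv_zero]
    norm_num [Nat.factorial]
  have tf4 : taylorCoeff f 4 = f4 0 / 24 := by
    simp only [taylorCoeff, hf4d, hf3d, hf2d, hf1d, iteratedDeriv_succ, iteratedDeriv_zero]
    norm_num [Nat.factorial]
  have tf5 : taylorCoeff f 5 = f5 0 / 120 := by
    simp only [taylorCoeff, hf5d, hf4d, hf3d, hf2d, hf1d, iteratedDeriv_succ, iteratedDeriv_zero]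
    norm_num [Nat.factorial]
  have tw1 : taylorCoeff w 1 = w1 0 := by
    simp only [taylorCoeff, hw1d, iteratedDeriv_succ, iteratedDeriv_zero]
    norm_num [Nat.factorial]
  have tw2 : taylorCoeff w 2 = w2 0 / 2 := by
    simp only [taylorCoeff, hw2d, hw1d, iteratedDeriv_succ, iteratedDeriv_zero]
    norm_num [Nat.factorial]
  have tw3 : taylorCoeff w 3 = w3 0 / 6 := by
    simp only [taylorCoeff, hw3d, hw2d, hw1d, iteratedDeriv_succ, iteratedDeriv_zero]
    norm_num [Nat.factorial]
  have tw4 : taylorCoeff w 4 = w4 0 / 24 := by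
    simp only [taylorCoeff, hw4d, hw3d, hw2d, hw1d, iteratedDeriv_succ, iteratedDeriv_zero]
    norm_num [Nat.factorial]
  rw [tf2, tf3, tf4, tf5, tw1, tw2, tw3, tw4, hF2, hF3, hF4, hF5]
  ring
end
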